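/- arXiv:2302.01852 — 9 statements merged into one kernel-verified Lean document; each statement's English description precedes it below -/
import Mathlib

section
/- Let (E, λ) be a limit-closed connectivity system and k ∈ ℕ. If X ⊆ E satisfies λ(X) ≥ k, then there exists Y ⊆ X with λ(Y) ≥ k and |Y| ≤ k. -/
open Set

/-- A symmetric set function: `λ(A) = λ(E \ A)`. -/
def SymmFn {E : Type*} (lam : Set E → ℕ∞) : Prop := ∀ A : Set E, lam Aᶜ = lam A

/-- A submodular set function: `λ(A) + λ(B) ≥ λ(A ∪ B) + λ(A ∩ B)`. -/
def SubmodularFn {E : Type*} (lam : Set E → ℕ∞) : Prop :=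
  ∀ A B : Set E, lam (A ∪ B) + lam (A ∩ B) ≤ lam A + lam B

/-- A limit-closed set function: the union of a (nonempty) chain of sets of connectivity at most
`k` again has connectivity at most `k`. -/
def LimitClosedFn {E : Type*} (lam : Set E → ℕ∞) : Prop :=
  ∀ (k : ℕ) (C : Set (Set E)), C.Nonempty → IsChain (· ⊆ ·) C →
    (∀ A ∈ C, lam A ≤ (k : ℕ∞)) → lam (⋃₀ C) ≤ (k : ℕ∞)

/-- Cancellation in `ℕ∞` with a finite left summand. -/
lemma enat_cancel {k : ℕ} {b c : ℕ∞} (h : (k : ℕ∞) + b ≤ (k : ℕ∞) + c) : b ≤ c := by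
  have hk : (k : ℕ∞) ≠ ⊤ := ENat.coe_ne_top k
  exact (WithTop.add_le_add_iff_left hk).mp h

/-- In `ℕ∞`, `a < m + 1` implies `a ≤ m`. -/
lemma enat_lt_succ {m : ℕ} {a : ℕ∞} (h : a < ((m + 1 : ℕ) : ℕ∞)) : a ≤ (m : ℕ∞) := by
  have h' : a < (m : ℕ∞) + 1 := by push_cast at h; exact h
  exact (ENat.lt_add_one_iff (ENat.coe_ne_top m)).mp h'

/-- Counting lemma: if `λ(G) ≥ k` and removing any single element of `G` drops the
connectivity below `k`, then removing a nonempty nodup list `l` of elements of `G` gives a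
set of connectivity at most `k - |l|`. -/
lemma count_aux {E : Type*} (lam : Set E → ℕ∞) (hsub : SubmodularFn lam) (k : ℕ)
    (G : Set E) (hG : (k : ℕ∞) ≤ lam G)
    (hbad : ∀ y ∈ G, lam (G \ {y}) + 1 ≤ (k : ℕ∞)) :
    ∀ l : List E, l.Nodup → (∀ y ∈ l, y ∈ G) → l ≠ [] →
      lam (G \ {y | y ∈ l}) + l.length ≤ (k : ℕ∞) := by
  intro l
  induction l with
  | nil => intro _ _ h; exact absurd rfl h
  | cons y t ih =>
    intro hnd hmem _
    have hyG : y ∈ G := hmem y (by simp)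
    have hyt : y ∉ t := (List.nodup_cons.mp hnd).1
    rcases eq_or_ne t [] with rfl | ht
    · simpa using hbad y hyG
    · have htmem : ∀ z ∈ t, z ∈ G := fun z hz => hmem z (by simp [hz])
      have hih := ih (List.nodup_cons.mp hnd).2 htmem ht
      have hb := hbad y hyG
      -- submodularity on `A = G \ t`, `B = G \ {y}`
      have hAB := hsub (G \ {z | z ∈ t}) (G \ {y})
      have hU : (G \ {z | z ∈ t}) ∪ (G \ {y}) = G := by
        ext z
        simp only [Set.mem_union, Set.mem_diff, Set.mem_setOf_eq, Set.mem_singleton_iff]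
        constructor
        · rintro (⟨h, _⟩ | ⟨h, _⟩) <;> exact h
        · intro hz
          by_cases hzy : z = y
          · subst hzy; exact Or.inl ⟨hz, hyt⟩
          · exact Or.inr ⟨hz, hzy⟩
      have hI : (G \ {z | z ∈ t}) ∩ (G \ {y}) = G \ {z | z ∈ y :: t} := by
        ext z
        simp only [Set.mem_inter_iff, Set.mem_diff, Set.mem_setOf_eq, Set.mem_singleton_iff,
          List.mem_cons]
        tauto
      rw [hU, hI] at hAB
      have hlen : (((y :: t).length : ℕ) : ℕ∞) = (t.length : ℕ∞) + 1 := by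
        push_cast [List.length_cons]; ring
      have key : (k : ℕ∞) + (lam (G \ {z | z ∈ y :: t}) + (y :: t).length) ≤ (k : ℕ∞) + k := by
        rw [hlen]
        calc (k : ℕ∞) + (lam (G \ {z | z ∈ y :: t}) + ((t.length : ℕ∞) + 1))
            ≤ lam G + (lam (G \ {z | z ∈ y :: t}) + ((t.length : ℕ∞) + 1)) :=
              add_le_add hG (le_refl _)
          _ = (lam G + lam (G \ {z | z ∈ y :: t})) + ((t.length : ℕ∞) + 1) := by ring
          _ ≤ (lam (G \ {z | z ∈ t}) + lam (G \ {y})) + ((t.length : ℕ∞) + 1) :=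
              add_le_add hAB (le_refl _)
          _ = (lam (G \ {z | z ∈ t}) + (t.length : ℕ∞)) + (lam (G \ {y}) + 1) := by ring
          _ ≤ (k : ℕ∞) + k := add_le_add hih hb
      exact enat_cancel key

/-- Shrinking a finite set of connectivity at least `k` to one of size at most `k`. -/
lemma shrink {E : Type*} (lam : Set E → ℕ∞) (hsub : SubmodularFn lam) (k : ℕ) :
    ∀ (n : ℕ) (G : Set E), G.Finite → G.ncard ≤ n → (k : ℕ∞) ≤ lam G →
      ∃ Y ⊆ G, (k : ℕ∞) ≤ lam Y ∧ Y.Finite ∧ Y.ncard ≤ k := by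
  intro n
  induction n with
  | zero =>
    intro G hGfin hcard hlam
    have : G = ∅ := by
      rw [← Set.ncard_eq_zero hGfin]; omega
    exact ⟨G, le_refl _, hlam, hGfin, by simp [this]⟩
  | succ n ih =>
    intro G hGfin hcard hlam
    by_cases hex : ∃ y ∈ G, (k : ℕ∞) ≤ lam (G \ {y})
    · obtain ⟨y, hyG, hy⟩ := hex
      have hsubG : G \ {y} ⊆ G := Set.diff_subset
      have hcard' : (G \ {y}).ncard ≤ n := by
        have := Set.ncard_diff_singleton_lt_of_mem hyG hGfin
        omega
      obtain ⟨Y, hYsub, hYlam, hYfin, hYcard⟩ := ih (G \ {y}) (hGfin.subset hsubG) hcard' hy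
      exact ⟨Y, hYsub.trans hsubG, hYlam, hYfin, hYcard⟩
    · push_neg at hex
      by_cases hsmall : G.ncard ≤ k
      · exact ⟨G, le_refl _, hlam, hGfin, hsmall⟩
      · exfalso
        push_neg at hsmall
        have hbad : ∀ y ∈ G, lam (G \ {y}) + 1 ≤ (k : ℕ∞) := by
          intro y hy
          have h := hex y hy
          have hne : lam (G \ {y}) ≠ ⊤ :=
            ne_top_of_lt (lt_of_lt_of_le h (le_top))
          exact (ENat.add_one_le_iff hne).mpr h
        -- pick k+1 distinct elements of G
        obtain ⟨s, hsub', hscard⟩ :=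
          Finset.exists_subset_card_eq (n := k + 1) (s := hGfin.toFinset)
            (by rw [Set.ncard_eq_toFinset_card G hGfin] at hsmall; omega)
        have hnd : s.toList.Nodup := s.nodup_toList
        have hmem : ∀ z ∈ s.toList, z ∈ G := by
          intro z hz
          have : z ∈ s := by simpa using hz
          have := hsub' this
          simpa using this
        have hlen : s.toList.length = k + 1 := by simp [hscard]
        have hne : s.toList ≠ [] := by
          intro h; rw [h] at hlen; simp at hlen
        have := count_aux lam hsub k G hlam hbad s.toList hnd hmem hne
        rw [hlen] at this
        have h2 : ((k : ℕ∞) + 1) ≤ (k : ℕ∞) := by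
          calc (k : ℕ∞) + 1 ≤ lam (G \ {y | y ∈ s.toList}) + ((k : ℕ∞) + 1) := le_add_self
            _ ≤ (k : ℕ∞) := by push_cast at this ⊢; exact this
        have h3 : ((k + 1 : ℕ) : ℕ∞) ≤ ((k : ℕ) : ℕ∞) := by push_cast; exact h2
        have h4 : k + 1 ≤ k := by exact_mod_cast h3
        omega

/-- Every set of connectivity at least `k` has a finite subset of connectivity at least `k`. -/
lemma finite_sub {E : Type*} (lam : Set E → ℕ∞) (hsub : SubmodularFn lam)
    (hlim : LimitClosedFn lam) :
    ∀ (k : ℕ) (X : Set E), (k : ℕ∞) ≤ lam X →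
      ∃ F ⊆ X, F.Finite ∧ (k : ℕ∞) ≤ lam F := by
  intro k
  induction k using Nat.strong_induction_on with
  | _ k ihk =>
  intro X hX
  by_cases h0 : (k : ℕ∞) ≤ lam ∅
  · exact ⟨∅, Set.empty_subset X, Set.finite_empty, h0⟩
  push_neg at h0
  obtain ⟨m, rfl⟩ : ∃ m, k = m + 1 := by
    cases k with
    | zero => exact absurd h0 (by simp)
    | succ m => exact ⟨m, rfl⟩
  have hempty : lam ∅ ≤ (m : ℕ∞) := enat_lt_succ h0
  -- Zorn: a maximal `Z ⊆ X` with `lam Z ≤ m`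
  set T : Set (Set E) := {Z | Z ⊆ X ∧ lam Z ≤ (m : ℕ∞)} with hT
  obtain ⟨Z, -, hZmax⟩ := zorn_subset_nonempty T
    (by
      intro c hcT hchain hcne
      refine ⟨⋃₀ c, ⟨?_, hlim m c hcne hchain fun A hA => (hcT hA).2⟩, fun s hs => ?_⟩
      · exact Set.sUnion_subset fun A hA => (hcT hA).1
      · exact Set.subset_sUnion_of_mem hs)
    ∅ ⟨Set.empty_subset X, hempty⟩
  have hZX : Z ⊆ X := hZmax.prop.1
  have hZm : lam Z ≤ (m : ℕ∞) := hZmax.prop.2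
  have hZne : Z ≠ X := by
    intro h
    rw [h] at hZm
    have h2 : ((m + 1 : ℕ) : ℕ∞) ≤ (m : ℕ∞) := le_trans hX hZm
    have h3 : m + 1 ≤ m := by exact_mod_cast h2
    omega
  obtain ⟨x, hxX, hxZ⟩ : ∃ x ∈ X, x ∉ Z := by
    by_contra h
    push_neg at h
    exact hZne (Set.Subset.antisymm hZX h)
  have hZx : ((m + 1 : ℕ) : ℕ∞) ≤ lam (Z ∪ {x}) := by
    by_contra h
    push_neg at h
    have hle : lam (Z ∪ {x}) ≤ (m : ℕ∞) := enat_lt_succ h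
    have hmem : Z ∪ {x} ∈ T := ⟨Set.union_subset hZX (by simpa using hxX), hle⟩
    have := hZmax.le_of_ge hmem (Set.subset_union_left)
    exact hxZ (this (by simp))
  -- apply the induction hypothesis at level `j = lam Z`
  set j : ℕ := (lam Z).toNat with hj
  have hjm : j ≤ m := by
    have : ((lam Z).toNat : ℕ∞) = lam Z :=
      ENat.coe_toNat (ne_top_of_le_ne_top (ENat.coe_ne_top m) hZm)
    have h2 : ((j : ℕ) : ℕ∞) ≤ (m : ℕ∞) := by rw [hj, this]; exact hZm
    exact_mod_cast h2
  have hZj : ((j : ℕ) : ℕ∞) = lam Z := by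
    rw [hj]; exact ENat.coe_toNat (ne_top_of_le_ne_top (ENat.coe_ne_top m) hZm)
  obtain ⟨F, hFZ, hFfin, hFlam⟩ := ihk j (by omega) Z (le_of_eq hZj)
  refine ⟨F ∪ {x}, Set.union_subset (hFZ.trans hZX) (by simpa using hxX),
    hFfin.union (Set.finite_singleton x), ?_⟩
  -- submodularity: λ(Z ∪ {x}) + λ(F) ≤ λ(Z) + λ(F ∪ {x})
  have hAB := hsub Z (F ∪ {x})
  have hU : Z ∪ (F ∪ {x}) = Z ∪ {x} := by
    rw [← Set.union_assoc, Set.union_eq_self_of_subset_right hFZ]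
  have hI : Z ∩ (F ∪ {x}) = F := by
    rw [Set.inter_union_distrib_left]
    have h1 : Z ∩ F = F := Set.inter_eq_self_of_subset_right hFZ
    have h2 : Z ∩ {x} = ∅ := by
      ext z; simp only [Set.mem_inter_iff, Set.mem_singleton_iff, Set.mem_empty_iff_false,
        iff_false, not_and]
      rintro hz rfl; exact hxZ hz
    rw [h1, h2, Set.union_empty]
  rw [hU, hI] at hAB
  have key : ((j : ℕ) : ℕ∞) + ((m + 1 : ℕ) : ℕ∞) ≤ ((j : ℕ) : ℕ∞) + lam (F ∪ {x}) := by
    calc ((j : ℕ) : ℕ∞) + ((m + 1 : ℕ) : ℕ∞)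
        ≤ lam F + lam (Z ∪ {x}) := add_le_add hFlam hZx
      _ = lam (Z ∪ {x}) + lam F := by ring
      _ ≤ lam Z + lam (F ∪ {x}) := hAB
      _ = ((j : ℕ) : ℕ∞) + lam (F ∪ {x}) := by rw [hZj]
  exact enat_cancel key

/-- If `λ(X) ≥ k`, then there is `Y ⊆ X` with `λ(Y) ≥ k` and `|Y| ≤ k`. -/
theorem stmt1 {E : Type*} (lam : Set E → ℕ∞)
    (hsym : SymmFn lam) (hsub : SubmodularFn lam) (hlim : LimitClosedFn lam)
    (k : ℕ) (X : Set E) (hX : (k : ℕ∞) ≤ lam X) :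
    ∃ Y ⊆ X, (k : ℕ∞) ≤ lam Y ∧ Y.Finite ∧ Y.ncard ≤ k := by
  obtain ⟨F, hFX, hFfin, hFlam⟩ := finite_sub lam hsub hlim k X hX
  obtain ⟨Y, hYF, hYlam, hYfin, hYcard⟩ := shrink lam hsub k F.ncard F hFfin (le_refl _) hFlam
  exact ⟨Y, hYF.trans hFX, hYlam, hYfin, hYcard⟩
end

section
/- Let (E, λ) be a limit-closed connectivity system, X ⊆ E and k ∈ ℕ. If every subset of X of size at most k+1 has connectivity at most k, then λ(X) ≤ k. -/
open Set

/-!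
Induction on `k`. If every small subset of `X` has connectivity at most `k - 1`, the induction
hypothesis applies. Otherwise some `T ⊆ X` with `|T| ≤ k` has `λ(T) ≥ k` (for `k = 0` take
`T = ∅`). By Zorn's lemma (using limit-closedness) there is a maximal `M` with `T ⊆ M ⊆ X` and
`λ(M) ≤ k`. For `x ∈ X \ M`, submodularity applied to `M` and `T + x` gives
`λ(M + x) + λ(T) ≤ λ(M) + λ(T + x) ≤ 2k`, so `λ(M + x) ≤ k`, contradicting maximality.
Hence `M = X`.
-/

section

variable {E : Type*} {lam : Set E → ℕ∞}

lemma LimitClosedFn.exists_maximal_superset (hlim : LimitClosedFn lam) (k : ℕ)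
    {T X : Set E} (hTX : T ⊆ X) (hT : lam T ≤ k) :
    ∃ M, T ⊆ M ∧ Maximal (fun Y => Y ⊆ X ∧ lam Y ≤ k) M := by
  refine zorn_subset_nonempty {Y | Y ⊆ X ∧ lam Y ≤ k} (fun C hC hchain hne => ?_) T ⟨hTX, hT⟩
  exact ⟨⋃₀ C, ⟨sUnion_subset fun Y hY => (hC hY).1, hlim k C hne hchain fun Y hY => (hC hY).2⟩,
    fun _ => subset_sUnion_of_mem⟩

lemma SubmodularFn.insert_le (hsub : SubmodularFn lam) {k : ℕ} {T M : Set E} {x : E}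
    (hTM : T ⊆ M) (hxM : x ∉ M) (hT : k ≤ lam T) (hM : lam M ≤ k)
    (hTx : lam (insert x T) ≤ k) : lam (insert x M) ≤ k := by
  have hunion : M ∪ insert x T = insert x M := by
    rw [union_insert, union_eq_self_of_subset_right hTM]
  have hinter : M ∩ insert x T = T := by
    rw [inter_insert_of_notMem hxM, inter_eq_right.mpr hTM]
  have h := hsub M (insert x T)
  rw [hunion, hinter] at h
  refine (ENat.add_le_add_iff_right (ENat.natCast_ne_top k)).mp ?_
  calc lam (insert x M) + k ≤ lam (insert x M) + lam T := add_le_add_right hT _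
    _ ≤ lam M + lam (insert x T) := h
    _ ≤ k + k := add_le_add hM hTx

lemma le_of_tight_small_subset (hsub : SubmodularFn lam) (hlim : LimitClosedFn lam) {k : ℕ}
    {X T : Set E} (hTX : T ⊆ X) (hTfin : T.Finite) (hTcard : T.ncard ≤ k) (hT : k ≤ lam T)
    (h : ∀ Y ⊆ X, Y.Finite → Y.ncard ≤ k + 1 → lam Y ≤ (k : ℕ∞)) :
    lam X ≤ k := by
  obtain ⟨M, hTM, hM⟩ := hlim.exists_maximal_superset k hTX (h T hTX hTfin (by omega))
  suffices hXM : X ⊆ M from hXM.antisymm hM.prop.1 ▸ hM.prop.2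
  intro x hxX
  by_contra hxM
  have hTx : lam (insert x T) ≤ k :=
    h _ (insert_subset hxX hTX) (hTfin.insert x) ((ncard_insert_le x T).trans (by omega))
  have hMx : insert x M ⊆ X ∧ lam (insert x M) ≤ k :=
    ⟨insert_subset hxX hM.prop.1, hsub.insert_le hTM hxM hT hM.prop.2 hTx⟩
  exact hxM (hM.le_of_ge hMx (subset_insert x M) (mem_insert x M))

end

theorem stmt2_general {E : Type*} (lam : Set E → ℕ∞)
    (hsub : SubmodularFn lam) (hlim : LimitClosedFn lam)
    (k : ℕ) (X : Set E)
    (h : ∀ Y ⊆ X, Y.Finite → Y.ncard ≤ k + 1 → lam Y ≤ (k : ℕ∞)) :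
    lam X ≤ (k : ℕ∞) := by
  induction k generalizing X with
  | zero =>
    exact le_of_tight_small_subset hsub hlim (empty_subset X) finite_empty (by simp) (by simp) h
  | succ k ih =>
    by_cases htight : ∃ T ⊆ X, T.Finite ∧ T.ncard ≤ k + 1 ∧ ((k + 1 : ℕ) : ℕ∞) ≤ lam T
    · obtain ⟨T, hTX, hTfin, hTcard, hT⟩ := htight
      exact le_of_tight_small_subset hsub hlim hTX hTfin hTcard hT h
    · push Not at htight
      have hlow : lam X ≤ k := ih X fun Y hYX hYfin hYcard =>
        (ENat.lt_add_one_iff (ENat.natCast_ne_top k)).mp <| by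
          exact_mod_cast htight Y hYX hYfin hYcard
      exact hlow.trans (by norm_cast; omega)

/-- If every subset of `X` of size at most `k+1` has connectivity at most `k`,
then `λ(X) ≤ k`. -/
theorem stmt2 {E : Type*} (lam : Set E → ℕ∞)
    (hsym : SymmFn lam) (hsub : SubmodularFn lam) (hlim : LimitClosedFn lam)
    (k : ℕ) (X : Set E)
    (h : ∀ Y ⊆ X, Y.Finite → Y.ncard ≤ k + 1 → lam Y ≤ (k : ℕ∞)) :
    lam X ≤ (k : ℕ∞) :=
  stmt2_general lam hsub hlim k X h
end

section
/- Let Φ = (P_1, …, P_n) be a finite k-anemone of a connectivity system (E, λ), let Q be a petal of Φ, and let S ⊆ Q. If R_1 and R_2 are nonempty unions of petals of Φ with R_i ∩ Q = ∅ and R_i ∪ Q ≠ E for i = 1,2, then λ(S ∪ R_1) = λ(S ∪ R_2). -/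
open Set

/-- `P` is a partition of the ground set into (indexed) nonempty pairwise disjoint classes. -/
def IsPartitionInd {E : Type*} {ι : Type*} (P : ι → Set E) : Prop :=
  (∀ i, (P i).Nonempty) ∧ (∀ i j, i ≠ j → Disjoint (P i) (P j)) ∧ (⋃ i, P i) = univ

/-- A finite `k`-anemone: a partition into at least four petals such that every union of a
nonempty proper subset of the petals has connectivity exactly `k - 1`. -/
def IsFinAnemone {E : Type*} (lam : Set E → ℕ∞) (k n : ℕ) (P : Fin n → Set E) : Prop :=
  4 ≤ n ∧ IsPartitionInd P ∧
    ∀ T : Set (Fin n), T.Nonempty → T ≠ univ → lam (⋃ i ∈ T, P i) = ((k - 1 : ℕ) : ℕ∞)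

/-- In a finite `k`-anemone with petal `Q = P q`, for `S ⊆ Q` the connectivity of `S ∪ R` does
not depend on the choice of a nonempty union `R` of petals with `R ∩ Q = ∅`, `R ∪ Q ≠ E`. -/
theorem stmt4 {E : Type*} (lam : Set E → ℕ∞)
    (hsym : SymmFn lam) (hsub : SubmodularFn lam)
    (k n : ℕ) (hk : 1 ≤ k) (P : Fin n → Set E) (hP : IsFinAnemone lam k n P)
    (q : Fin n) (S : Set E) (hS : S ⊆ P q)
    (T₁ T₂ : Set (Fin n)) (hT₁ : T₁.Nonempty) (hT₂ : T₂.Nonempty)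
    (hq₁ : q ∉ T₁) (hq₂ : q ∉ T₂)
    (hne₁ : insert q T₁ ≠ univ) (hne₂ : insert q T₂ ≠ univ) :
    lam (S ∪ ⋃ i ∈ T₁, P i) = lam (S ∪ ⋃ i ∈ T₂, P i) := by
  obtain ⟨hn4, ⟨hPne, hPdisj, hPcov⟩, hlam⟩ := hP
  set R : Set (Fin n) → Set E := fun T => ⋃ i ∈ T, P i with hRdef
  have hfin : ((k - 1 : ℕ) : ℕ∞) ≠ ⊤ := ENat.coe_ne_top _
  -- basic set algebra for petal unions
  have hRmono : ∀ {U V : Set (Fin n)}, U ⊆ V → R U ⊆ R V := by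
    intro U V hUV
    exact biUnion_subset_biUnion_left hUV
  have hRunion : ∀ U V : Set (Fin n), R U ∪ R V = R (U ∪ V) := by
    intro U V
    simp [hRdef, biUnion_union]
  have hRinter : ∀ U V : Set (Fin n), R U ∩ R V = R (U ∩ V) := by
    intro U V
    apply Set.Subset.antisymm
    · rintro x ⟨hxU, hxV⟩
      simp only [hRdef, mem_iUnion, exists_prop] at hxU hxV ⊢
      obtain ⟨i, hiU, hxi⟩ := hxU
      obtain ⟨i', hi'V, hxi'⟩ := hxV
      rcases eq_or_ne i i' with rfl | hne
      · exact ⟨i, ⟨hiU, hi'V⟩, hxi⟩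
      · exact absurd (mem_inter hxi hxi') (by
          have := hPdisj i i' hne
          simp [Set.disjoint_iff_inter_eq_empty.mp this])
    · exact subset_inter (hRmono inter_subset_left) (hRmono inter_subset_right)
  have hRcompl : ∀ U : Set (Fin n), (R U)ᶜ = R Uᶜ := by
    intro U
    apply Set.Subset.antisymm
    · intro x hx
      have : x ∈ ⋃ i, P i := hPcov.symm ▸ mem_univ x
      obtain ⟨i, hxi⟩ := mem_iUnion.mp this
      have hiU : i ∉ U := by
        intro hiU
        exact hx (mem_biUnion hiU hxi)
      exact mem_biUnion hiU hxi
    · intro x hx hx'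
      simp only [hRdef, mem_iUnion, exists_prop] at hx hx'
      obtain ⟨i, hiU, hxi⟩ := hx
      obtain ⟨i', hi'U, hxi'⟩ := hx'
      rcases eq_or_ne i i' with rfl | hne
      · exact hiU hi'U
      · exact (hPdisj i i' hne).ne_of_mem hxi hxi' rfl
  have hSsub : ∀ {U : Set (Fin n)}, q ∈ U → S ⊆ R U := fun hqU =>
    hS.trans (subset_biUnion_of_mem hqU)
  have hSdisj : ∀ {U : Set (Fin n)}, q ∉ U → S ∩ R U = ∅ := by
    intro U hqU
    apply eq_empty_of_forall_notMem
    rintro x ⟨hxS, hxR⟩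
    simp only [hRdef, mem_iUnion, exists_prop] at hxR
    obtain ⟨i, hiU, hxi⟩ := hxR
    have hiq : i ≠ q := fun h => hqU (h ▸ hiU)
    exact (hPdisj i q hiq).ne_of_mem hxi (hS hxS) rfl
  -- key lemma: value only depends on S when R is replaced by a single petal inside it
  have key : ∀ (T : Set (Fin n)) (j : Fin n), j ∈ T → q ∉ T → insert q T ≠ univ →
      lam (S ∪ R T) = lam (S ∪ R {j}) := by
    intro T j hjT hqT hTu
    obtain ⟨m, hm⟩ := (Set.ne_univ_iff_exists_notMem _).mp hTu
    have hmq : m ≠ q := fun h => hm (h ▸ mem_insert q T)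
    have hmT : m ∉ T := fun h => hm (mem_insert_of_mem q h)
    have hjq : j ≠ q := fun h => hqT (h ▸ hjT)
    have hmj : m ≠ j := fun h => hmT (h ▸ hjT)
    have hLT : lam (R T) = ((k - 1 : ℕ) : ℕ∞) :=
      hlam T ⟨j, hjT⟩ (fun h => hqT (h ▸ mem_univ q))
    have hLj : lam (R {j}) = ((k - 1 : ℕ) : ℕ∞) :=
      hlam {j} ⟨j, rfl⟩ (by
        intro h
        have hqj : q ∈ ({j} : Set (Fin n)) := h ▸ mem_univ q
        exact hjq (mem_singleton_iff.mp hqj).symm)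
    -- forward: lam (S ∪ R T) ≤ lam (S ∪ R {j})
    have fwd : lam (S ∪ R T) ≤ lam (S ∪ R {j}) := by
      have h1 := hsub (S ∪ R {j}) (R T)
      have e1 : (S ∪ R {j}) ∪ R T = S ∪ R T := by
        rw [union_assoc, hRunion,
          union_eq_self_of_subset_left (singleton_subset_iff.mpr hjT)]
      have e2 : (S ∪ R {j}) ∩ R T = R {j} := by
        rw [union_inter_distrib_right, hSdisj hqT, hRinter, empty_union,
          inter_eq_self_of_subset_left (singleton_subset_iff.mpr hjT)]
      rw [e1, e2, hLj, hLT] at h1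
      exact (WithTop.add_le_add_iff_right hfin).mp h1
    -- backward
    have bwd : lam (S ∪ R {j}) ≤ lam (S ∪ R T) := by
      set U : Set (Fin n) := insert m (T \ {j}) with hUdef
      have hqU : q ∉ U := by
        simp only [hUdef, mem_insert_iff, mem_diff]
        push_neg
        exact ⟨hmq.symm, fun h => absurd h hqT⟩
      have hjU : j ∉ U := by
        intro h
        rcases mem_insert_iff.mp h with h | h
        · exact hmj h.symm
        · exact h.2 rfl
      have hTUc : T ∪ Uᶜ = ({m}ᶜ : Set (Fin n)) := by
        ext x
        constructor
        · rintro (hxT | hxU)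
          · exact fun h => hmT (mem_singleton_iff.mp h ▸ hxT)
          · exact fun h => hxU (mem_insert_iff.mpr (Or.inl (mem_singleton_iff.mp h)))
        · intro hxm
          by_cases hxT : x ∈ T
          · exact Or.inl hxT
          · refine Or.inr fun hxU => ?_
            rcases mem_insert_iff.mp hxU with h | h
            · exact hxm (mem_singleton_iff.mpr h)
            · exact hxT h.1
      have hTUc2 : T ∩ Uᶜ = ({j} : Set (Fin n)) := by
        ext x
        constructor
        · rintro ⟨hxT, hxU⟩
          by_contra hxj
          exact hxU (mem_insert_of_mem m ⟨hxT, hxj⟩)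
        · rintro rfl
          exact ⟨hjT, hjU⟩
      have h2 := hsub (S ∪ R T) (R Uᶜ)
      have e1 : (S ∪ R T) ∪ R Uᶜ = R ({m}ᶜ) := by
        rw [union_assoc, hRunion, hTUc]
        exact union_eq_self_of_subset_left (hSsub (by simp [hmq.symm]))
      have e2 : (S ∪ R T) ∩ R Uᶜ = S ∪ R {j} := by
        rw [union_inter_distrib_right, hRinter, hTUc2,
          inter_eq_self_of_subset_left (hSsub (mem_compl hqU))]
      have hLmc : lam (R ({m}ᶜ)) = ((k - 1 : ℕ) : ℕ∞) :=
        hlam _ ⟨q, hmq.symm⟩ (fun h => (h ▸ mem_univ m : m ∈ ({m}ᶜ : Set (Fin n))) rfl)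
      have hLU : lam (R Uᶜ) = ((k - 1 : ℕ) : ℕ∞) := by
        rw [← hRcompl, hsym]
        exact hlam U ⟨m, mem_insert m _⟩ (fun h => hqU (h ▸ mem_univ q))
      rw [e1, e2, hLmc, hLU] at h2
      rw [add_comm] at h2
      exact (WithTop.add_le_add_iff_right hfin).mp h2
    exact le_antisymm fwd bwd
  -- combine
  change lam (S ∪ R T₁) = lam (S ∪ R T₂)
  obtain ⟨j₁, hj₁⟩ := hT₁
  obtain ⟨j₂, hj₂⟩ := hT₂
  have hj₁q : j₁ ≠ q := fun h => hq₁ (h ▸ hj₁)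
  have hj₂q : j₂ ≠ q := fun h => hq₂ (h ▸ hj₂)
  have e₁ : lam (S ∪ R T₁) = lam (S ∪ R {j₁}) := key T₁ j₁ hj₁ hq₁ hne₁
  have e₂ : lam (S ∪ R T₂) = lam (S ∪ R {j₂}) := key T₂ j₂ hj₂ hq₂ hne₂
  rcases eq_or_ne j₁ j₂ with rfl | hjj
  · rw [e₁, e₂]
  · have hqpair : q ∉ ({j₁, j₂} : Set (Fin n)) := by
      simp only [mem_insert_iff, mem_singleton_iff]
      push_neg
      exact ⟨hj₁q.symm, hj₂q.symm⟩
    have hnu : insert q ({j₁, j₂} : Set (Fin n)) ≠ univ := by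
      intro h
      have hcard : (insert q ({j₁, j₂} : Set (Fin n))).ncard ≤ 3 := by
        refine le_trans (Set.ncard_insert_le _ _) ?_
        have : ({j₁, j₂} : Set (Fin n)).ncard ≤ 2 := by
          refine le_trans (Set.ncard_insert_le _ _) ?_
          simp [Set.ncard_singleton]
        omega
      rw [h, Set.ncard_univ] at hcard
      simp only [Nat.card_eq_fintype_card, Fintype.card_fin] at hcard
      omega
    have e₃ : lam (S ∪ R {j₁, j₂}) = lam (S ∪ R {j₁}) :=
      key {j₁, j₂} j₁ (mem_insert _ _) hqpair hnu
    have e₄ : lam (S ∪ R {j₁, j₂}) = lam (S ∪ R {j₂}) :=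
      key {j₁, j₂} j₂ (mem_insert_of_mem _ rfl) hqpair hnu
    rw [e₁, e₂, ← e₃, ← e₄]
end

section
/- Let Φ be a finite k-anemone of a connectivity system (E, λ) with distinct petals Q and R. Define μ : 2^Q → ℕ by μ(S) = λ(S ∪ R). Then μ is submodular, symmetric on Q (μ(S) = μ(Q \ S)), satisfies μ(S) ≥ k−1 for all S ⊆ Q, and does not depend on the choice of R among petals distinct from Q. -/
open Set

set_option maxHeartbeats 2000000 in
/-- For a finite `k`-anemone with distinct petals `Q = P q` and `R = P r`, the function
`μ(S) = λ(S ∪ R)` on subsets of `Q` is submodular, symmetric, bounded below by `k - 1`,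
and does not depend on the choice of `R`. -/
theorem stmt5 {E : Type*} (lam : Set E → ℕ∞)
    (hsym : SymmFn lam) (hsub : SubmodularFn lam)
    (k n : ℕ) (hk : 1 ≤ k) (P : Fin n → Set E) (hP : IsFinAnemone lam k n P)
    (q r : Fin n) (hqr : q ≠ r) :
    (∀ S₁ S₂ : Set E, S₁ ⊆ P q → S₂ ⊆ P q →
        lam ((S₁ ∪ S₂) ∪ P r) + lam ((S₁ ∩ S₂) ∪ P r) ≤ lam (S₁ ∪ P r) + lam (S₂ ∪ P r)) ∧
    (∀ S : Set E, S ⊆ P q → lam ((P q \ S) ∪ P r) = lam (S ∪ P r)) ∧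
    (∀ S : Set E, S ⊆ P q → ((k - 1 : ℕ) : ℕ∞) ≤ lam (S ∪ P r)) ∧
    (∀ r' : Fin n, r' ≠ q → ∀ S : Set E, S ⊆ P q → lam (S ∪ P r') = lam (S ∪ P r)) := by
  obtain ⟨hn, ⟨hne, hdisj, hcov⟩, hlam⟩ := hP
  have hc : ((k - 1 : ℕ) : ℕ∞) ≠ ⊤ := ENat.coe_ne_top _
  set c : ℕ∞ := ((k - 1 : ℕ) : ℕ∞) with hcdef
  -- pointwise disjointness
  have hd : ∀ {i j : Fin n}, i ≠ j → ∀ {x : E}, x ∈ P i → x ∈ P j → False :=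
    fun hij _ hx hy => Set.disjoint_left.mp (hdisj _ _ hij) hx hy
  have hTne : ∀ (T : Set (Fin n)) (t : Fin n), t ∉ T → T ≠ univ :=
    fun T t ht h => ht (h ▸ mem_univ t)
  -- a fourth element
  have h3 : ∀ a b d : Fin n, ∃ t : Fin n, t ≠ a ∧ t ≠ b ∧ t ≠ d := by
    intro a b d
    have hcard : (({a, b, d} : Finset (Fin n))).card < Fintype.card (Fin n) := by
      have h1 : (({a, b, d} : Finset (Fin n))).card ≤ 3 := by
        apply le_trans (Finset.card_insert_le _ _)
        have := Finset.card_insert_le b ({d} : Finset (Fin n))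
        simp at this ⊢; omega
      have : 3 < n := by omega
      simpa [Fintype.card_fin] using lt_of_le_of_lt h1 this
    have hne' : ({a, b, d} : Finset (Fin n)) ≠ Finset.univ := by
      intro h; rw [h] at hcard; simp [Finset.card_univ] at hcard
    obtain ⟨t, -, ht⟩ := Finset.exists_of_ssubset (Finset.ssubset_univ_iff.mpr hne')
    simp only [Finset.mem_insert, Finset.mem_singleton, not_or] at ht
    exact ⟨t, ht.1, ht.2.1, ht.2.2⟩
  -- lambda values of petal unions
  have hlam1 : ∀ {a : Fin n}, a ≠ q → lam (P a) = c := by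
    intro a ha
    have := hlam {a} ⟨a, rfl⟩ (hTne _ q (by simp [Ne.symm ha]))
    simpa [Set.biUnion_singleton] using this
  have hlam2 : ∀ {a b t : Fin n}, t ∉ ({a, b} : Set (Fin n)) → lam (P a ∪ P b) = c := by
    intro a b t ht
    have := hlam {a, b} ⟨a, by simp⟩ (hTne _ t ht)
    simpa [Set.biUnion_pair] using this
  have hlam3 : ∀ {a b d t : Fin n}, t ∉ ({a, b, d} : Set (Fin n)) →
      lam (P a ∪ (P b ∪ P d)) = c := by
    intro a b d t ht
    have := hlam {a, b, d} ⟨a, by simp⟩ (hTne _ t ht)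
    simpa [Set.biUnion_insert, Set.biUnion_pair] using this
  -- independence (one inequality)
  have hind : ∀ S : Set E, S ⊆ P q → ∀ a b : Fin n, a ≠ q → b ≠ q →
      lam (S ∪ P a) ≤ lam (S ∪ P b) := by
    intro S hS a b ha hb
    rcases eq_or_ne a b with rfl | hab
    · exact le_rfl
    obtain ⟨t, ht1, ht2, ht3⟩ := h3 q b a
    -- step 1 : lam (S ∪ (P b ∪ P a)) ≤ lam (S ∪ P b)
    have e1 : (S ∪ P b) ∪ (P b ∪ P a) = S ∪ (P b ∪ P a) := by
      ext x; simp only [mem_union]; tauto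
    have e2 : (S ∪ P b) ∩ (P b ∪ P a) = P b := by
      ext x
      have f1 : x ∈ S → x ∈ P a → False := fun h1 h2 => hd ha h2 (hS h1)
      have f2 : x ∈ P b → x ∈ P a → False := fun h1 h2 => hd hab.symm h1 h2
      simp only [mem_union, mem_inter_iff]; tauto
    have s1 := hsub (S ∪ P b) (P b ∪ P a)
    rw [e1, e2, hlam1 hb, hlam2 (a := b) (b := a) (t := q)
      (by simp [Ne.symm hb, Ne.symm ha])] at s1
    have step1 : lam (S ∪ (P b ∪ P a)) ≤ lam (S ∪ P b) :=
      (WithTop.add_le_add_iff_right hc).mp s1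
    -- step 2 : lam (S ∪ P a) ≤ lam (S ∪ (P b ∪ P a))
    have e3 : (S ∪ (P b ∪ P a)) ∪ (P q ∪ P a) = P q ∪ (P b ∪ P a) := by
      ext x
      have f1 : x ∈ S → x ∈ P q := fun h => hS h
      simp only [mem_union]; tauto
    have e4 : (S ∪ (P b ∪ P a)) ∩ (P q ∪ P a) = S ∪ P a := by
      ext x
      have f1 : x ∈ S → x ∈ P q := fun h => hS h
      have f2 : x ∈ P b → x ∈ P q → False := fun h1 h2 => hd hb h1 h2
      have f3 : x ∈ P b → x ∈ P a → False := fun h1 h2 => hd hab.symm h1 h2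
      simp only [mem_union, mem_inter_iff]; tauto
    have s2 := hsub (S ∪ (P b ∪ P a)) (P q ∪ P a)
    rw [e3, e4, hlam3 (a := q) (b := b) (d := a) (t := t)
      (by simp [ht1, ht2, ht3]), hlam2 (a := q) (b := a) (t := t)
      (by simp [ht1, ht3])] at s2
    have step2 : lam (S ∪ P a) ≤ lam (S ∪ (P b ∪ P a)) := by
      rw [add_comm c (lam (S ∪ P a))] at s2
      exact (WithTop.add_le_add_iff_right hc).mp s2
    exact le_trans step2 step1
  have hindEq : ∀ S : Set E, S ⊆ P q → ∀ a b : Fin n, a ≠ q → b ≠ q →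
      lam (S ∪ P a) = lam (S ∪ P b) :=
    fun S hS a b ha hb => le_antisymm (hind S hS a b ha hb) (hind S hS b a hb ha)
  -- the big union U of all petals other than q and r
  obtain ⟨U, hUdef⟩ : ∃ U : Set E, U = ⋃ i ∈ ({q, r} : Set (Fin n))ᶜ, P i := ⟨_, rfl⟩
  obtain ⟨t, htq, htr, -⟩ := h3 q r r
  have htU : P t ⊆ U := by
    rw [hUdef]
    apply Set.subset_biUnion_of_mem
    simp [htq, htr]
  have hUmem : ∀ {x : E}, x ∈ U → ∃ i : Fin n, i ≠ q ∧ i ≠ r ∧ x ∈ P i := by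
    intro x hx
    simp only [hUdef, mem_iUnion, mem_compl_iff, mem_insert_iff, mem_singleton_iff,
      not_or, exists_prop] at hx
    obtain ⟨i, ⟨h1, h2⟩, h3'⟩ := hx
    exact ⟨i, h1, h2, h3'⟩
  have hUq : ∀ {x : E}, x ∈ U → x ∈ P q → False := by
    intro x hx hq'
    obtain ⟨i, h1, -, h2⟩ := hUmem hx
    exact hd h1 h2 hq'
  have hUr : ∀ {x : E}, x ∈ U → x ∈ P r → False := by
    intro x hx hr'
    obtain ⟨i, -, h1, h2⟩ := hUmem hx
    exact hd h1 h2 hr'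
  have hlamU : lam U = c := by
    rw [hUdef]
    exact hlam _ ⟨t, by simp [htq, htr]⟩ (hTne _ q (by simp))
  have hPqU : P q ∪ U = ⋃ i ∈ ({r} : Set (Fin n))ᶜ, P i := by
    ext x
    simp only [mem_union, hUdef, mem_iUnion, mem_compl_iff, mem_insert_iff,
      mem_singleton_iff, not_or, exists_prop]
    constructor
    · rintro (h | ⟨i, ⟨h1, h2⟩, h3'⟩)
      · exact ⟨q, hqr, h⟩
      · exact ⟨i, h2, h3'⟩
    · rintro ⟨i, h1, h2⟩
      rcases eq_or_ne i q with rfl | hiq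
      · exact Or.inl h2
      · exact Or.inr ⟨i, ⟨hiq, h1⟩, h2⟩
  have hlamPqU : lam (P q ∪ U) = c := by
    rw [hPqU]
    exact hlam _ ⟨q, by simp [hqr]⟩ (hTne _ r (by simp))
  -- lam (S ∪ U) = lam (S ∪ P r)
  have hlem2 : ∀ S : Set E, S ⊆ P q → lam (S ∪ U) = lam (S ∪ P r) := by
    intro S hS
    have hStq : lam (S ∪ P t) = lam (S ∪ P r) := hindEq S hS t r htq (Ne.symm hqr)
    -- ≤ : hsub (S ∪ P t) U
    have e1 : (S ∪ P t) ∪ U = S ∪ U := by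
      rw [union_assoc, union_eq_self_of_subset_left htU]
    have e2 : (S ∪ P t) ∩ U = P t := by
      ext x
      have f1 : x ∈ S → x ∈ U → False := fun h1 h2 => hUq h2 (hS h1)
      have f2 : x ∈ P t → x ∈ U := fun h => htU h
      simp only [mem_union, mem_inter_iff]; tauto
    have s1 := hsub (S ∪ P t) U
    rw [e1, e2, hlamU] at s1
    have le1 : lam (S ∪ U) ≤ lam (S ∪ P r) := by
      rw [← hStq]
      rw [hlam1 htq] at s1
      exact (WithTop.add_le_add_iff_right hc).mp s1
    -- ≥ : hsub (S ∪ U) (P q ∪ P t)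
    have e3 : (S ∪ U) ∪ (P q ∪ P t) = P q ∪ U := by
      ext x
      have f1 : x ∈ S → x ∈ P q := fun h => hS h
      have f2 : x ∈ P t → x ∈ U := fun h => htU h
      simp only [mem_union]; tauto
    have e4 : (S ∪ U) ∩ (P q ∪ P t) = S ∪ P t := by
      ext x
      have f1 : x ∈ S → x ∈ P q := fun h => hS h
      have f2 : x ∈ U → x ∈ P q → False := fun h1 h2 => hUq h1 h2
      have f3 : x ∈ P t → x ∈ U := fun h => htU h
      have f4 : x ∈ U → x ∈ P t → x ∈ P t := fun _ h => h
      simp only [mem_union, mem_inter_iff]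
      constructor
      · rintro ⟨h1 | h1, h2 | h2⟩
        · exact Or.inl h1
        · exact Or.inl h1
        · exact absurd h2 (fun h => f2 h1 h)
        · exact Or.inr h2
      · rintro (h | h)
        · exact ⟨Or.inl h, Or.inl (f1 h)⟩
        · exact ⟨Or.inr (f3 h), Or.inr h⟩
    have s2 := hsub (S ∪ U) (P q ∪ P t)
    rw [e3, e4, hlamPqU, hlam2 (a := q) (b := t) (t := r)
      (by simp [Ne.symm hqr, Ne.symm htr])] at s2
    have le2 : lam (S ∪ P r) ≤ lam (S ∪ U) := by
      rw [← hStq]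
      rw [add_comm c (lam (S ∪ P t))] at s2
      exact (WithTop.add_le_add_iff_right hc).mp s2
    exact le_antisymm le1 le2
  -- symmetry
  have hcompl : ∀ S : Set E, S ⊆ P q → (S ∪ P r)ᶜ = (P q \ S) ∪ U := by
    intro S hS
    ext x
    simp only [mem_compl_iff, mem_union, mem_diff, not_or]
    constructor
    · rintro ⟨hxS, hxr⟩
      have hx : x ∈ ⋃ i, P i := hcov.symm ▸ mem_univ x
      obtain ⟨i, hxi⟩ := mem_iUnion.mp hx
      rcases eq_or_ne i q with rfl | hiq
      · exact Or.inl ⟨hxi, hxS⟩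
      rcases eq_or_ne i r with rfl | hir
      · exact absurd hxi hxr
      · refine Or.inr ?_
        simp only [hUdef, mem_iUnion, mem_compl_iff, mem_insert_iff,
          mem_singleton_iff, not_or, exists_prop]
        exact ⟨i, ⟨hiq, hir⟩, hxi⟩
    · rintro (⟨hxq, hxS⟩ | hxU)
      · exact ⟨hxS, fun h => hd hqr hxq h⟩
      · obtain ⟨i, h1, h2, h3'⟩ := hUmem hxU
        exact ⟨fun h => hd h1 h3' (hS h), fun h => hd h2 h3' h⟩
  have hsymm : ∀ S : Set E, S ⊆ P q → lam ((P q \ S) ∪ P r) = lam (S ∪ P r) := by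
    intro S hS
    have h1 : lam ((P q \ S) ∪ U) = lam ((P q \ S) ∪ P r) :=
      hlem2 (P q \ S) diff_subset
    rw [← h1, ← hcompl S hS, hsym]
  refine ⟨?_, hsymm, ?_, fun r' hr' S hS => hindEq S hS r' r hr' (Ne.symm hqr)⟩
  · -- submodularity
    intro S₁ S₂ h1 h2
    have e1 : (S₁ ∪ S₂) ∪ P r = (S₁ ∪ P r) ∪ (S₂ ∪ P r) := by
      ext x; simp only [mem_union]; tauto
    have e2 : (S₁ ∩ S₂) ∪ P r = (S₁ ∪ P r) ∩ (S₂ ∪ P r) := by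
      ext x; simp only [mem_union, mem_inter_iff]; tauto
    rw [e1, e2]
    exact hsub _ _
  · -- lower bound
    intro S hS
    have e1 : (S ∪ P r) ∪ ((P q \ S) ∪ P r) = P q ∪ P r := by
      ext x
      have f1 : x ∈ S → x ∈ P q := fun h => hS h
      simp only [mem_union, mem_diff]; tauto
    have e2 : (S ∪ P r) ∩ ((P q \ S) ∪ P r) = P r := by
      ext x
      have f1 : x ∈ S → x ∈ P q := fun h => hS h
      simp only [mem_union, mem_inter_iff, mem_diff]; tauto
    have s1 := hsub (S ∪ P r) ((P q \ S) ∪ P r)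
    rw [e1, e2, hlam1 (Ne.symm hqr), hlam2 (a := q) (b := r) (t := t)
      (by simp [htq, htr]), hsymm S hS] at s1
    by_contra hlt
    push_neg at hlt
    have hne' : lam (S ∪ P r) ≠ ⊤ := ne_top_of_lt hlt
    lift lam (S ∪ P r) to ℕ using hne' with m hm
    have hcc : c = ((k - 1 : ℕ) : ℕ∞) := rfl
    rw [hcc] at s1 hlt
    have s1' : k - 1 + (k - 1) ≤ m + m := by exact_mod_cast s1
    have hlt' : m < k - 1 := by exact_mod_cast hlt
    omega
end

section
/- Let Φ' be a k-pseudoflower of a limit-closed connectivity system that has a concatenation into a finite k-anemone Φ. Then every union of petals of Φ' that either contains a petal of Φ or is disjoint from a petal of Φ has connectivity at most k−1. -/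
open Set

/-- A subset `J` of a cyclically ordered set is an interval if one cannot find a cyclically
alternating quadruple `a, b, c, d` with `a, c ∈ J` and `b, d ∉ J`. -/
def IsCyclicInterval {ι : Type*} (c : CircularOrder ι) (J : Set ι) : Prop :=
  ¬ ∃ a b x d : ι, a ∈ J ∧ x ∈ J ∧ b ∉ J ∧ d ∉ J ∧ c.sbtw a b x ∧ c.sbtw x d a

/-- A `k`-pseudoflower: a partition with cyclically ordered index set such that the union of
every interval of petals has connectivity at most `k - 1`. -/
def IsPseudoflower {E : Type*} {ι : Type*} (lam : Set E → ℕ∞) (k : ℕ)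
    (c : CircularOrder ι) (P : ι → Set E) : Prop :=
  IsPartitionInd P ∧
    ∀ J : Set ι, IsCyclicInterval c J → J.Nonempty → J ≠ univ →
      lam (⋃ i ∈ J, P i) ≤ ((k - 1 : ℕ) : ℕ∞)

/-- The canonical cyclic order on `Fin n`, coming from its linear order. -/
noncomputable def finCirc (n : ℕ) : CircularOrder (Fin n) := LinearOrder.toCircularOrder (Fin n)

/-- `f` exhibits the partition `Q` (cyclically ordered by `cQ`) as a concatenation of the
partition `P` (cyclically ordered by `cP`): each petal of `P` is contained in the corresponding
petal of `Q`, and preimages of intervals are intervals. -/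
def IsConcatMap {E : Type*} {ι κ : Type*} (cP : CircularOrder ι) (cQ : CircularOrder κ)
    (P : ι → Set E) (Q : κ → Set E) (f : ι → κ) : Prop :=
  (∀ i, P i ⊆ Q (f i)) ∧
    ∀ T : Set κ, IsCyclicInterval cQ T → IsCyclicInterval cP (f ⁻¹' T)


section CircHelpers
variable {α : Type*} [CircularOrder α]

private lemma btw_sbtw_trans {p q r s : α} (h1 : btw p q r) (h2 : sbtw q s r) : btw p s r := by
  by_cases hpq : p = q
  · exact hpq ▸ h2.btw
  by_cases hpr : p = r
  · exact hpr ▸ btw_rfl_left_right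
  by_cases hqr : q = r
  · subst hqr; exact absurd btw_rfl_left_right h2.not_btw
  · have hnb : ¬ btw r q p := fun hb => by
      rcases btw_antisymm h1 hb with h | h | h
      · exact hpq h
      · exact hqr h
      · exact hpr h.symm
    exact (sbtw_trans_left (sbtw_iff_btw_not_btw.2 ⟨h1, hnb⟩) h2).btw

private lemma btw_trans_sbtw {p q r s : α} (h1 : btw p q r) (h2 : sbtw p r s) : btw p q s :=
  ((btw_sbtw_trans h1.cyclic_left h2.cyclic_left).cyclic_left).cyclic_left

private lemma sbtw_rot {a b x d : α} (h1 : sbtw a b x) (h2 : sbtw x d a) : sbtw b x d :=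
  (sbtw_trans_left h2.cyclic_left h1).cyclic_left

private lemma sbtw_of_btw_ne {a b c : α} (h : btw a b c) (hab : a ≠ b) (hbc : b ≠ c)
    (hca : c ≠ a) : sbtw a b c :=
  sbtw_iff_btw_not_btw.2 ⟨h, fun h' => by
    rcases btw_antisymm h h' with e | e | e
    · exact hab e
    · exact hbc e
    · exact hca e⟩

private lemma arc_no_quad {u v a x b d : α}
    (Ha : btw u a v) (Hx : btw u x v) (hb : ¬ btw u b v) (hd : ¬ btw u d v)
    (h1 : sbtw a b x) (h2 : sbtw x d a) : False := by
  have hax : a ≠ x := by rintro rfl; exact h1.not_btw btw_rfl_left_right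
  have hb' : sbtw v b u := sbtw_iff_not_btw.2 hb
  have hd' : sbtw v d u := sbtw_iff_not_btw.2 hd
  have hbu : btw x b u := btw_sbtw_trans Hx.cyclic_left hb'
  have hdu : btw a d u := btw_sbtw_trans Ha.cyclic_left hd'
  by_cases hxu : x = u
  · exact (hxu ▸ h2).not_btw hdu
  by_cases hau : a = u
  · exact (hau ▸ h1).not_btw hbu
  rcases btw_total u a x with hual | hxau
  · have s3 : btw x u a := hual.cyclic_left.cyclic_left
    have s4 : sbtw x u a := sbtw_of_btw_ne s3 hxu (fun h => hau h.symm) hax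
    exact h1.not_btw (btw_trans_sbtw hbu s4)
  · have s3 : btw a u x := hxau.cyclic_left
    have s4 : sbtw a u x := sbtw_of_btw_ne s3 hau (fun h => hxu h.symm) (Ne.symm hax)
    exact h2.not_btw (btw_trans_sbtw hdu s4)

private lemma arc_mono {z' z i y : α} (hzi : z ≠ i) (h : btw z' z i) (hy : btw z y i) :
    btw z' y i := by
  by_cases h1 : y = z
  · exact h1 ▸ h
  by_cases h2 : y = i
  · exact h2 ▸ btw_rfl_right
  exact btw_sbtw_trans h (sbtw_of_btw_ne hy (Ne.symm h1) h2 (Ne.symm hzi))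

private lemma arc_mono' {i z z' y : α} (hzi : z ≠ i) (h : btw i z z') (hy : btw i y z) :
    btw i y z' := by
  by_cases h1 : z = z'
  · exact h1 ▸ hy
  by_cases h2 : z' = i
  · exact h2 ▸ btw_rfl_left_right
  exact btw_trans_sbtw hy (sbtw_of_btw_ne h (Ne.symm hzi) h1 h2)

end CircHelpers

section Intervals
variable {α : Type*}

lemma singleton_isInterval (co : CircularOrder α) (j : α) : IsCyclicInterval co {j} := by
  letI := co
  rintro ⟨a, b, x, d, ha, hx, -, -, h1, -⟩
  rw [mem_singleton_iff] at ha hx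
  have hxa : x = a := hx.trans ha.symm
  subst hxa
  exact (show sbtw x b x from h1).not_btw btw_rfl_left_right

lemma arc_isInterval (co : CircularOrder α) (u v : α) :
    IsCyclicInterval co {y | co.btw u y v} := by
  letI := co
  rintro ⟨a, b, x, d, ha, hx, hb, hd, h1, h2⟩
  exact arc_no_quad ha hx hb hd h1 h2

lemma interval_all_or_nothing (co : CircularOrder α) {F : Set α}
    (hF : IsCyclicInterval co F) {u v : α} (huv : u ≠ v) (hu : u ∉ F) (hv : v ∉ F)
    {x₁ x₂ : α} (h₁ : x₁ ∈ F) (h₂ : x₂ ∈ F) (hx₁ : co.btw u x₁ v) (hx₂ : ¬ co.btw u x₂ v) :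
    False := by
  letI := co
  have e1 : x₁ ≠ u := fun h => hu (h ▸ h₁)
  have e2 : x₁ ≠ v := fun h => hv (h ▸ h₁)
  have s1 : sbtw u x₁ v := sbtw_of_btw_ne hx₁ (Ne.symm e1) e2 (Ne.symm huv)
  have s2 : sbtw v x₂ u := sbtw_iff_not_btw.2 hx₂
  exact hF ⟨x₁, v, x₂, u, h₁, h₂, hv, hu, sbtw_rot s1 s2, sbtw_rot s2 s1⟩

lemma crossing_contradiction (co : CircularOrder α) {F : Set α}
    (hF : IsCyclicInterval co F) {i y z z' : α} (hi : i ∉ F) (hy : y ∉ F) (hyi : y ≠ i)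
    (hz : z ∈ F) (hz' : z' ∈ F) (b1 : co.btw z y i) (b2 : co.btw i y z') : False := by
  letI := co
  have hyz : y ≠ z := fun h => hy (h ▸ hz)
  have hyz' : y ≠ z' := fun h => hy (h ▸ hz')
  have hzi : z ≠ i := fun h => hi (h ▸ hz)
  have hz'i : z' ≠ i := fun h => hi (h ▸ hz')
  have s1 : sbtw z y i := sbtw_of_btw_ne b1 (Ne.symm hyz) hyi (Ne.symm hzi)
  have s2 : sbtw i y z' := sbtw_of_btw_ne b2 (Ne.symm hyi) hyz' hz'i
  have t1 : sbtw z' z y := sbtw_trans_left s2.cyclic_left.cyclic_left s1.cyclic_left.cyclic_left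
  have t2 : sbtw z z' i := sbtw_trans_left s1 s2.cyclic_left
  exact hF ⟨z, y, z', i, hz, hz', hy, hi, t1.cyclic_left, t2.cyclic_left⟩

end Intervals
section MainHelpers

variable {E : Type*} {ι : Type*} {lam : Set E → ℕ∞} {k n : ℕ}
  {c : CircularOrder ι} {P' : ι → Set E} {P : Fin n → Set E} {f : ι → Fin n}

lemma uncross_inter (hsub : SubmodularFn lam) {A B : Set E} {e : ℕ∞} (he : e ≠ ⊤)
    (hA : lam A ≤ e) (hB : lam B ≤ e) (hU : lam (A ∪ B) = e) : lam (A ∩ B) ≤ e := by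
  have h := hsub A B
  rw [hU] at h
  exact (WithTop.add_le_add_iff_left he).1 (h.trans (add_le_add hA hB))

lemma uncross_union (hsub : SubmodularFn lam) {A B : Set E} {e : ℕ∞} (he : e ≠ ⊤)
    (hA : lam A ≤ e) (hB : lam B ≤ e) (hI : lam (A ∩ B) = e) : lam (A ∪ B) ≤ e := by
  have h := hsub A B
  rw [hI] at h
  exact (WithTop.add_le_add_iff_right he).1 (h.trans (add_le_add hA hB))

lemma exists_ne3 (hn : 4 ≤ n) (a b d : Fin n) : ∃ x : Fin n, x ≠ a ∧ x ≠ b ∧ x ≠ d := by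
  by_contra h
  push_neg at h
  have hsub : (Finset.univ : Finset (Fin n)) ⊆ {a, b, d} := by
    intro x _
    by_cases h1 : x = a
    · simp [h1]
    by_cases h2 : x = b
    · simp [h2]
    · simp [h x h1 h2]
  have hc := Finset.card_le_card hsub
  have h3 : ({a, b, d} : Finset (Fin n)).card ≤ 3 := by
    refine (Finset.card_insert_le _ _).trans (Nat.succ_le_succ ?_)
    refine (Finset.card_insert_le _ _).trans (Nat.succ_le_succ ?_)
    simp
  rw [Finset.card_univ, Fintype.card_fin] at hc
  omega

lemma set_ne_univ {γ : Type*} {T : Set γ} {x : γ} (hx : x ∉ T) : T ≠ univ :=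
  fun h => hx (h.symm ▸ mem_univ x)

lemma pmem_unique (hpart : IsPartitionInd P') {x : E} {y y' : ι}
    (h1 : x ∈ P' y) (h2 : x ∈ P' y') : y = y' := by
  by_contra hne
  exact (Set.disjoint_left.mp (hpart.2.1 y y' hne) h1) h2

lemma pcover (hpart : IsPartitionInd P') (x : E) : ∃ y, x ∈ P' y := by
  have hx : x ∈ ⋃ y, P' y := hpart.2.2.symm ▸ mem_univ x
  simpa using hx

lemma biUnion_compl_eq (hpart : IsPartitionInd P') (S : Set ι) :
    (⋃ y ∈ S, P' y)ᶜ = ⋃ y ∈ Sᶜ, P' y := by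
  ext x
  simp only [mem_compl_iff, mem_iUnion, exists_prop, not_exists, not_and]
  constructor
  · intro h
    obtain ⟨y, hy⟩ := pcover hpart x
    exact ⟨y, fun hyS => h y hyS hy, hy⟩
  · rintro ⟨y, hyS, hy⟩ y' hy'S hx
    exact hyS ((pmem_unique hpart hx hy) ▸ hy'S)

lemma biUnion_inter_biUnion (hpart : IsPartitionInd P') (S T : Set ι) :
    (⋃ y ∈ S, P' y) ∩ (⋃ y ∈ T, P' y) = ⋃ y ∈ S ∩ T, P' y := by
  ext x
  simp only [mem_inter_iff, mem_iUnion, exists_prop, mem_inter_iff]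
  constructor
  · rintro ⟨⟨y, hyS, hy⟩, ⟨y', hy'T, hy'⟩⟩
    exact ⟨y, ⟨hyS, (pmem_unique hpart hy' hy) ▸ hy'T⟩, hy⟩
  · rintro ⟨y, ⟨h1, h2⟩, hy⟩
    exact ⟨⟨y, h1, hy⟩, ⟨y, h2, hy⟩⟩

lemma fiber_eq (hpart' : IsPartitionInd P') (hpartP : IsPartitionInd P)
    (hconc : ∀ i, P' i ⊆ P (f i)) (a : Fin n) :
    P a = ⋃ y ∈ f ⁻¹' {a}, P' y := by
  ext x
  simp only [mem_iUnion, exists_prop, mem_preimage, mem_singleton_iff]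
  constructor
  · intro hx
    obtain ⟨y, hy⟩ := pcover hpart' x
    have hfy : f y = a := by
      by_contra hne
      exact (Set.disjoint_left.mp (hpartP.2.1 (f y) a hne) (hconc y hy)) hx
    exact ⟨y, hfy, hy⟩
  · rintro ⟨y, rfl, hy⟩
    exact hconc y hy

lemma fiber_nonempty (hpart' : IsPartitionInd P') (hpartP : IsPartitionInd P)
    (hconc : ∀ i, P' i ⊆ P (f i)) (a : Fin n) : (f ⁻¹' {a} : Set ι).Nonempty := by
  obtain ⟨x, hx⟩ := hpartP.1 a
  rw [fiber_eq hpart' hpartP hconc a] at hx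
  simp only [mem_iUnion, exists_prop] at hx
  exact ⟨hx.choose, hx.choose_spec.1⟩

end MainHelpers
section Master

variable {E : Type*} {ι : Type*} {lam : Set E → ℕ∞} {k n : ℕ}
  {c : CircularOrder ι} {P' : ι → Set E} {P : Fin n → Set E} {f : ι → Fin n}

theorem master_lemma (hsub : SubmodularFn lam) (hlim : LimitClosedFn lam)
    (hP' : IsPseudoflower lam k c P') (hP : IsFinAnemone lam k n P)
    (hf : IsConcatMap c (finCirc n) P' P f) (i : ι) (a : Fin n) (ham : a ≠ f i)
    (hc1 : ∃ c₁ : Fin n, c₁ ≠ a ∧ c₁ ≠ f i ∧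
      ∀ y ∈ f ⁻¹' {c₁}, y ∉ ⋃ z ∈ f ⁻¹' {a}, {y' | c.btw z y' i})
    (hc2 : ∃ c₂ : Fin n, c₂ ≠ a ∧ c₂ ≠ f i ∧
      ∀ y ∈ f ⁻¹' {c₂}, y ∉ ⋃ z ∈ f ⁻¹' {a}, {y' | c.btw i y' z}) :
    lam (P a ∪ P' i) ≤ ((k - 1 : ℕ) : ℕ∞) := by
  letI := c
  have hpart' := hP'.1
  have hpartP := hP.2.1
  have hconc := hf.1
  have hn := hP.1
  have he : ((k - 1 : ℕ) : ℕ∞) ≠ ⊤ := ENat.coe_ne_top _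
  set m := f i with hm
  set Fa : Set ι := f ⁻¹' {a} with hFadef
  set D1 : Set ι := ⋃ z ∈ Fa, {y' | c.btw z y' i} with hD1def
  set D2 : Set ι := ⋃ z ∈ Fa, {y' | c.btw i y' z} with hD2def
  set B1 : Set E := ⋃ y ∈ D1, P' y with hB1def
  set B2 : Set E := ⋃ y ∈ D2, P' y with hB2def
  have hFane : Fa.Nonempty := fiber_nonempty hpart' hpartP hconc a
  have hzFa : ∀ z ∈ Fa, f z = a := fun z hz => hz
  have hzi : ∀ z ∈ Fa, z ≠ i := by
    rintro z hz rfl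
    exact ham (hzFa z hz).symm
  have fibInt : ∀ b : Fin n, IsCyclicInterval c (f ⁻¹' {b}) :=
    fun b => hf.2 {b} (singleton_isInterval _ b)
  have hinotFa : i ∉ Fa := fun h => ham (hzFa i h).symm
  -- membership lemmas
  have memD1 : ∀ {y : ι}, y ∈ D1 ↔ ∃ z ∈ Fa, c.btw z y i := by
    intro y; rw [hD1def]; simp
  have memD2 : ∀ {y : ι}, y ∈ D2 ↔ ∃ z ∈ Fa, c.btw i y z := by
    intro y; rw [hD2def]; simp
  -- absorption for other fibers
  have absorb1 : ∀ {b : Fin n}, b ≠ a → b ≠ m → ∀ {w}, w ∈ f ⁻¹' {b} → w ∈ D1 →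
      ∀ {y}, y ∈ f ⁻¹' {b} → y ∈ D1 := by
    intro b hba hbm w hw hwD y hy
    obtain ⟨z, hz, hbw⟩ := memD1.1 hwD
    refine memD1.2 ⟨z, hz, ?_⟩
    by_contra hny
    exact interval_all_or_nothing c (fibInt b) (hzi z hz)
      (fun h => hba ((show f z = b from h).symm.trans (hzFa z hz)))
      (fun h => hbm ((show f i = b from h).symm.trans hm.symm)) hw hy hbw hny
  have absorb2 : ∀ {b : Fin n}, b ≠ a → b ≠ m → ∀ {w}, w ∈ f ⁻¹' {b} → w ∈ D2 →
      ∀ {y}, y ∈ f ⁻¹' {b} → y ∈ D2 := by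
    intro b hba hbm w hw hwD y hy
    obtain ⟨z, hz, hbw⟩ := memD2.1 hwD
    refine memD2.2 ⟨z, hz, ?_⟩
    by_contra hny
    exact interval_all_or_nothing c (fibInt b) (Ne.symm (hzi z hz))
      (fun h => hbm ((show f i = b from h).symm.trans hm.symm))
      (fun h => hba ((show f z = b from h).symm.trans (hzFa z hz))) hw hy hbw hny
  have harc1 : ∀ z ∈ Fa, lam (⋃ y ∈ {y' | c.btw z y' i}, P' y) ≤ ((k - 1 : ℕ) : ℕ∞) := by
    intro z hz
    obtain ⟨c₁, h1a, h1m, h1⟩ := hc1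
    obtain ⟨w, hw⟩ := fiber_nonempty hpart' hpartP hconc c₁
    refine hP'.2 _ (arc_isInterval c z i) ⟨i, btw_rfl_right⟩ (set_ne_univ (x := w) ?_)
    intro hwarc
    exact h1 w hw (memD1.2 ⟨z, hz, hwarc⟩)
  have harc2 : ∀ z ∈ Fa, lam (⋃ y ∈ {y' | c.btw i y' z}, P' y) ≤ ((k - 1 : ℕ) : ℕ∞) := by
    intro z hz
    obtain ⟨c₂, h2a, h2m, h2⟩ := hc2
    obtain ⟨w, hw⟩ := fiber_nonempty hpart' hpartP hconc c₂
    refine hP'.2 _ (arc_isInterval c i z) ⟨i, btw_rfl_left⟩ (set_ne_univ (x := w) ?_)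
    intro hwarc
    exact h2 w hw (memD2.2 ⟨z, hz, hwarc⟩)
  have hchain1 : IsChain (· ⊆ ·) ((fun z => ⋃ y ∈ {y' | c.btw z y' i}, P' y) '' Fa) := by
    rintro _ ⟨z, hz, rfl⟩ _ ⟨z', hz', rfl⟩ -
    rcases btw_total z' z i with h | h
    · exact Or.inl (biUnion_subset_biUnion_left (fun y hy => arc_mono (hzi z hz) h hy))
    · exact Or.inr (biUnion_subset_biUnion_left
        (fun y hy => arc_mono (hzi z' hz') h.cyclic_left hy))
  have hchain2 : IsChain (· ⊆ ·) ((fun z => ⋃ y ∈ {y' | c.btw i y' z}, P' y) '' Fa) := by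
    rintro _ ⟨z, hz, rfl⟩ _ ⟨z', hz', rfl⟩ -
    rcases btw_total i z z' with h | h
    · exact Or.inl (biUnion_subset_biUnion_left (fun y hy => arc_mono' (hzi z hz) h hy))
    · exact Or.inr (biUnion_subset_biUnion_left
        (fun y hy => arc_mono' (hzi z' hz') h.cyclic_left.cyclic_left hy))
  have hB1bound : lam B1 ≤ ((k - 1 : ℕ) : ℕ∞) := by
    have hU : B1 = ⋃₀ ((fun z => ⋃ y ∈ {y' | c.btw z y' i}, P' y) '' Fa) := by
      rw [sUnion_image]
      ext x
      simp only [hB1def, mem_iUnion, exists_prop]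
      constructor
      · rintro ⟨y, hyD, hy⟩
        obtain ⟨z, hz, hzy⟩ := memD1.1 hyD
        exact ⟨z, hz, y, hzy, hy⟩
      · rintro ⟨z, hz, y, hzy, hy⟩
        exact ⟨y, memD1.2 ⟨z, hz, hzy⟩, hy⟩
    rw [hU]
    exact hlim (k - 1) _ (hFane.image _) hchain1 (by rintro A ⟨z, hz, rfl⟩; exact harc1 z hz)
  have hB2bound : lam B2 ≤ ((k - 1 : ℕ) : ℕ∞) := by
    have hU : B2 = ⋃₀ ((fun z => ⋃ y ∈ {y' | c.btw i y' z}, P' y) '' Fa) := by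
      rw [sUnion_image]
      ext x
      simp only [hB2def, mem_iUnion, exists_prop]
      constructor
      · rintro ⟨y, hyD, hy⟩
        obtain ⟨z, hz, hzy⟩ := memD2.1 hyD
        exact ⟨z, hz, y, hzy, hy⟩
      · rintro ⟨z, hz, y, hzy, hy⟩
        exact ⟨y, memD2.2 ⟨z, hz, hzy⟩, hy⟩
    rw [hU]
    exact hlim (k - 1) _ (hFane.image _) hchain2 (by rintro A ⟨z, hz, rfl⟩; exact harc2 z hz)
  have hpair : lam (P a ∪ P m) = ((k - 1 : ℕ) : ℕ∞) := by
    have hrw : (⋃ b ∈ ({a, m} : Set (Fin n)), P b) = P a ∪ P m := by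
      simp [Set.biUnion_insert, Set.biUnion_singleton]
    rw [← hrw]
    refine hP.2.2 _ ⟨a, by simp⟩ ?_
    obtain ⟨x, hxa, hxm, -⟩ := exists_ne3 hn a m m
    exact set_ne_univ (x := x) (by simp [hxa, hxm])
  set T1 : Set (Fin n) := {b | b = a ∨ b = m ∨ ∃ y ∈ D1, f y = b} with hT1def
  set T2 : Set (Fin n) := {b | b = a ∨ b = m ∨ ∃ y ∈ D2, f y = b} with hT2def
  have hV1 : B1 ∪ (P a ∪ P m) = ⋃ b ∈ T1, P b := by
    ext x
    simp only [hT1def, mem_union, mem_iUnion, exists_prop, mem_setOf_eq]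
    constructor
    · rintro (hx | hx | hx)
      · rw [hB1def] at hx
        simp only [mem_iUnion, exists_prop] at hx
        obtain ⟨y, hyD, hy⟩ := hx
        exact ⟨f y, Or.inr (Or.inr ⟨y, hyD, rfl⟩), hconc y hy⟩
      · exact ⟨a, Or.inl rfl, hx⟩
      · exact ⟨m, Or.inr (Or.inl rfl), hx⟩
    · rintro ⟨b, hb, hx⟩
      rcases hb with rfl | rfl | ⟨y0, hy0D, rfl⟩
      · exact Or.inr (Or.inl hx)
      · exact Or.inr (Or.inr hx)
      · by_cases hba : f y0 = a
        · exact Or.inr (Or.inl (hba ▸ hx))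
        by_cases hbm : f y0 = m
        · exact Or.inr (Or.inr (hbm ▸ hx))
        · left
          rw [fiber_eq hpart' hpartP hconc (f y0)] at hx
          simp only [mem_iUnion, exists_prop, mem_preimage, mem_singleton_iff] at hx
          obtain ⟨y, hyf, hy⟩ := hx
          rw [hB1def]
          simp only [mem_iUnion, exists_prop]
          exact ⟨y, absorb1 hba hbm rfl hy0D hyf, hy⟩
  have hV2 : B2 ∪ (P a ∪ P m) = ⋃ b ∈ T2, P b := by
    ext x
    simp only [hT2def, mem_union, mem_iUnion, exists_prop, mem_setOf_eq]
    constructor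
    · rintro (hx | hx | hx)
      · rw [hB2def] at hx
        simp only [mem_iUnion, exists_prop] at hx
        obtain ⟨y, hyD, hy⟩ := hx
        exact ⟨f y, Or.inr (Or.inr ⟨y, hyD, rfl⟩), hconc y hy⟩
      · exact ⟨a, Or.inl rfl, hx⟩
      · exact ⟨m, Or.inr (Or.inl rfl), hx⟩
    · rintro ⟨b, hb, hx⟩
      rcases hb with rfl | rfl | ⟨y0, hy0D, rfl⟩
      · exact Or.inr (Or.inl hx)
      · exact Or.inr (Or.inr hx)
      · by_cases hba : f y0 = a
        · exact Or.inr (Or.inl (hba ▸ hx))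
        by_cases hbm : f y0 = m
        · exact Or.inr (Or.inr (hbm ▸ hx))
        · left
          rw [fiber_eq hpart' hpartP hconc (f y0)] at hx
          simp only [mem_iUnion, exists_prop, mem_preimage, mem_singleton_iff] at hx
          obtain ⟨y, hyf, hy⟩ := hx
          rw [hB2def]
          simp only [mem_iUnion, exists_prop]
          exact ⟨y, absorb2 hba hbm rfl hy0D hyf, hy⟩
  have hV1val : lam (B1 ∪ (P a ∪ P m)) = ((k - 1 : ℕ) : ℕ∞) := by
    rw [hV1]
    refine hP.2.2 _ ⟨a, by rw [hT1def]; exact Or.inl rfl⟩ ?_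
    obtain ⟨c₁, h1a, h1m, h1⟩ := hc1
    refine set_ne_univ (x := c₁) ?_
    rw [hT1def]
    rintro (rfl | rfl | ⟨y, hyD, rfl⟩)
    · exact h1a rfl
    · exact h1m (hm ▸ rfl)
    · exact h1 y rfl hyD
  have hV2val : lam (B2 ∪ (P a ∪ P m)) = ((k - 1 : ℕ) : ℕ∞) := by
    rw [hV2]
    refine hP.2.2 _ ⟨a, by rw [hT2def]; exact Or.inl rfl⟩ ?_
    obtain ⟨c₂, h2a, h2m, h2⟩ := hc2
    refine set_ne_univ (x := c₂) ?_
    rw [hT2def]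
    rintro (rfl | rfl | ⟨y, hyD, rfl⟩)
    · exact h2a rfl
    · exact h2m (hm ▸ rfl)
    · exact h2 y rfl hyD
  have ht1 : lam (B1 ∩ (P a ∪ P m)) ≤ ((k - 1 : ℕ) : ℕ∞) :=
    uncross_inter hsub he hB1bound hpair.le hV1val
  have ht2 : lam (B2 ∩ (P a ∪ P m)) ≤ ((k - 1 : ℕ) : ℕ∞) :=
    uncross_inter hsub he hB2bound hpair.le hV2val
  have hBB : B1 ∪ B2 = univ := by
    rw [hB1def, hB2def]
    ext x
    simp only [mem_union, mem_iUnion, exists_prop, mem_univ, iff_true]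
    obtain ⟨y, hy⟩ := pcover hpart' x
    obtain ⟨z0, hz0⟩ := hFane
    rcases btw_total z0 y i with h | h
    · exact Or.inl ⟨y, memD1.2 ⟨z0, hz0, h⟩, hy⟩
    · exact Or.inr ⟨y, memD2.2 ⟨z0, hz0, h⟩, hy⟩
  have hDD : D1 ∩ D2 = Fa ∪ {i} := by
    ext y
    constructor
    · rintro ⟨h1, h2⟩
      obtain ⟨z, hz, b1⟩ := memD1.1 h1
      obtain ⟨z', hz', b2⟩ := memD2.1 h2
      by_cases hyFa : y ∈ Fa
      · exact Or.inl hyFa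
      by_cases hyi : y = i
      · exact Or.inr (by simp [hyi])
      · exact (crossing_contradiction c (fibInt a) hinotFa hyFa hyi hz hz' b1 b2).elim
    · rintro (hy | hy)
      · exact ⟨memD1.2 ⟨y, hy, btw_rfl_left⟩, memD2.2 ⟨y, hy, btw_rfl_right⟩⟩
      · obtain ⟨z0, hz0⟩ := hFane
        rw [mem_singleton_iff] at hy
        subst hy
        exact ⟨memD1.2 ⟨z0, hz0, btw_rfl_right⟩, memD2.2 ⟨z0, hz0, btw_rfl_left⟩⟩
  have hBBi : B1 ∩ B2 = P a ∪ P' i := by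
    rw [hB1def, hB2def, biUnion_inter_biUnion hpart', hDD, biUnion_union, biUnion_singleton,
      ← fiber_eq hpart' hpartP hconc a]
  have hfin1 : (B1 ∩ (P a ∪ P m)) ∪ (B2 ∩ (P a ∪ P m)) = P a ∪ P m := by
    rw [← union_inter_distrib_right, hBB, univ_inter]
  have hfin2 : (B1 ∩ (P a ∪ P m)) ∩ (B2 ∩ (P a ∪ P m)) = P a ∪ P' i := by
    have h1 : (B1 ∩ (P a ∪ P m)) ∩ (B2 ∩ (P a ∪ P m)) = (B1 ∩ B2) ∩ (P a ∪ P m) := by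
      ext x
      simp only [mem_inter_iff]
      tauto
    rw [h1, hBBi]
    exact inter_eq_left.2 (union_subset_union_right _ (hm ▸ hconc i))
  have final := uncross_inter hsub he ht1 ht2 (by rw [hfin1]; exact hpair)
  rw [hfin2] at final
  exact final

end Master
section Petal

variable {E : Type*} {ι : Type*} {lam : Set E → ℕ∞} {k n : ℕ}
  {c : CircularOrder ι} {P' : ι → Set E} {P : Fin n → Set E} {f : ι → Fin n}

theorem petal_add (hsub : SubmodularFn lam) (hlim : LimitClosedFn lam)
    (hP' : IsPseudoflower lam k c P') (hP : IsFinAnemone lam k n P)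
    (hf : IsConcatMap c (finCirc n) P' P f) (i : ι) (j : Fin n) (hjm : j ≠ f i) :
    lam (P j ∪ P' i) ≤ ((k - 1 : ℕ) : ℕ∞) := by
  letI := c
  have hpart' := hP'.1
  have hpartP := hP.2.1
  have hconc := hf.1
  have hn := hP.1
  have he : ((k - 1 : ℕ) : ℕ∞) ≠ ⊤ := ENat.coe_ne_top _
  set m := f i with hm
  set D1 : Fin n → Set ι := fun a => ⋃ z ∈ f ⁻¹' {a}, {y' | c.btw z y' i} with hD1def
  set D2 : Fin n → Set ι := fun a => ⋃ z ∈ f ⁻¹' {a}, {y' | c.btw i y' z} with hD2def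
  have fibInt : ∀ b : Fin n, IsCyclicInterval c (f ⁻¹' {b}) :=
    fun b => hf.2 {b} (singleton_isInterval _ b)
  have memD1 : ∀ (a : Fin n) (y : ι), y ∈ D1 a ↔ ∃ z ∈ f ⁻¹' {a}, c.btw z y i := by
    intro a y; rw [hD1def]; simp
  have memD2 : ∀ (a : Fin n) (y : ι), y ∈ D2 a ↔ ∃ z ∈ f ⁻¹' {a}, c.btw i y z := by
    intro a y; rw [hD2def]; simp
  have hine : ∀ {b : Fin n} {y : ι}, y ∈ f ⁻¹' {b} → b ≠ m → y ≠ i := by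
    rintro b y hy hbm rfl
    exact hbm ((show f y = b from hy).symm.trans hm.symm)
  have hfibne : ∀ {a b : Fin n} {y : ι}, y ∈ f ⁻¹' {b} → b ≠ a → y ∉ f ⁻¹' {a} := by
    intro a b y hy hba h
    exact hba ((show f y = b from hy).symm.trans (show f y = a from h))
  have hinotfib : ∀ {a : Fin n}, a ≠ m → i ∉ f ⁻¹' {a} := by
    intro a ham h
    exact ham ((show f i = a from h).symm.trans hm.symm)
  have notBoth : ∀ {a b : Fin n}, a ≠ m → b ≠ a → b ≠ m → ∀ {y}, y ∈ f ⁻¹' {b} →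
      y ∈ D1 a → y ∈ D2 a → False := by
    intro a b ham hba hbm y hyb h1 h2
    obtain ⟨z, hz, b1⟩ := (memD1 a y).1 h1
    obtain ⟨z', hz', b2⟩ := (memD2 a y).1 h2
    exact crossing_contradiction c (fibInt a) (hinotfib ham) (hfibne hyb hba)
      (hine hyb hbm) hz hz' b1 b2
  have tot : ∀ {a b : Fin n}, a ≠ m → b ≠ a → b ≠ m →
      (∀ y ∈ f ⁻¹' {b}, y ∈ D1 a) ∨ (∀ y ∈ f ⁻¹' {b}, y ∈ D2 a) := by
    intro a b ham hba hbm
    obtain ⟨w, hw⟩ := fiber_nonempty hpart' hpartP hconc b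
    obtain ⟨z0, hz0⟩ := fiber_nonempty hpart' hpartP hconc a
    have hz0i : z0 ≠ i := hine hz0 ham
    rcases btw_total z0 w i with h | h
    · left
      intro y hy
      refine (memD1 a y).2 ⟨z0, hz0, ?_⟩
      by_contra hn'
      exact interval_all_or_nothing c (fibInt b) hz0i (hfibne hz0 (Ne.symm hba))
        (hinotfib hbm) hw hy h hn'
    · right
      intro y hy
      refine (memD2 a y).2 ⟨z0, hz0, ?_⟩
      by_contra hn'
      exact interval_all_or_nothing c (fibInt b) (Ne.symm hz0i) (hinotfib hbm)
        (hfibne hz0 (Ne.symm hba)) hw hy h hn'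
  have swap12 : ∀ {a b : Fin n}, a ≠ m → b ≠ a → b ≠ m →
      (∀ y ∈ f ⁻¹' {b}, y ∈ D2 a) → (∀ y ∈ f ⁻¹' {a}, y ∈ D1 b) := by
    intro a b ham hba hbm hIn y hy
    obtain ⟨w0, hw0⟩ := fiber_nonempty hpart' hpartP hconc b
    obtain ⟨z0, hz0, b2⟩ := (memD2 a w0).1 (hIn w0 hw0)
    have hw0i : w0 ≠ i := hine hw0 hbm
    refine (memD1 b y).2 ⟨w0, hw0, ?_⟩
    by_contra hn'
    exact interval_all_or_nothing c (fibInt a) hw0i (hfibne hw0 hba) (hinotfib ham)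
      hz0 hy b2.cyclic_left hn'
  have swap21 : ∀ {a b : Fin n}, a ≠ m → b ≠ a → b ≠ m →
      (∀ y ∈ f ⁻¹' {b}, y ∈ D1 a) → (∀ y ∈ f ⁻¹' {a}, y ∈ D2 b) := by
    intro a b ham hba hbm hIn y hy
    obtain ⟨w0, hw0⟩ := fiber_nonempty hpart' hpartP hconc b
    obtain ⟨z0, hz0, b1⟩ := (memD1 a w0).1 (hIn w0 hw0)
    have hw0i : w0 ≠ i := hine hw0 hbm
    refine (memD2 b y).2 ⟨w0, hw0, ?_⟩
    by_contra hn'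
    exact interval_all_or_nothing c (fibInt a) (Ne.symm hw0i) (hinotfib ham)
      (hfibne hw0 hba) hz0 hy b1.cyclic_left.cyclic_left hn'
  have clash : ∀ {a b : Fin n}, a ≠ m → b ≠ a → b ≠ m →
      (∀ y ∈ f ⁻¹' {b}, y ∈ D1 a) → (∀ y ∈ f ⁻¹' {b}, y ∈ D2 a) → False := by
    intro a b ham hba hbm h1 h2
    obtain ⟨w, hw⟩ := fiber_nonempty hpart' hpartP hconc b
    exact notBoth ham hba hbm hw (h1 w hw) (h2 w hw)
  -- Good anchors
  set Good : Fin n → Prop := fun a =>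
    (∃ b, b ≠ a ∧ b ≠ m ∧ ∀ y ∈ f ⁻¹' {b}, y ∈ D2 a) ∧
    (∃ b, b ≠ a ∧ b ≠ m ∧ ∀ y ∈ f ⁻¹' {b}, y ∈ D1 a) with hGooddef
  have key : ∀ a : Fin n, a ≠ m → ¬ Good a →
      (∀ b, b ≠ a → b ≠ m → ∀ y ∈ f ⁻¹' {b}, y ∈ D1 a) ∨
      (∀ b, b ≠ a → b ≠ m → ∀ y ∈ f ⁻¹' {b}, y ∈ D2 a) := by
    intro a ham hng
    rw [hGooddef, not_and_or] at hng
    rcases hng with h | h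
    · left
      intro b hba hbm
      rcases tot ham hba hbm with hin | hin
      · exact hin
      · exact absurd ⟨b, hba, hbm, hin⟩ h
    · right
      intro b hba hbm
      rcases tot ham hba hbm with hin | hin
      · exact absurd ⟨b, hba, hbm, hin⟩ h
      · exact hin
  obtain ⟨a1, ha1m, -, -⟩ := exists_ne3 hn m m m
  obtain ⟨a2, ha2m, ha21, -⟩ := exists_ne3 hn m a1 a1
  obtain ⟨a3, ha3m, ha31, ha32⟩ := exists_ne3 hn m a1 a2
  have goodExists : ∃ g : Fin n, g ≠ m ∧ Good g := by
    by_cases g1 : Good a1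
    · exact ⟨a1, ha1m, g1⟩
    by_cases g2 : Good a2
    · exact ⟨a2, ha2m, g2⟩
    by_cases g3 : Good a3
    · exact ⟨a3, ha3m, g3⟩
    exfalso
    rcases key a1 ha1m g1 with A1 | A1 <;> rcases key a2 ha2m g2 with A2 | A2
    · exact clash ha2m ha21.symm ha1m (A2 a1 ha21.symm ha1m)
        (swap21 ha1m ha21 ha2m (A1 a2 ha21 ha2m))
    · rcases key a3 ha3m g3 with A3 | A3
      · exact clash ha3m ha31.symm ha1m (A3 a1 ha31.symm ha1m)
          (swap21 ha1m ha31 ha3m (A1 a3 ha31 ha3m))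
      · exact clash ha3m ha32.symm ha2m
          (swap12 ha2m ha32 ha3m (A2 a3 ha32 ha3m)) (A3 a2 ha32.symm ha2m)
    · rcases key a3 ha3m g3 with A3 | A3
      · exact clash ha3m ha32.symm ha2m (A3 a2 ha32.symm ha2m)
          (swap21 ha2m ha32 ha3m (A2 a3 ha32 ha3m))
      · exact clash ha3m ha31.symm ha1m
          (swap12 ha1m ha31 ha3m (A1 a3 ha31 ha3m)) (A3 a1 ha31.symm ha1m)
    · exact clash ha2m ha21.symm ha1m
        (swap12 ha1m ha21 ha2m (A1 a2 ha21 ha2m)) (A2 a1 ha21.symm ha1m)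
  obtain ⟨g, hgm, hGood⟩ := goodExists
  rw [hGooddef] at hGood
  obtain ⟨⟨b1, hb1g, hb1m, hIn2⟩, ⟨b2, hb2g, hb2m, hIn1⟩⟩ := hGood
  have hc1' : ∃ c₁ : Fin n, c₁ ≠ g ∧ c₁ ≠ f i ∧
      ∀ y ∈ f ⁻¹' {c₁}, y ∉ ⋃ z ∈ f ⁻¹' {g}, {y' | c.btw z y' i} := by
    refine ⟨b1, hb1g, hb1m, fun y hy hyD => ?_⟩
    exact notBoth hgm hb1g hb1m hy hyD (hIn2 y hy)
  have hc2' : ∃ c₂ : Fin n, c₂ ≠ g ∧ c₂ ≠ f i ∧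
      ∀ y ∈ f ⁻¹' {c₂}, y ∉ ⋃ z ∈ f ⁻¹' {g}, {y' | c.btw i y' z} := by
    refine ⟨b2, hb2g, hb2m, fun y hy hyD => ?_⟩
    exact notBoth hgm hb2g hb2m hy (hIn1 y hy) hyD
  have hu : lam (P g ∪ P' i) ≤ ((k - 1 : ℕ) : ℕ∞) :=
    master_lemma hsub hlim hP' hP hf i g hgm hc1' hc2'
  by_cases hgj : g = j
  · rwa [hgj] at hu
  -- transfer to anchor j
  have hdis : ∀ {x : E} {u v : Fin n}, u ≠ v → x ∈ P u → x ∈ P v → False :=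
    fun h h1 h2 => Set.disjoint_left.mp (hpartP.2.1 _ _ h) h1 h2
  have hPi : ∀ {x : E}, x ∈ P' i → x ∈ P m := fun hx => hm ▸ hconc i hx
  have anem : ∀ (T : Set (Fin n)), T.Nonempty → T ≠ univ →
      lam (⋃ b ∈ T, P b) = ((k - 1 : ℕ) : ℕ∞) := hP.2.2
  have hPg : lam (P g) = ((k - 1 : ℕ) : ℕ∞) := by
    have hr : (⋃ b ∈ ({g} : Set (Fin n)), P b) = P g := biUnion_singleton g P
    obtain ⟨x, hxg, -, -⟩ := exists_ne3 hn g g g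
    rw [← hr]
    exact anem _ ⟨g, rfl⟩ (set_ne_univ (x := x) (by simp [hxg]))
  have hPjg : lam (P j ∪ P g) = ((k - 1 : ℕ) : ℕ∞) := by
    have hr : (⋃ b ∈ ({j, g} : Set (Fin n)), P b) = P j ∪ P g := by
      simp [Set.biUnion_insert, Set.biUnion_singleton]
    rw [← hr]
    refine anem _ ⟨j, by simp⟩ (set_ne_univ (x := m) ?_)
    simp only [mem_insert_iff, mem_singleton_iff]
    push_neg
    exact ⟨Ne.symm hjm, Ne.symm hgm⟩
  have hPjm : lam (P j ∪ P m) = ((k - 1 : ℕ) : ℕ∞) := by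
    have hr : (⋃ b ∈ ({j, m} : Set (Fin n)), P b) = P j ∪ P m := by
      simp [Set.biUnion_insert, Set.biUnion_singleton]
    rw [← hr]
    refine anem _ ⟨j, by simp⟩ (set_ne_univ (x := g) ?_)
    simp only [mem_insert_iff, mem_singleton_iff]
    push_neg
    exact ⟨hgj, hgm⟩
  have hint1 : (P g ∪ P' i) ∩ (P j ∪ P g) = P g := by
    ext x
    simp only [mem_inter_iff, mem_union]
    constructor
    · rintro ⟨hx1 | hx1, hx2 | hx2⟩
      · exact hx1
      · exact hx1
      · exact (hdis (Ne.symm hjm) (hPi hx1) hx2).elim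
      · exact (hdis (Ne.symm hgm) (hPi hx1) hx2).elim
    · intro hx
      exact ⟨Or.inl hx, Or.inr hx⟩
  have hstep1 : lam ((P g ∪ P' i) ∪ (P j ∪ P g)) ≤ ((k - 1 : ℕ) : ℕ∞) :=
    uncross_union hsub he hu hPjg.le (by rw [hint1]; exact hPg)
  have hre : (P g ∪ P' i) ∪ (P j ∪ P g) = P j ∪ (P g ∪ P' i) := by
    ext x
    simp only [mem_union]
    tauto
  rw [hre] at hstep1
  have htri : lam ((P j ∪ (P g ∪ P' i)) ∪ (P j ∪ P m)) = ((k - 1 : ℕ) : ℕ∞) := by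
    have hset : (P j ∪ (P g ∪ P' i)) ∪ (P j ∪ P m) = ⋃ b ∈ ({j, g, m} : Set (Fin n)), P b := by
      simp only [Set.biUnion_insert, Set.biUnion_singleton]
      ext x
      simp only [mem_union]
      constructor
      · rintro ((h | h | h) | h | h)
        · exact Or.inl h
        · exact Or.inr (Or.inl h)
        · exact Or.inr (Or.inr (hPi h))
        · exact Or.inl h
        · exact Or.inr (Or.inr h)
      · rintro (h | h | h)
        · exact Or.inl (Or.inl h)
        · exact Or.inl (Or.inr (Or.inl h))
        · exact Or.inr (Or.inr h)
    rw [hset]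
    obtain ⟨x, hxj, hxg, hxm⟩ := exists_ne3 hn j g m
    refine anem _ ⟨j, by simp⟩ (set_ne_univ (x := x) ?_)
    simp only [mem_insert_iff, mem_singleton_iff]
    push_neg
    exact ⟨hxj, hxg, hxm⟩
  have hint2 : (P j ∪ (P g ∪ P' i)) ∩ (P j ∪ P m) = P j ∪ P' i := by
    ext x
    simp only [mem_inter_iff, mem_union]
    constructor
    · rintro ⟨h1 | h1 | h1, h2 | h2⟩
      · exact Or.inl h1
      · exact Or.inl h1
      · exact (hdis hgj h1 h2).elim
      · exact (hdis hgm h1 h2).elim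
      · exact Or.inr h1
      · exact Or.inr h1
    · rintro (h | h)
      · exact ⟨Or.inl h, Or.inl h⟩
      · exact ⟨Or.inr (Or.inr h), Or.inr (hPi h)⟩
  have final := uncross_inter hsub he hstep1 hPjm.le htri
  rw [hint2] at final
  exact final

end Petal
section Final

variable {E : Type*} {ι : Type*} {lam : Set E → ℕ∞} {k n : ℕ}
  {c : CircularOrder ι} {P' : ι → Set E} {P : Fin n → Set E} {f : ι → Fin n}

theorem contains_case (hsub : SubmodularFn lam) (hlim : LimitClosedFn lam)
    (hP' : IsPseudoflower lam k c P') (hP : IsFinAnemone lam k n P)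
    (hf : IsConcatMap c (finCirc n) P' P f) (J : Set ι) (j : Fin n)
    (hj : f ⁻¹' {j} ⊆ J) : lam (⋃ y ∈ J, P' y) ≤ ((k - 1 : ℕ) : ℕ∞) := by
  have hpart' := hP'.1
  have hpartP := hP.2.1
  have hconc := hf.1
  have hn := hP.1
  have he : ((k - 1 : ℕ) : ℕ∞) ≠ ⊤ := ENat.coe_ne_top _
  have hPj : lam (P j) = ((k - 1 : ℕ) : ℕ∞) := by
    have hr : (⋃ b ∈ ({j} : Set (Fin n)), P b) = P j := biUnion_singleton j P
    obtain ⟨x, hxj, -, -⟩ := exists_ne3 hn j j j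
    rw [← hr]
    exact hP.2.2 _ ⟨j, rfl⟩ (set_ne_univ (x := x) (by simp [hxj]))
  set S : Set (Set ι) :=
    {S | f ⁻¹' {j} ⊆ S ∧ S ⊆ J ∧ lam (⋃ y ∈ S, P' y) ≤ ((k - 1 : ℕ) : ℕ∞)} with hSdef
  have hbase : f ⁻¹' {j} ∈ S := by
    refine ⟨Subset.rfl, hj, ?_⟩
    rw [← fiber_eq hpart' hpartP hconc j]
    exact hPj.le
  have hchainU : ∀ ch ⊆ S, IsChain (· ⊆ ·) ch → ch.Nonempty → ∃ ub ∈ S, ∀ s ∈ ch, s ⊆ ub := by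
    intro ch hchS hchain hchne
    refine ⟨⋃₀ ch, ⟨?_, ?_, ?_⟩, fun s hs => subset_sUnion_of_mem hs⟩
    · obtain ⟨s0, hs0⟩ := hchne
      exact (hchS hs0).1.trans (subset_sUnion_of_mem hs0)
    · exact sUnion_subset fun s hs => (hchS hs).2.1
    · have hU : (⋃ y ∈ ⋃₀ ch, P' y) = ⋃₀ ((fun s => ⋃ y ∈ s, P' y) '' ch) := by
        rw [sUnion_image]
        ext x
        simp only [mem_iUnion, exists_prop, mem_sUnion]
        constructor
        · rintro ⟨y, ⟨s, hs, hys⟩, hy⟩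
          exact ⟨s, hs, y, hys, hy⟩
        · rintro ⟨s, hs, y, hys, hy⟩
          exact ⟨y, ⟨s, hs, hys⟩, hy⟩
      rw [hU]
      refine hlim (k - 1) _ (hchne.image _) ?_ ?_
      · rintro _ ⟨s, hs, rfl⟩ _ ⟨t, ht, rfl⟩ -
        rcases hchain.total hs ht with h | h
        · exact Or.inl (biUnion_subset_biUnion_left h)
        · exact Or.inr (biUnion_subset_biUnion_left h)
      · rintro A ⟨s, hs, rfl⟩
        exact (hchS hs).2.2
  obtain ⟨M, hM0, hMmax⟩ := zorn_subset_nonempty S hchainU _ hbase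
  have hMS : M ∈ S := hMmax.1
  have hMJ : M = J := by
    by_contra hne
    obtain ⟨i, hiJ, hiM⟩ : ∃ i, i ∈ J ∧ i ∉ M := by
      by_contra h
      push_neg at h
      exact hne (Subset.antisymm hMS.2.1 h)
    have hfij : j ≠ f i := by
      intro heq
      have : i ∈ f ⁻¹' {j} := by simp [heq.symm]
      exact hiM (hMS.1 this)
    have hpa := petal_add hsub hlim hP' hP hf i j hfij
    have hYP : (⋃ y ∈ M, P' y) ∩ (P j ∪ P' i) = P j := by
      ext x
      simp only [mem_inter_iff, mem_iUnion, exists_prop, mem_union]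
      constructor
      · rintro ⟨⟨y, hyM, hy⟩, hx | hx⟩
        · exact hx
        · exact absurd ((pmem_unique hpart' hy hx) ▸ hyM) hiM
      · intro hx
        have hx2 : x ∈ ⋃ y ∈ f ⁻¹' {j}, P' y := by
          rw [← fiber_eq hpart' hpartP hconc j]; exact hx
        simp only [mem_iUnion, exists_prop] at hx2
        obtain ⟨y, hyj, hy⟩ := hx2
        exact ⟨⟨y, hMS.1 hyj, hy⟩, Or.inl hx⟩
    have hun : (⋃ y ∈ M, P' y) ∪ (P j ∪ P' i) = ⋃ y ∈ M ∪ {i}, P' y := by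
      rw [biUnion_union, biUnion_singleton]
      have hPjY : P j ⊆ ⋃ y ∈ M, P' y := by
        rw [fiber_eq hpart' hpartP hconc j]
        exact biUnion_subset_biUnion_left hMS.1
      ext x
      simp only [mem_union]
      constructor
      · rintro (h | h | h)
        exacts [Or.inl h, Or.inl (hPjY h), Or.inr h]
      · rintro (h | h)
        exacts [Or.inl h, Or.inr (Or.inr h)]
    have hnew : lam (⋃ y ∈ M ∪ {i}, P' y) ≤ ((k - 1 : ℕ) : ℕ∞) := by
      rw [← hun]
      exact uncross_union hsub he hMS.2.2 hpa (by rw [hYP]; exact hPj)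
    have hmem : M ∪ {i} ∈ S :=
      ⟨hMS.1.trans subset_union_left, union_subset hMS.2.1 (by simpa using hiJ), hnew⟩
    have hle := hMmax.2 hmem subset_union_left
    exact hiM (hle (mem_union_right _ rfl))
  rw [hMJ] at hMS
  exact hMS.2.2

end Final

/-- If a `k`-pseudoflower `P'` has a concatenation into a finite `k`-anemone `P`, then every
union of petals of `P'` that contains a petal of `P` or is disjoint from a petal of `P` has
connectivity at most `k - 1`. -/
theorem stmt7 {E : Type*} {ι : Type*} (lam : Set E → ℕ∞)
    (hsym : SymmFn lam) (hsub : SubmodularFn lam) (hlim : LimitClosedFn lam)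
    (k n : ℕ) (hk : 1 ≤ k) (c : CircularOrder ι) (P' : ι → Set E)
    (hP' : IsPseudoflower lam k c P')
    (P : Fin n → Set E) (hP : IsFinAnemone lam k n P)
    (f : ι → Fin n) (hf : IsConcatMap c (finCirc n) P' P f)
    (J : Set ι)
    (hJ : ∃ j : Fin n, P j ⊆ (⋃ i ∈ J, P' i) ∨ Disjoint (P j) (⋃ i ∈ J, P' i)) :
    lam (⋃ i ∈ J, P' i) ≤ ((k - 1 : ℕ) : ℕ∞) := by
  obtain ⟨j, hj | hj⟩ := hJ
  · have hsubJ : f ⁻¹' {j} ⊆ J := by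
      intro y hy
      obtain ⟨x, hx⟩ := hP'.1.1 y
      have hxJ : x ∈ ⋃ i ∈ J, P' i := by
        refine hj ?_
        rw [fiber_eq hP'.1 hP.2.1 hf.1 j]
        exact mem_biUnion hy hx
      simp only [mem_iUnion, exists_prop] at hxJ
      obtain ⟨y', hy', hx'⟩ := hxJ
      exact (pmem_unique hP'.1 hx' hx) ▸ hy'
    exact contains_case hsub hlim hP' hP hf J j hsubJ
  · have hsubJc : f ⁻¹' {j} ⊆ Jᶜ := by
      intro y hy hyJ
      obtain ⟨x, hx⟩ := hP'.1.1 y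
      have hxPj : x ∈ P j := by
        rw [fiber_eq hP'.1 hP.2.1 hf.1 j]
        exact mem_biUnion hy hx
      exact Set.disjoint_left.mp hj hxPj (mem_biUnion hyJ hx)
    have h1 := contains_case hsub hlim hP' hP hf Jᶜ j hsubJc
    rw [← biUnion_compl_eq hP'.1 J] at h1
    rwa [hsym] at h1
end

section
/- Let Φ be an infinite k-anemone of a limit-closed connectivity system. Then every nonempty proper union of petals of Φ has connectivity exactly k−1. -/
open Set

/-- A `k`-flower: a `k`-pseudoflower with at least four petals in which the union of every
nontrivial interval of petals has connectivity exactly `k - 1`. -/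
def IsFlower {E : Type*} {ι : Type*} (lam : Set E → ℕ∞) (k : ℕ)
    (c : CircularOrder ι) (P : ι → Set E) : Prop :=
  IsPartitionInd P ∧ (∃ s : Finset ι, s.card = 4) ∧
    ∀ J : Set ι, IsCyclicInterval c J → J.Nonempty → J ≠ univ →
      lam (⋃ i ∈ J, P i) = ((k - 1 : ℕ) : ℕ∞)

/-- A `k`-anemone: a `k`-flower all of whose finite concatenations have all of their nontrivial
unions of petals of connectivity exactly `k - 1`. -/
def IsAnemone {E : Type*} {ι : Type*} (lam : Set E → ℕ∞) (k : ℕ)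
    (c : CircularOrder ι) (P : ι → Set E) : Prop :=
  IsFlower lam k c P ∧
    ∀ (m : ℕ) (f : ι → Fin m), Function.Surjective f →
      (∀ T : Set (Fin m), IsCyclicInterval (finCirc m) T → IsCyclicInterval c (f ⁻¹' T)) →
      ∀ T : Set (Fin m), T.Nonempty → T ≠ univ →
        lam (⋃ i ∈ f ⁻¹' T, P i) = ((k - 1 : ℕ) : ℕ∞)

/-!
On index sets, `μ M = λ (⋃ i ∈ M, P i)` is again submodular and limit-closed. Single petals and
complements of single petals are nontrivial intervals, so they have connectivity `k - 1`; so does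
any pair of petals `a, b`, by the anemone property applied to the concatenation into the four
blocks `{a}, (a, b), {b}, (b, a)` (or, if one of the open arcs is empty, because `{a, b}` is then
itself an interval). Submodularity against a pair `{a, j}` adds one petal `j` to a set `M ∋ a`
without raising `μ` above `k - 1`, and Zorn's lemma together with limit-closedness then gives
`μ S ≤ k - 1` for every nonempty `S`. Conversely, for `a ∈ J` and `b ∉ J`, the set
`Y = insert a (J ∪ {b})ᶜ` meets `J` in `{a}` and together with `J` covers all petals but `b`,
so submodularity yields `μ J ≥ k - 1`.
-/

open Function

section SetFunction

variable {ι E : Type*}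

theorem SubmodularFn.comp_biUnion {lam : Set E → ℕ∞} (h : SubmodularFn lam) {P : ι → Set E}
    (hP : Pairwise (Disjoint on P)) : SubmodularFn fun M : Set ι => lam (⋃ i ∈ M, P i) := by
  intro M N
  simpa only [biUnion_union, biUnion_inter_of_pairwise_disjoint hP] using h _ _

theorem LimitClosedFn.comp_biUnion {lam : Set E → ℕ∞} (h : LimitClosedFn lam) (P : ι → Set E) :
    LimitClosedFn fun M : Set ι => lam (⋃ i ∈ M, P i) := by
  intro k C hC hchain hle
  have := h k ((fun M => ⋃ i ∈ M, P i) '' C) (hC.image _)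
    (hchain.image_of_map_rel _ _ _ fun _ _ => biUnion_subset_biUnion_left)
    (forall_mem_image.2 hle)
  rw [sUnion_image] at this
  convert this using 2
  ext
  simp only [mem_iUnion, mem_sUnion, exists_prop]
  grind

variable {μ : Set ι → ℕ∞} {K : ℕ}

theorem SubmodularFn.insert_le_s9 (hsub : SubmodularFn μ) (hsingle : ∀ a, μ {a} = K)
    (hpair : ∀ a b, a ≠ b → μ {a, b} ≤ K) {M : Set ι} {a : ι} (ha : a ∈ M) (hM : μ M ≤ K)
    (j : ι) : μ (insert j M) ≤ K := by
  by_cases hj : j ∈ M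
  · rwa [insert_eq_of_mem hj]
  have hunion : M ∪ {a, j} = insert j M := by
    rw [union_insert, union_singleton, insert_comm, insert_eq_of_mem ha]
  have hinter : M ∩ {a, j} = {a} := by
    ext z
    simp only [mem_inter_iff, mem_insert_iff, mem_singleton_iff]
    constructor
    · rintro ⟨hz, rfl | rfl⟩
      exacts [rfl, absurd hz hj]
    · rintro rfl
      exact ⟨ha, Or.inl rfl⟩
  have := (hunion ▸ hinter ▸ hsub M {a, j}).trans
    (add_le_add hM (hpair a j fun h => hj (h ▸ ha)))
  rw [hsingle] at this
  exact (ENat.add_le_add_iff_right (ENat.natCast_ne_top K)).1 this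

theorem SubmodularFn.le_of_limitClosedFn (hsub : SubmodularFn μ) (hlim : LimitClosedFn μ)
    (hsingle : ∀ a, μ {a} = K) (hpair : ∀ a b, a ≠ b → μ {a, b} ≤ K) {S : Set ι}
    (hS : S.Nonempty) : μ S ≤ K := by
  obtain ⟨a, ha⟩ := hS
  set G : Set (Set ι) := {M | M ⊆ S ∧ a ∈ M ∧ μ M ≤ K}
  have hchain : ∀ C ⊆ G, IsChain (· ⊆ ·) C → C.Nonempty → ∃ ub ∈ G, ∀ M ∈ C, M ⊆ ub := by
    intro C hCG hC ⟨M, hM⟩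
    refine ⟨⋃₀ C, ⟨sUnion_subset fun N hN => (hCG hN).1, ⟨M, hM, (hCG hM).2.1⟩,
      hlim K C ⟨M, hM⟩ hC fun N hN => (hCG hN).2.2⟩, fun _ => subset_sUnion_of_mem⟩
  obtain ⟨M, -, hMmax⟩ :=
    zorn_subset_nonempty G hchain {a} ⟨singleton_subset_iff.2 ha, rfl, (hsingle a).le⟩
  obtain ⟨hMS, haM, hMK⟩ := hMmax.prop
  suffices hSM : S ⊆ M by rwa [← hMS.antisymm hSM]
  intro j hj
  exact hMmax.mem_of_prop_insert
    ⟨insert_subset hj hMS, mem_insert_of_mem j haM, hsub.insert_le_s9 hsingle hpair haM hMK j⟩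

theorem SubmodularFn.eq_of_limitClosedFn (hsub : SubmodularFn μ) (hlim : LimitClosedFn μ)
    (hsingle : ∀ a, μ {a} = K) (hpair : ∀ a b, a ≠ b → μ {a, b} ≤ K)
    (hcosingle : ∀ b, μ {b}ᶜ = K) {J : Set ι} (hJ : J.Nonempty) (hJ' : J ≠ univ) :
    μ J = K := by
  obtain ⟨a, ha⟩ := hJ
  obtain ⟨b, hb⟩ := (ne_univ_iff_exists_notMem J).1 hJ'
  set Y := insert a (J ∪ {b})ᶜ
  have hunion : J ∪ Y = {b}ᶜ := by
    ext z; simp only [Y, mem_union, mem_insert_iff, mem_compl_iff, mem_singleton_iff]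
    grind
  have hinter : J ∩ Y = {a} := by
    ext z; simp only [Y, mem_inter_iff, mem_insert_iff, mem_compl_iff, mem_union,
      mem_singleton_iff]
    grind
  have := (hunion ▸ hinter ▸ hsub J Y).trans
    (add_le_add le_rfl (hsub.le_of_limitClosedFn hlim hsingle hpair ⟨a, mem_insert a _⟩))
  rw [hcosingle, hsingle] at this
  exact le_antisymm (hsub.le_of_limitClosedFn hlim hsingle hpair ⟨a, ha⟩)
    ((ENat.add_le_add_iff_right (ENat.natCast_ne_top K)).1 this)

end SetFunction

section CyclicInterval

variable {ι : Type*} [c : CircularOrder ι]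

theorem sbtw_or_sbtw_of_ne {a b d : ι} (hab : a ≠ b) (hbd : b ≠ d) (hda : d ≠ a) :
    sbtw a b d ∨ sbtw d b a := by
  by_contra! h
  rw [sbtw_iff_not_btw, sbtw_iff_not_btw, not_not, not_not] at h
  rcases h.2.antisymm h.1 with h | h | h
  exacts [hab h, hbd h, hda h]

theorem SBtw.sbtw.left_ne {a b d : ι} (h : sbtw a b d) : a ≠ b := by
  rintro rfl
  exact sbtw_irrefl_left h

theorem sbtw_of_sbtw_of_sbtw {a b x d : ι} (habx : sbtw a b x) (hxda : sbtw x d a) :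
    sbtw b x d :=
  sbtw_cyclic_right (sbtw_trans_right hxda (sbtw_cyclic_right habx))

theorem isCyclicInterval_singleton (a : ι) : IsCyclicInterval c {a} := by
  rintro ⟨p, q, x, d, rfl, rfl, -, -, h, -⟩
  exact sbtw_irrefl_left_right h

theorem isCyclicInterval_cIoo (a b : ι) : IsCyclicInterval c (cIoo a b) := by
  rintro ⟨p, q, x, d, hp, hx, hq, hd, hpqx, hxdp⟩
  have hpx : p ≠ x := fun h => sbtw_irrefl_left_right (h ▸ hpqx)
  rcases sbtw_or_sbtw_of_ne hp.left_ne hpx hx.left_ne.symm with h | h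
  · exact hq (sbtw_trans_right (h.trans_left hpqx) hx)
  · exact hd (sbtw_trans_right ((sbtw_cyclic_right h).trans_left hxdp) hp)

theorem IsCyclicInterval.compl {J : Set ι} (hJ : IsCyclicInterval c J) :
    IsCyclicInterval c Jᶜ := by
  rintro ⟨p, q, x, d, hp, hx, hq, hd, hpqx, hxdp⟩
  exact hJ ⟨q, x, d, p, not_not.1 hq, not_not.1 hd, hx, hp, sbtw_of_sbtw_of_sbtw hpqx hxdp,
    sbtw_of_sbtw_of_sbtw hxdp hpqx⟩

theorem IsCyclicInterval.preimage {κ : Type*} [cκ : CircularOrder κ] {f : ι → κ}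
    (hfib : ∀ i, IsCyclicInterval c (f ⁻¹' {i}))
    (hsbtw : ∀ x y z, sbtw (f x) (f y) (f z) → sbtw x y z)
    {T : Set κ} (hT : IsCyclicInterval cκ T) : IsCyclicInterval c (f ⁻¹' T) := by
  rintro ⟨p, q, x, d, hp, hx, hq, hd, hpqx, hxdp⟩
  rw [mem_preimage] at hp hq hx hd
  have hqp : f q ≠ f p := fun h => hq (h ▸ hp)
  have hdp : f d ≠ f p := fun h => hd (h ▸ hp)
  have hqx : f q ≠ f x := fun h => hq (h ▸ hx)
  have hdx : f d ≠ f x := fun h => hd (h ▸ hx)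
  by_cases hpx : f p = f x
  · exact hfib (f p) ⟨p, q, x, d, rfl, hpx.symm, hqp, hdp, hpqx, hxdp⟩
  refine hT ⟨f p, f q, f x, f d, hp, hx, hq, hd, ?_, ?_⟩
  · exact (sbtw_or_sbtw_of_ne hqp.symm hqx (Ne.symm hpx)).resolve_right
      fun h => sbtw_asymm hpqx (hsbtw _ _ _ h)
  · exact (sbtw_or_sbtw_of_ne hdx.symm hdp hpx).resolve_right
      fun h => sbtw_asymm hxdp (hsbtw _ _ _ h)

end CyclicInterval

section FourArcs

variable {ι : Type*} [c : CircularOrder ι] {a b x y z : ι}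

open Classical in
noncomputable def fourArcs (a b z : ι) : Fin 4 :=
  if z = a then 0 else if sbtw a z b then 1 else if z = b then 2 else 3

theorem fourArcs_eq_zero : fourArcs a b z = 0 ↔ z = a := by
  unfold fourArcs; split_ifs <;> simp_all

theorem fourArcs_eq_one : fourArcs a b z = 1 ↔ sbtw a z b := by
  unfold fourArcs; split_ifs <;> simp_all [sbtw_irrefl_left]

theorem fourArcs_eq_two (hab : a ≠ b) : fourArcs a b z = 2 ↔ z = b := by
  unfold fourArcs
  split_ifs with hza hazb hzb
  · simp [hza, hab]
  · simp only [Fin.reduceEq, false_iff]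
    rintro rfl
    exact sbtw_irrefl_right hazb
  · simp [hzb]
  · simp [hzb]

theorem fourArcs_eq_three (hab : a ≠ b) : fourArcs a b z = 3 ↔ sbtw b z a := by
  unfold fourArcs
  split_ifs with hza hazb hzb
  · simp [hza, sbtw_irrefl_right]
  · simpa using sbtw_asymm hazb
  · simp [hzb, sbtw_irrefl_left]
  · simpa using (sbtw_or_sbtw_of_ne (Ne.symm hza) hzb hab.symm).resolve_left hazb

theorem sbtw_of_fourArcs_lt (hab : a ≠ b) (hxy : fourArcs a b x < fourArcs a b y)
    (hyz : fourArcs a b y < fourArcs a b z) : sbtw x y z := by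
  have hcases : ∀ i j l : Fin 4, i < j → j < l → i = 0 ∧ j = 1 ∧ l = 2 ∨
      i = 0 ∧ j = 1 ∧ l = 3 ∨ i = 0 ∧ j = 2 ∧ l = 3 ∨ i = 1 ∧ j = 2 ∧ l = 3 := by
    decide
  rcases hcases _ _ _ hxy hyz with ⟨hx, hy, hz⟩ | ⟨hx, hy, hz⟩ | ⟨hx, hy, hz⟩ | ⟨hx, hy, hz⟩ <;>
    simp only [fourArcs_eq_zero, fourArcs_eq_one, fourArcs_eq_two hab,
      fourArcs_eq_three hab] at hx hy hz <;> subst_vars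
  · exact hy
  · exact sbtw_trans_right hy (sbtw_cyclic_right hz)
  · exact sbtw_cyclic_right hz
  · exact sbtw_cyclic_right (sbtw_trans_right hz (sbtw_cyclic_right hx))

theorem sbtw_of_fourArcs_sbtw (hab : a ≠ b)
    (h : (finCirc 4).sbtw (fourArcs a b x) (fourArcs a b y) (fourArcs a b z)) : sbtw x y z := by
  rcases h with ⟨hxy, hyz⟩ | ⟨hyz, hzx⟩ | ⟨hzx, hxy⟩
  · exact sbtw_of_fourArcs_lt hab hxy hyz
  · exact sbtw_cyclic_right (sbtw_of_fourArcs_lt hab hyz hzx)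
  · exact sbtw_cyclic_left (sbtw_of_fourArcs_lt hab hzx hxy)

theorem IsCyclicInterval.preimage_fourArcs (hab : a ≠ b) {T : Set (Fin 4)}
    (hT : IsCyclicInterval (finCirc 4) T) : IsCyclicInterval c (fourArcs a b ⁻¹' T) := by
  refine hT.preimage (fun i => ?_) fun x y z => sbtw_of_fourArcs_sbtw hab
  fin_cases i
  · convert isCyclicInterval_singleton a using 1
    ext; exact fourArcs_eq_zero
  · convert isCyclicInterval_cIoo a b using 1
    ext; exact fourArcs_eq_one
  · convert isCyclicInterval_singleton b using 1
    ext; exact fourArcs_eq_two hab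
  · convert isCyclicInterval_cIoo b a using 1
    ext; exact fourArcs_eq_three hab

end FourArcs

section Anemone

variable {E ι : Type*} {lam : Set E → ℕ∞} {k : ℕ} {c : CircularOrder ι} {P : ι → Set E}

theorem IsAnemone.lam_pair_of_nonempty_cIoo (hP : IsAnemone lam k c P) {a b : ι} (hab : a ≠ b)
    (hU : (cIoo a b).Nonempty) : lam (⋃ i ∈ ({a, b} : Set ι), P i) = ((k - 1 : ℕ) : ℕ∞) := by
  by_cases hV : (cIoo b a).Nonempty
  · have hsurj : Surjective (fourArcs a b) := by
      intro i
      fin_cases i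
      · exact ⟨a, fourArcs_eq_zero.2 rfl⟩
      · exact ⟨hU.some, fourArcs_eq_one.2 hU.some_mem⟩
      · exact ⟨b, (fourArcs_eq_two hab).2 rfl⟩
      · exact ⟨hV.some, (fourArcs_eq_three hab).2 hV.some_mem⟩
    have hpre : fourArcs a b ⁻¹' {0, 2} = {a, b} := by
      ext z
      simp only [mem_preimage, mem_insert_iff, mem_singleton_iff, fourArcs_eq_zero,
        fourArcs_eq_two hab]
    have := hP.2 4 _ hsurj (fun T hT => hT.preimage_fourArcs hab) {0, 2} (insert_nonempty _ _)
      ((ne_univ_iff_exists_notMem _).2 ⟨1, by decide⟩)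
    rwa [hpre] at this
  · have hab_eq : ({a, b} : Set ι) = (cIoo a b)ᶜ := by
      ext z
      simp only [mem_insert_iff, mem_singleton_iff, mem_compl_iff, mem_cIoo]
      constructor
      · rintro (rfl | rfl)
        exacts [sbtw_irrefl_left, sbtw_irrefl_right]
      · intro hz
        by_contra! h
        exact hV ⟨z, (sbtw_or_sbtw_of_ne (Ne.symm h.1) h.2 hab.symm).resolve_left hz⟩
    rw [hab_eq]
    exact hP.1.2.2 _ (isCyclicInterval_cIoo a b).compl ⟨a, sbtw_irrefl_left⟩
      (compl_ne_univ.2 hU)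

theorem IsAnemone.lam_pair [Infinite ι] (hP : IsAnemone lam k c P) {a b : ι} (hab : a ≠ b) :
    lam (⋃ i ∈ ({a, b} : Set ι), P i) = ((k - 1 : ℕ) : ℕ∞) := by
  obtain ⟨z, hz⟩ := (toFinite {a, b}).infinite_compl.nonempty
  simp only [mem_compl_iff, mem_insert_iff, mem_singleton_iff, not_or] at hz
  rcases sbtw_or_sbtw_of_ne (Ne.symm hz.1) hz.2 hab.symm with h | h
  · exact hP.lam_pair_of_nonempty_cIoo hab ⟨z, h⟩
  · rw [pair_comm]
    exact hP.lam_pair_of_nonempty_cIoo hab.symm ⟨z, h⟩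

end Anemone

theorem stmt9_general {E : Type*} {ι : Type*} [Infinite ι] (lam : Set E → ℕ∞)
    (hsub : SubmodularFn lam) (hlim : LimitClosedFn lam)
    (k : ℕ) (c : CircularOrder ι) (P : ι → Set E)
    (hP : IsAnemone lam k c P)
    (J : Set ι) (hJne : J.Nonempty) (hJpr : J ≠ univ) :
    lam (⋃ i ∈ J, P i) = ((k - 1 : ℕ) : ℕ∞) := by
  have hflower := hP.1.2.2
  refine (hsub.comp_biUnion hP.1.1.2.1).eq_of_limitClosedFn (hlim.comp_biUnion P)
    (fun a => ?_) (fun a b hab => (hP.lam_pair hab).le) (fun b => ?_) hJne hJpr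
  · exact hflower {a} (isCyclicInterval_singleton a) (singleton_nonempty a)
      (nonempty_compl.1 (finite_singleton a).infinite_compl.nonempty)
  · exact hflower {b}ᶜ (isCyclicInterval_singleton b).compl
      (finite_singleton b).infinite_compl.nonempty (compl_ne_univ.2 (singleton_nonempty b))

/-- In an infinite `k`-anemone, every nonempty proper union of petals has connectivity
exactly `k - 1`. -/
theorem stmt9 {E : Type*} {ι : Type*} [Infinite ι] (lam : Set E → ℕ∞)
    (hsym : SymmFn lam) (hsub : SubmodularFn lam) (hlim : LimitClosedFn lam)
    (k : ℕ) (hk : 1 ≤ k) (c : CircularOrder ι) (P : ι → Set E)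
    (hP : IsAnemone lam k c P)
    (J : Set ι) (hJne : J.Nonempty) (hJpr : J ≠ univ) :
    lam (⋃ i ∈ J, P i) = ((k - 1 : ℕ) : ℕ∞) :=
  stmt9_general lam hsub hlim k c P hP J hJne hJpr
end

section
/- Let (E, λ) be a limit-closed connectivity system, k ∈ ℕ, and let 𝒜 ⊆ 2^E contain ∅, be closed under complements and binary intersections, and satisfy λ(A) ≤ k−1 for all A ∈ 𝒜. Then there is a partition of E such that every union of partition classes has connectivity at most k−1 and every element of 𝒜 is a union of partition classes. -/
/-!
A family closed under binary unions whose members have connectivity at most `m` is, by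
limit-closedness and Zorn's lemma, closed under arbitrary unions without leaving connectivity
`≤ m`. Applied to `𝒜` and then, via symmetry, to the arbitrary intersections of members of `𝒜`,
this bounds every union of the atoms of `𝒜`: the classes of points that no member of `𝒜`
separates, each of which is an intersection of members of `𝒜`.
-/

open Set

theorem Setoid.sUnion_classes_subset_eq {α : Type*} (r : Setoid α) {A : Set α}
    (hA : ∀ x y, r x y → y ∈ A → x ∈ A) : ⋃₀ {C ∈ r.classes | C ⊆ A} = A :=
  (sUnion_subset fun _ hC => hC.2).antisymm fun y hy =>
    ⟨{x | r x y}, ⟨r.mem_classes y, fun x hx => hA x y hx hy⟩, r.refl' y⟩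

def separationSetoid {E : Type*} (𝒜 : Set (Set E)) : Setoid E :=
  Setoid.ker fun x => {A ∈ 𝒜 | x ∈ A}

theorem separationSetoid_iff {E : Type*} {𝒜 : Set (Set E)} {x y : E} :
    separationSetoid 𝒜 x y ↔ ∀ A ∈ 𝒜, x ∈ A ↔ y ∈ A :=
  Setoid.ker_def.trans <| by simp only [Set.ext_iff, mem_sep_iff, and_congr_right_iff]

theorem separationSetoid_class_eq_sInter {E : Type*} {𝒜 : Set (Set E)}
    (hcompl : ∀ A ∈ 𝒜, Aᶜ ∈ 𝒜) (y : E) :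
    {x | separationSetoid 𝒜 x y} = ⋂₀ {A ∈ 𝒜 | y ∈ A} := by
  ext x
  simp only [mem_ofPred_eq, separationSetoid_iff, mem_sInter, and_imp]
  refine ⟨fun h A hA hy => (h A hA).2 hy, fun h A hA => ⟨fun hx => ?_, h A hA⟩⟩
  by_contra hyA
  exact h _ (hcompl A hA) hyA hx

namespace LimitClosedFn

variable {E : Type*} {lam : Set E → ℕ∞} {m : ℕ}

theorem sUnion_union_le (hlim : LimitClosedFn lam) {c : Set (Set E)} (hne : c.Nonempty)
    (hc : IsChain (· ⊆ ·) c) (B : Set E) (hle : ∀ X ∈ c, lam (X ∪ B) ≤ m) :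
    lam (⋃₀ c ∪ B) ≤ m := by
  have hsUnion : ⋃₀ ((· ∪ B) '' c) = ⋃₀ c ∪ B := by
    obtain ⟨X₀, hX₀⟩ := hne
    ext x
    simp only [sUnion_image, mem_iUnion, mem_union, mem_sUnion, exists_prop]
    constructor
    · rintro ⟨X, hX, hx | hx⟩
      exacts [Or.inl ⟨X, hX, hx⟩, Or.inr hx]
    · rintro (⟨X, hX, hx⟩ | hx)
      exacts [⟨X, hX, Or.inl hx⟩, ⟨X₀, hX₀, Or.inr hx⟩]
  rw [← hsUnion]
  exact hlim m _ (hne.image _)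
    (hc.image_of_map_rel _ _ _ fun _ _ h => union_subset_union_left B h) (forall_mem_image.2 hle)

/-- Zorn's lemma on `{X ⊆ ⋃₀ ℱ | ∀ B ∈ ℬ, λ(X ∪ B) ≤ m}`: a maximal member absorbs every
`A ∈ ℱ`, because `X ∪ A ∪ B = X ∪ (A ∪ B)` with `A ∪ B ∈ ℬ`. -/
theorem sUnion_le (hlim : LimitClosedFn lam) {ℬ : Set (Set E)} (hempty : ∅ ∈ ℬ)
    (hunion : ∀ A ∈ ℬ, ∀ B ∈ ℬ, A ∪ B ∈ ℬ) (hle : ∀ B ∈ ℬ, lam B ≤ m)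
    {ℱ : Set (Set E)} (hℱ : ℱ ⊆ ℬ) : lam (⋃₀ ℱ) ≤ m := by
  set 𝒞 : Set (Set E) := {X | X ⊆ ⋃₀ ℱ ∧ ∀ B ∈ ℬ, lam (X ∪ B) ≤ m}
  have hchain : ∀ c ⊆ 𝒞, IsChain (· ⊆ ·) c → c.Nonempty → ∃ ub ∈ 𝒞, ∀ X ∈ c, X ⊆ ub :=
    fun c hc₁ hc₂ hne => ⟨⋃₀ c, ⟨sUnion_subset fun X hX => (hc₁ hX).1,
      fun B hB => hlim.sUnion_union_le hne hc₂ B fun X hX => (hc₁ hX).2 B hB⟩,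
      fun _ => subset_sUnion_of_mem⟩
  obtain ⟨X, -, hX⟩ := zorn_subset_nonempty 𝒞 hchain ∅
    ⟨empty_subset _, fun B hB => by simpa using hle B hB⟩
  have hXeq : X = ⋃₀ ℱ := by
    refine hX.prop.1.antisymm (sUnion_subset fun A hA => ?_)
    have hXA : X ∪ A ∈ 𝒞 := by
      refine ⟨union_subset hX.prop.1 (subset_sUnion_of_mem hA), fun B hB => ?_⟩
      rw [union_assoc]
      exact hX.prop.2 _ (hunion A (hℱ hA) B hB)
    exact (hX.eq_of_subset hXA subset_union_left).symm ▸ subset_union_right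
  simpa [hXeq] using hX.prop.2 ∅ hempty

theorem sInter_le (hlim : LimitClosedFn lam) (hsym : SymmFn lam) {𝒜 : Set (Set E)}
    (hempty : ∅ ∈ 𝒜) (hcompl : ∀ A ∈ 𝒜, Aᶜ ∈ 𝒜) (hunion : ∀ A ∈ 𝒜, ∀ B ∈ 𝒜, A ∪ B ∈ 𝒜)
    (hle : ∀ A ∈ 𝒜, lam A ≤ m) {ℱ : Set (Set E)} (hℱ : ℱ ⊆ 𝒜) : lam (⋂₀ ℱ) ≤ m := by
  rw [← hsym, compl_sInter]
  exact hlim.sUnion_le hempty hunion hle (image_subset_iff.2 fun A hA => hcompl A (hℱ hA))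

theorem sUnion_sInter_le (hlim : LimitClosedFn lam) (hsym : SymmFn lam) {𝒜 : Set (Set E)}
    (hempty : ∅ ∈ 𝒜) (hcompl : ∀ A ∈ 𝒜, Aᶜ ∈ 𝒜) (hunion : ∀ A ∈ 𝒜, ∀ B ∈ 𝒜, A ∪ B ∈ 𝒜)
    (hle : ∀ A ∈ 𝒜, lam A ≤ m) {𝒮 : Set (Set E)} (h𝒮 : ∀ S ∈ 𝒮, ∃ ℱ ⊆ 𝒜, ⋂₀ ℱ = S) :
    lam (⋃₀ 𝒮) ≤ m := by
  refine hlim.sUnion_le (ℬ := {S | ∃ ℱ ⊆ 𝒜, ⋂₀ ℱ = S}) ⟨{∅}, by simpa, sInter_singleton _⟩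
    ?_ ?_ h𝒮
  · rintro _ ⟨ℱ, hℱ, rfl⟩ _ ⟨ℱ', hℱ', rfl⟩
    exact ⟨(fun p : Set E × Set E => p.1 ∪ p.2) '' ℱ ×ˢ ℱ',
      image_subset_iff.2 fun p hp => hunion _ (hℱ hp.1) _ (hℱ' hp.2),
      by rw [sInter_image, sInter_union_sInter]⟩
  · rintro _ ⟨ℱ, hℱ, rfl⟩
    exact hlim.sInter_le hsym hempty hcompl hunion hle hℱ

end LimitClosedFn

theorem stmt10_general {E : Type*} (lam : Set E → ℕ∞)
    (hsym : SymmFn lam) (hlim : LimitClosedFn lam)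
    (k : ℕ) (𝒜 : Set (Set E)) (hempty : ∅ ∈ 𝒜)
    (hcompl : ∀ A ∈ 𝒜, Aᶜ ∈ 𝒜) (hinter : ∀ A ∈ 𝒜, ∀ B ∈ 𝒜, A ∩ B ∈ 𝒜)
    (hord : ∀ A ∈ 𝒜, lam A ≤ ((k - 1 : ℕ) : ℕ∞)) :
    ∃ 𝒬 : Set (Set E), (∅ ∉ 𝒬) ∧ 𝒬.PairwiseDisjoint id ∧ ⋃₀ 𝒬 = univ ∧
      (∀ 𝒮 ⊆ 𝒬, lam (⋃₀ 𝒮) ≤ ((k - 1 : ℕ) : ℕ∞)) ∧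
      (∀ A ∈ 𝒜, ∃ 𝒮 ⊆ 𝒬, ⋃₀ 𝒮 = A) := by
  have hunion : ∀ A ∈ 𝒜, ∀ B ∈ 𝒜, A ∪ B ∈ 𝒜 := fun A hA B hB => by
    simpa [compl_inter] using hcompl _ (hinter _ (hcompl A hA) _ (hcompl B hB))
  set r := separationSetoid 𝒜
  refine ⟨r.classes, Setoid.empty_notMem_classes, (Setoid.isPartition_classes r).pairwiseDisjoint,
    (Setoid.isPartition_classes r).sUnion_eq_univ, fun 𝒮 h𝒮 => ?_, fun A hA => ?_⟩
  · refine hlim.sUnion_sInter_le hsym hempty hcompl hunion hord fun S hS => ?_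
    obtain ⟨y, rfl⟩ := h𝒮 hS
    exact ⟨_, sep_subset _ _, (separationSetoid_class_eq_sInter hcompl y).symm⟩
  · exact ⟨_, sep_subset _ _, r.sUnion_classes_subset_eq fun x y hxy =>
      (separationSetoid_iff.1 hxy A hA).2⟩

/-- If `𝒜 ⊆ 2^E` contains `∅`, is closed under complements and binary intersections, and all its
members have connectivity at most `k - 1`, then there is a partition of `E` such that every union
of partition classes has connectivity at most `k - 1` and every member of `𝒜` is a union of
partition classes. -/
theorem stmt10 {E : Type*} (lam : Set E → ℕ∞)
    (hsym : SymmFn lam) (hsub : SubmodularFn lam) (hlim : LimitClosedFn lam)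
    (k : ℕ) (hk : 1 ≤ k) (𝒜 : Set (Set E)) (hempty : ∅ ∈ 𝒜)
    (hcompl : ∀ A ∈ 𝒜, Aᶜ ∈ 𝒜) (hinter : ∀ A ∈ 𝒜, ∀ B ∈ 𝒜, A ∩ B ∈ 𝒜)
    (hord : ∀ A ∈ 𝒜, lam A ≤ ((k - 1 : ℕ) : ℕ∞)) :
    ∃ 𝒬 : Set (Set E), (∅ ∉ 𝒬) ∧ 𝒬.PairwiseDisjoint id ∧ ⋃₀ 𝒬 = univ ∧
      (∀ 𝒮 ⊆ 𝒬, lam (⋃₀ 𝒮) ≤ ((k - 1 : ℕ) : ℕ∞)) ∧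
      (∀ A ∈ 𝒜, ∃ 𝒮 ⊆ 𝒬, ⋃₀ 𝒮 = A) :=
  stmt10_general lam hsym hlim k 𝒜 hempty hcompl hinter hord
end

section
/- Every ≤-chain of k-pseudoflowers of a limit-closed connectivity system has an upper bound, obtained as the common refinement of their partitions with the induced cyclic order. Consequently, every k-pseudoflower extends to a ≤-maximal k-pseudoflower. -/
open Set

/-- A bundled `k`-pseudoflower of the connectivity system `(E, lam)`: a partition of `E` into
nonempty classes (petals), together with a cyclic order on the set of petals, such that every
union of an interval of petals has connectivity at most `k - 1`. -/
structure PFlower (E : Type*) (lam : Set E → ℕ∞) (k : ℕ) where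
  petals : Set (Set E)
  nonempty : ∀ Q ∈ petals, Q.Nonempty
  disj : petals.PairwiseDisjoint id
  covers : ⋃₀ petals = univ
  circ : CircularOrder petals
  small : ∀ J : Set petals, IsCyclicInterval circ J → J.Nonempty → J ≠ univ →
    lam (⋃ p ∈ J, (p : Set E)) ≤ ((k - 1 : ℕ) : ℕ∞)

/-- `Φ ≤ Ψ` iff `Φ` is a concatenation of `Ψ`: every petal of `Ψ` is contained in a petal of
`Φ` and preimages (under the induced map of index sets) of intervals of `Φ` are intervals
of `Ψ`. -/
def PFlower.le {E : Type*} {lam : Set E → ℕ∞} {k : ℕ} (Φ Ψ : PFlower E lam k) : Prop :=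
  ∃ f : Ψ.petals → Φ.petals, (∀ p : Ψ.petals, (p : Set E) ⊆ (f p : Set E)) ∧
    ∀ J : Set Φ.petals, IsCyclicInterval Φ.circ J → IsCyclicInterval Ψ.circ (f ⁻¹' J)


namespace CTool

variable {α : Type*} [CircularOrder α]

theorem tri {a b c : α} (hab : a ≠ b) (hbc : b ≠ c) (hac : a ≠ c) :
    sbtw a b c ∨ sbtw c b a := by
  rcases btw_total a b c with h | h
  · by_cases h' : btw c b a
    · rcases btw_antisymm h h' with h1 | h1 | h1 <;> simp_all
    · exact Or.inl (sbtw_of_btw_not_btw h h')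
  · by_cases h' : btw a b c
    · rcases btw_antisymm h' h with h1 | h1 | h1 <;> simp_all
    · exact Or.inr (sbtw_of_btw_not_btw h h')

theorem sne {a b c : α} (h : sbtw a b c) : a ≠ b ∧ b ≠ c ∧ a ≠ c := by
  refine ⟨?_, ?_, ?_⟩ <;> rintro rfl
  · exact sbtw_irrefl_left h
  · exact sbtw_irrefl_right h
  · exact sbtw_irrefl_left_right h

/-- drop-left rule: from `a b c` and `a c d` conclude `b c d`. -/
theorem ruleD {a b c d : α} (h1 : sbtw a b c) (h2 : sbtw a c d) : sbtw b c d := by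
  have hbc := (sne h1).2.1
  have hcd := (sne h2).2.1
  have hbd : b ≠ d := by
    rintro rfl
    exact (sbtw_asymm h1) h2.cyclic_left
  rcases tri hbc hcd hbd with h | h
  · exact h
  · exfalso
    have h3 : sbtw b d c := h.cyclic_right
    have h4 : sbtw a d c := h1.trans_left h3
    exact (sbtw_asymm h4) h2.cyclic_left

/-- the quadruple pack: a,b,x,d in strict cyclic position. -/
theorem quad {a b x d : α} (h1 : sbtw a b x) (h2 : sbtw x d a) :
    sbtw b x d ∧ sbtw d a b := by
  have hbd : b ≠ d := by
    rintro rfl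
    exact (sbtw_asymm h1) h2
  have hdab : sbtw d a b := by
    have := (h1.cyclic_left).trans_left h2
    exact this.cyclic_left
  have hbxd : sbtw b x d := by
    have := (h2.cyclic_left).trans_left h1
    exact this.cyclic_left
  exact ⟨hbxd, hdab⟩

end CTool

namespace CTool

variable {α : Type*}

theorem itv_singleton (c : CircularOrder α) (u : α) : IsCyclicInterval c {u} := by
  letI := c
  rintro ⟨a, b, x, d, ha, hx, hb, hd, h1, h2⟩
  simp only [mem_singleton_iff] at ha hx
  subst ha; subst hx
  exact sbtw_irrefl_left_right h1

theorem itv_compl (c : CircularOrder α) {J : Set α} (hJ : IsCyclicInterval c J) :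
    IsCyclicInterval c Jᶜ := by
  letI := c
  rintro ⟨a, b, x, d, ha, hx, hb, hd, h1, h2⟩
  simp only [mem_compl_iff, not_not] at ha hx hb hd
  obtain ⟨hbxd, hdab⟩ := quad h1 h2
  exact hJ ⟨b, x, d, a, hb, hd, hx, ha, hbxd, hdab⟩

theorem itv_cIcc (c : CircularOrder α) (u v : α) :
    IsCyclicInterval c {w | btw (self := c.toBtw) u w v} := by
  letI := c
  rintro ⟨p, r, q, s, hp, hq, hr, hs, X, Y⟩
  simp only [mem_setOf_eq] at hp hq hr hs
  by_cases huv : u = v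
  · subst huv; exact hr (btw_refl_left_right u r)
  have hrv : sbtw v r u := sbtw_of_btw_not_btw ((btw_total u r v).resolve_left hr) hr
  have hsv : sbtw v s u := sbtw_of_btw_not_btw ((btw_total u s v).resolve_left hs) hs
  by_cases hpu : p = u
  · subst hpu
    by_cases hqv : q = v
    · subst hqv; exact hr X.btw
    · have squv : sbtw p q v := by
        refine sbtw_of_btw_not_btw hq fun h' => ?_
        rcases btw_antisymm hq h' with h1 | h1 | h1
        · exact (sne X).2.2 h1
        · exact hqv h1
        · exact huv h1.symm
      exact hr (sbtw_trans_right X squv).btw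
  by_cases hpv : p = v
  · subst hpv
    by_cases hqu : q = u
    · subst hqu; exact hs Y.btw
    · have squv : sbtw u q p := by
        refine sbtw_of_btw_not_btw hq fun h' => ?_
        rcases btw_antisymm hq h' with h1 | h1 | h1
        · exact hqu h1.symm
        · exact (sne X).2.2 h1.symm
        · exact huv h1.symm
      exact hs (squv.trans_left Y).btw
  have supv : sbtw u p v := by
    refine sbtw_of_btw_not_btw hp fun h' => ?_
    rcases btw_antisymm hp h' with h1 | h1 | h1
    · exact hpu h1.symm
    · exact hpv h1
    · exact huv h1.symm
  by_cases hqu : q = u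
  · subst hqu
    exact hs (sbtw_trans_right Y supv).btw
  by_cases hqv : q = v
  · subst hqv
    exact hr (supv.trans_left X).btw
  have squv : sbtw u q v := by
    refine sbtw_of_btw_not_btw hq fun h' => ?_
    rcases btw_antisymm hq h' with h1 | h1 | h1
    · exact hqu h1.symm
    · exact hqv h1
    · exact huv h1.symm
  have hpq : p ≠ q := (sne X).2.2
  rcases tri (Ne.symm hpu) hpq (Ne.symm hqu) with h | h
  · exact hr (sbtw_trans_right (h.trans_left X) squv).btw
  · have h' : sbtw u q p := h.cyclic_left.cyclic_left
    exact hs (sbtw_trans_right (h'.trans_left Y) supv).btw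

theorem itv_union (c : CircularOrder α) {A B : Set α} (hA : IsCyclicInterval c A)
    (hB : IsCyclicInterval c B) {t : α} (htA : t ∈ A) (htB : t ∈ B) :
    IsCyclicInterval c (A ∪ B) := by
  letI := c
  have core : ∀ (A B : Set α), IsCyclicInterval c A → IsCyclicInterval c B →
      t ∈ A → t ∈ B → ∀ u w v z : α, u ∈ A → v ∈ B → w ∉ A ∪ B → z ∉ A ∪ B →
      sbtw u w v → sbtw v z u → False := by
    clear hA hB htA htB
    intro A B hA hB htA htB u w v z hu hv hw hz X Z
    have hwA : w ∉ A := fun h => hw (Or.inl h)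
    have hwB : w ∉ B := fun h => hw (Or.inr h)
    have hzA : z ∉ A := fun h => hz (Or.inl h)
    have hzB : z ∉ B := fun h => hz (Or.inr h)
    obtain ⟨hwvz, hzuw⟩ := quad X Z
    by_cases htu : t = u
    · subst htu; exact hB ⟨t, w, v, z, htB, hv, hwB, hzB, X, Z⟩
    by_cases htv : t = v
    · subst htv; exact hA ⟨u, w, t, z, hu, htA, hwA, hzA, X, Z⟩
    have htw : t ≠ w := fun h => hwA (h ▸ htA)
    have htz : t ≠ z := fun h => hzA (h ▸ htA)
    have huv : u ≠ v := (sne X).2.2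
    rcases tri (Ne.symm htu) htv huv with hut | hut
    -- hut : sbtw u t v  or  sbtw v t u
    · rcases tri (Ne.symm htu) htw ((sne X).1) with h2 | h2
      · -- sbtw u t w
        have htwv : sbtw t w v := ruleD h2 X
        have hvzt : sbtw v z t := sbtw_trans_right Z hut.cyclic_left.cyclic_left
        exact hB ⟨t, w, v, z, htB, hv, hwB, hzB, htwv, hvzt⟩
      · -- sbtw w t u
        have huwt : sbtw u w t := h2.cyclic_left.cyclic_left
        have htzu : sbtw t z u := (ruleD Z hut.cyclic_left.cyclic_left).cyclic_left.cyclic_left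
        exact hA ⟨u, w, t, z, hu, htA, hwA, hzA, huwt, htzu⟩
    · rcases tri (sne hut).1 htz (sne Z).1 with h2 | h2
      · -- sbtw v t z
        have htzu : sbtw t z u := ruleD h2 Z
        have huwt : sbtw u w t := sbtw_trans_right X hut.cyclic_left.cyclic_left
        exact hA ⟨u, w, t, z, hu, htA, hwA, hzA, huwt, htzu⟩
      · -- sbtw z t v
        have hvzt : sbtw v z t := h2.cyclic_left.cyclic_left
        have htwv : sbtw t w v := hut.cyclic_left.trans_left X
        exact hB ⟨v, z, t, w, hv, htB, hzB, hwB, hvzt, htwv⟩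
  rintro ⟨u, w, v, z, hu, hv, hw, hz, X, Z⟩
  rcases hu with hu | hu <;> rcases hv with hv | hv
  · exact hA ⟨u, w, v, z, hu, hv, fun h => hw (Or.inl h), fun h => hz (Or.inl h), X, Z⟩
  · exact core A B hA hB htA htB u w v z hu hv hw hz X Z
  · exact core B A hB hA htB htA u w v z hu hv (fun h => hw (h.elim Or.inr Or.inl))
      (fun h => hz (h.elim Or.inr Or.inl)) X Z
  · exact hB ⟨u, w, v, z, hu, hv, fun h => hw (Or.inr h), fun h => hz (Or.inr h), X, Z⟩

end CTool

namespace CTool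

variable {α : Type*}

/-- The orientation-reversed circular order. -/
def flipCO (c : CircularOrder α) : CircularOrder α :=
  letI := c
  { btw := fun a b x => btw x b a
    sbtw := fun a b x => sbtw x b a
    btw_refl := fun a => btw_rfl
    btw_cyclic_left := fun {a b x} h => h.cyclic_left.cyclic_left
    sbtw_iff_btw_not_btw := fun {a b x} => sbtw_iff_btw_not_btw
    sbtw_trans_left := fun {a b x d} h1 h2 => sbtw_trans_right h2 h1
    btw_antisymm := fun {a b x} h1 h2 => by
      rcases btw_antisymm h1 h2 with h | h | h
      · exact Or.inr (Or.inl h.symm)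
      · exact Or.inl h.symm
      · exact Or.inr (Or.inr h.symm)
    btw_total := fun a b x => btw_total x b a }

theorem itv_flip (c : CircularOrder α) {J : Set α} (hJ : IsCyclicInterval c J) :
    IsCyclicInterval (flipCO c) J := by
  rintro ⟨a, b, x, d, ha, hx, hb, hd, h1, h2⟩
  exact hJ ⟨x, b, a, d, hx, ha, hb, hd, h1, h2⟩

theorem threeChordCore (c : CircularOrder α) {J K2 K3 : Set α}
    (hJ : IsCyclicInterval c J) (hK2 : IsCyclicInterval c K2) (hK3 : IsCyclicInterval c K3)
    {a1 b1 a2 b2 a3 b3 : α}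
    (ha2 : a2 ∈ K2) (hb2 : b2 ∈ K2) (ha3 : a3 ∈ K3) (hb3 : b3 ∈ K3)
    (ha2K3 : a2 ∉ K3) (ha3K2 : a3 ∉ K2)
    (hb1K2 : b1 ∉ K2) (hb1K3 : b1 ∉ K3)
    (ha1J : a1 ∈ J) (ha2J : a2 ∈ J) (ha3J : a3 ∈ J)
    (hb1J : b1 ∉ J) (hb2J : b2 ∉ J) (hb3J : b3 ∉ J)
    (sa2 : c.sbtw a1 a2 b1) (sb2 : c.sbtw a1 b2 b1)
    (sa3 : c.sbtw a1 a3 b1) (sb3 : c.sbtw a1 b3 b1) : False := by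
  letI := c
  -- If y ∉ J is strictly before x ∈ J inside the arc, J is violated.
  have key : ∀ x y : α, x ∈ J → y ∉ J → sbtw a1 x b1 → sbtw a1 y b1 → x ≠ y →
      sbtw a1 x y := by
    intro x y hxJ hyJ hx hy hxy
    rcases tri (sne hy).1 hxy.symm (sne hx).1 with h | h
    · exact absurd ⟨a1, y, x, b1, ha1J, hxJ, hyJ, hb1J, h, hx.cyclic_left⟩ hJ
    · exact h.cyclic_left.cyclic_left
  have ha2b2 : a2 ≠ b2 := fun h => hb2J (h ▸ ha2J)
  have ha2b3 : a2 ≠ b3 := fun h => hb3J (h ▸ ha2J)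
  have ha3b2 : a3 ≠ b2 := fun h => hb2J (h ▸ ha3J)
  have ha3b3 : a3 ≠ b3 := fun h => hb3J (h ▸ ha3J)
  have s22 : sbtw a1 a2 b2 := key _ _ ha2J hb2J sa2 sb2 ha2b2
  have s23 : sbtw a1 a2 b3 := key _ _ ha2J hb3J sa2 sb3 ha2b3
  have s32 : sbtw a1 a3 b2 := key _ _ ha3J hb2J sa3 sb2 ha3b2
  have s33 : sbtw a1 a3 b3 := key _ _ ha3J hb3J sa3 sb3 ha3b3
  have ha23 : a2 ≠ a3 := fun h => ha2K3 (h ▸ ha3)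
  rcases tri (sne sa2).1 ha23 (sne sa3).1 with h | h
  · -- order a1 a2 a3 : violate K2 via (a2, a3, b2, b1)
    have p1 : sbtw a2 a3 b2 := ruleD h s32
    have p2 : sbtw b2 b1 a2 :=
      sbtw_trans_right sb2.cyclic_left s22.cyclic_left.cyclic_left
    exact hK2 ⟨a2, a3, b2, b1, ha2, hb2, ha3K2, hb1K2, p1, p2⟩
  · -- order a1 a3 a2 : violate K3 via (a3, a2, b3, b1)
    have h' : sbtw a1 a3 a2 := h.cyclic_left.cyclic_left
    have p1 : sbtw a3 a2 b3 := ruleD h' s23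
    have p2 : sbtw b3 b1 a3 :=
      sbtw_trans_right sb3.cyclic_left s33.cyclic_left.cyclic_left
    exact hK3 ⟨a3, a2, b3, b1, ha3, hb3, ha2K3, hb1K3, p1, p2⟩

theorem threeChord (c : CircularOrder α) {J K1 K2 K3 : Set α}
    (hJ : IsCyclicInterval c J)
    (hK1 : IsCyclicInterval c K1) (hK2 : IsCyclicInterval c K2) (hK3 : IsCyclicInterval c K3)
    {a1 b1 a2 b2 a3 b3 : α}
    (ha1 : a1 ∈ K1) (hb1 : b1 ∈ K1) (ha2 : a2 ∈ K2) (hb2 : b2 ∈ K2)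
    (ha3 : a3 ∈ K3) (hb3 : b3 ∈ K3)
    (hd12 : ∀ x, x ∈ K1 → x ∈ K2 → False) (hd13 : ∀ x, x ∈ K1 → x ∈ K3 → False)
    (hd23 : ∀ x, x ∈ K2 → x ∈ K3 → False)
    (ha1J : a1 ∈ J) (ha2J : a2 ∈ J) (ha3J : a3 ∈ J)
    (hb1J : b1 ∉ J) (hb2J : b2 ∉ J) (hb3J : b3 ∉ J) : False := by
  letI := c
  have ha1b1 : a1 ≠ b1 := fun h => hb1J (h ▸ ha1J)
  have htri : ∀ z, z ∉ K1 → sbtw a1 z b1 ∨ sbtw b1 z a1 := by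
    intro z hz
    have h1 : z ≠ a1 := fun h => hz (h ▸ ha1)
    have h2 : z ≠ b1 := fun h => hz (h ▸ hb1)
    exact tri h1.symm h2 ha1b1
  have na2 : a2 ∉ K1 := fun h => hd12 a2 h ha2
  have nb2 : b2 ∉ K1 := fun h => hd12 b2 h hb2
  have na3 : a3 ∉ K1 := fun h => hd13 a3 h ha3
  have nb3 : b3 ∉ K1 := fun h => hd13 b3 h hb3
  have mixed : ∀ z w, z ∉ K1 → w ∉ K1 → sbtw a1 z b1 → sbtw b1 w a1 → False := by
    intro z w hz hw h1 h2
    exact hK1 ⟨a1, z, b1, w, ha1, hb1, hz, hw, h1, h2⟩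
  by_cases hex : ∃ z, z ∉ K1 ∧ sbtw b1 z a1
  · obtain ⟨z, hz, hzs⟩ := hex
    have hone : ∀ w, w ∉ K1 → sbtw b1 w a1 := by
      intro w hw
      rcases htri w hw with h | h
      · exact (mixed w z hw hz h hzs).elim
      · exact h
    exact threeChordCore (flipCO c) (itv_flip c hJ) (itv_flip c hK2) (itv_flip c hK3)
      ha2 hb2 ha3 hb3
      (fun h => hd23 a2 ha2 h) (fun h => hd23 a3 h ha3)
      (fun h => hd12 b1 hb1 h) (fun h => hd13 b1 hb1 h)
      ha1J ha2J ha3J hb1J hb2J hb3J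
      (hone a2 na2) (hone b2 nb2) (hone a3 na3) (hone b3 nb3)
  · push_neg at hex
    have hone : ∀ w, w ∉ K1 → sbtw a1 w b1 := by
      intro w hw
      exact (htri w hw).resolve_right (hex w hw)
    exact threeChordCore c hJ hK2 hK3 ha2 hb2 ha3 hb3
      (fun h => hd23 a2 ha2 h) (fun h => hd23 a3 h ha3)
      (fun h => hd12 b1 hb1 h) (fun h => hd13 b1 hb1 h)
      ha1J ha2J ha3J hb1J hb2J hb3J
      (hone a2 na2) (hone b2 nb2) (hone a3 na3) (hone b3 nb3)

end CTool


namespace Flow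

variable {E : Type*} {lam : Set E → ℕ∞} {k : ℕ}

theorem le_refl (Φ : PFlower E lam k) : Φ.le Φ :=
  ⟨id, fun _ => subset_rfl, fun J hJ => by simpa using hJ⟩

theorem le_trans {Φ Ψ X : PFlower E lam k} (h1 : Φ.le Ψ) (h2 : Ψ.le X) : Φ.le X := by
  obtain ⟨f, hf1, hf2⟩ := h1
  obtain ⟨g, hg1, hg2⟩ := h2
  exact ⟨f ∘ g, fun p => (hg1 p).trans (hf1 (g p)),
    fun J hJ => by simpa [Set.preimage_comp] using hg2 _ (hf2 J hJ)⟩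

/-! ### partition basics -/

theorem petalOfEx (Φ : PFlower E lam k) (x : E) : ∃ t ∈ Φ.petals, x ∈ t :=
  mem_sUnion.mp (by rw [Φ.covers]; exact Set.mem_univ x)

noncomputable def petalOf (Φ : PFlower E lam k) (x : E) : Φ.petals :=
  ⟨(petalOfEx Φ x).choose, (petalOfEx Φ x).choose_spec.1⟩

theorem mem_petalOf (Φ : PFlower E lam k) (x : E) : x ∈ (petalOf Φ x : Set E) :=
  (petalOfEx Φ x).choose_spec.2

theorem petal_unique {Φ : PFlower E lam k} {u v : Set E} (hu : u ∈ Φ.petals)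
    (hv : v ∈ Φ.petals) {x : E} (hxu : x ∈ u) (hxv : x ∈ v) : u = v := by
  by_contra h
  exact Set.disjoint_left.mp (Φ.disj hu hv h) hxu hxv

theorem petalOf_eq {Φ : PFlower E lam k} {u : Set E} (hu : u ∈ Φ.petals) {x : E}
    (hx : x ∈ u) : petalOf Φ x = ⟨u, hu⟩ :=
  Subtype.ext (petal_unique (petalOf Φ x).2 hu (mem_petalOf Φ x) hx)

theorem petalOf_eq' {Φ : PFlower E lam k} (u : Φ.petals) {x : E}
    (hx : x ∈ (u : Set E)) : petalOf Φ x = u := petalOf_eq u.2 hx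

theorem map_petalOf {Φ Ψ : PFlower E lam k} {f : Ψ.petals → Φ.petals}
    (hf : ∀ p : Ψ.petals, (p : Set E) ⊆ (f p : Set E)) (x : E) :
    f (petalOf Ψ x) = petalOf Φ x :=
  (petalOf_eq' _ (hf _ (mem_petalOf Ψ x))).symm

/-! ### the common refinement -/

variable (C : Set (PFlower E lam k))

def cls (x : E) : Set E := {y | ∀ Φ ∈ C, petalOf Φ y = petalOf Φ x}

theorem mem_cls_self (x : E) : x ∈ cls C x := fun _ _ => rfl

theorem cls_eq {x y : E} (h : y ∈ cls C x) : cls C y = cls C x := by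
  ext z
  constructor <;> intro hz Φ hΦ
  · exact (hz Φ hΦ).trans (h Φ hΦ)
  · exact (hz Φ hΦ).trans (h Φ hΦ).symm

/-- the petals of the refinement -/
def P : Set (Set E) := Set.range (cls C)

noncomputable def rep (p : ↥(P C)) : E := p.2.choose

theorem cls_rep (p : ↥(P C)) : cls C (rep C p) = (p : Set E) := p.2.choose_spec

theorem mem_rep (p : ↥(P C)) : rep C p ∈ (p : Set E) := by
  rw [← cls_rep]; exact mem_cls_self C _

theorem mem_p_iff {p : ↥(P C)} {y : E} :
    y ∈ (p : Set E) ↔ ∀ Φ ∈ C, petalOf Φ y = petalOf Φ (rep C p) := by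
  rw [← cls_rep]; exact Iff.rfl

/-- the induced map to the petals of a flower in the chain -/
noncomputable def gm (Φ : PFlower E lam k) (p : ↥(P C)) : Φ.petals :=
  petalOf Φ (rep C p)

theorem gm_eq {Φ : PFlower E lam k} (hΦ : Φ ∈ C) {p : ↥(P C)} {x : E}
    (hx : x ∈ (p : Set E)) : gm C Φ p = petalOf Φ x :=
  ((mem_p_iff C).mp hx Φ hΦ).symm

theorem subset_gm {Φ : PFlower E lam k} (hΦ : Φ ∈ C) (p : ↥(P C)) :
    (p : Set E) ⊆ (gm C Φ p : Set E) := by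
  intro y hy
  rw [gm_eq C hΦ hy]
  exact mem_petalOf Φ y

noncomputable def cpt (x : E) : ↥(P C) := ⟨cls C x, mem_range_self x⟩

theorem mem_cpt (x : E) : x ∈ (cpt C x : Set E) := mem_cls_self C x

theorem gm_cpt {Φ : PFlower E lam k} (hΦ : Φ ∈ C) (x : E) :
    gm C Φ (cpt C x) = petalOf Φ x := gm_eq C hΦ (mem_cls_self C x)

theorem cpt_eq_of_mem {p : ↥(P C)} {x : E} (hx : x ∈ (p : Set E)) : cpt C x = p := by
  refine Subtype.ext ?_
  show cls C x = (p : Set E)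
  rw [← cls_rep C p]
  exact cls_eq C ((mem_p_iff C).mp hx)

theorem eq_of_gm {p q : ↥(P C)} (h : ∀ Φ ∈ C, gm C Φ p = gm C Φ q) : p = q := by
  have : rep C p ∈ (q : Set E) := by
    rw [mem_p_iff]
    intro Φ hΦ
    have := h Φ hΦ
    unfold gm at this
    rw [this]
  exact ((cpt_eq_of_mem C this).symm.trans (cpt_eq_of_mem C (mem_rep C p))).symm

theorem gm_mono {Φ Ψ : PFlower E lam k} (h : Φ.le Ψ) {p q : ↥(P C)}
    (hpq : gm C Ψ p = gm C Ψ q) : gm C Φ p = gm C Φ q := by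
  obtain ⟨f, hf1, -⟩ := h
  have e1 : f (gm C Ψ p) = gm C Φ p := map_petalOf hf1 (rep C p)
  have e2 : f (gm C Ψ q) = gm C Φ q := map_petalOf hf1 (rep C q)
  rw [← e1, ← e2, hpq]

/-! ### chain facts -/

theorem chain_tot (hC : IsChain PFlower.le C) (a b : ↥C) : a.val.le b.val ∨ b.val.le a.val := by
  by_cases h : a.val = b.val
  · rw [h]; exact Or.inl (le_refl _)
  · exact hC a.2 b.2 h

theorem chain_ub2 (hC : IsChain PFlower.le C) (a b : ↥C) : ∃ c : ↥C, a.val.le c.val ∧ b.val.le c.val := by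
  rcases chain_tot C hC a b with h | h
  · exact ⟨b, h, le_refl _⟩
  · exact ⟨a, le_refl _, h⟩

theorem chain_ub3 (hC : IsChain PFlower.le C) (a b c : ↥C) :
    ∃ d : ↥C, a.val.le d.val ∧ b.val.le d.val ∧ c.val.le d.val := by
  obtain ⟨d, hd1, hd2⟩ := chain_ub2 C hC a b
  obtain ⟨e, he1, he2⟩ := chain_ub2 C hC d c
  exact ⟨e, le_trans hd1 he1, le_trans hd2 he1, he2⟩

theorem exists_ultra (hC : IsChain PFlower.le C) (hne : C.Nonempty) :
    ∃ U : Ultrafilter ↥C, ∀ a : ↥C, {b : ↥C | a.val.le b.val} ∈ U := by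
  haveI : Nonempty ↥C := nonempty_subtype.mpr hne
  set F : Filter ↥C := ⨅ a : ↥C, Filter.principal {b | a.val.le b.val} with hF
  haveI : F.NeBot := by
    refine Filter.iInf_neBot_of_directed ?_ ?_
    · intro a b
      obtain ⟨c, hc1, hc2⟩ := chain_ub2 C hC a b
      refine ⟨c, ?_, ?_⟩
      · exact Filter.principal_mono.mpr (fun y hy => le_trans hc1 hy)
      · exact Filter.principal_mono.mpr (fun y hy => le_trans hc2 hy)
    · intro a
      exact Filter.principal_neBot_iff.mpr ⟨a, le_refl _⟩
  refine ⟨Ultrafilter.of F, fun a => ?_⟩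
  exact (Ultrafilter.of_le F) (Filter.mem_iInf_of_mem a (Filter.mem_principal_self _))

end Flow


namespace Flow

variable {E : Type*} {lam : Set E → ℕ∞} {k : ℕ}
variable (C : Set (PFlower E lam k))

/-- pointwise betweenness of refinement petals, seen inside a flower of the chain -/
def bt (Φc : ↥C) (p q r : ↥(P C)) : Prop :=
  (Φc.val.circ).btw (gm C Φc.val p) (gm C Φc.val q) (gm C Φc.val r)

/-- pointwise strict betweenness -/
def sb (Φc : ↥C) (p q r : ↥(P C)) : Prop :=
  (Φc.val.circ).sbtw (gm C Φc.val p) (gm C Φc.val q) (gm C Φc.val r)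

theorem sb_iff (Φc : ↥C) (p q r : ↥(P C)) :
    sb C Φc p q r ↔ bt C Φc p q r ∧ ¬ bt C Φc r q p := by
  letI := Φc.val.circ
  exact sbtw_iff_btw_not_btw

variable (hC : IsChain PFlower.le C) (U : Ultrafilter ↥C)

theorem sep_upward {p q : ↥(P C)} (hpq : p ≠ q) (hC : IsChain PFlower.le C)
    (U : Ultrafilter ↥C) (hU : ∀ a : ↥C, {b : ↥C | a.val.le b.val} ∈ U) :
    {Φc : ↥C | gm C Φc.val p ≠ gm C Φc.val q} ∈ U := by
  have hex : ∃ Φc : ↥C, gm C Φc.val p ≠ gm C Φc.val q := by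
    by_contra h
    push_neg at h
    exact hpq (eq_of_gm C (fun Φ hΦ => h ⟨Φ, hΦ⟩))
  obtain ⟨a, ha⟩ := hex
  refine Filter.mem_of_superset (hU a) (fun b hb => ?_)
  exact fun h => ha (gm_mono C hb h)

/-- The circular order on the common refinement, via the ultrafilter. -/
def circPsi (U : Ultrafilter ↥C) (hC : IsChain PFlower.le C)
    (hU : ∀ a : ↥C, {b : ↥C | a.val.le b.val} ∈ U) : CircularOrder ↥(P C) where
  btw p q r := {Φc | bt C Φc p q r} ∈ U
  sbtw p q r := ({Φc | bt C Φc p q r} ∈ U) ∧ ¬ ({Φc | bt C Φc r q p} ∈ U)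
  btw_refl p := Filter.mem_of_superset Filter.univ_mem
    (fun Φc _ => by letI := Φc.val.circ; exact btw_rfl)
  btw_cyclic_left {p q r} h := Filter.mem_of_superset h
    (fun Φc hh => by
      letI := Φc.val.circ
      exact Btw.btw.cyclic_left hh)
  sbtw_iff_btw_not_btw {p q r} := Iff.rfl
  sbtw_trans_left {p q r s} h1 h2 := by
    have m1 : {Φc : ↥C | sb C Φc p q r} ∈ U := by
      have := Filter.inter_mem h1.1 ((Ultrafilter.compl_mem_iff_notMem).mpr h1.2)
      exact Filter.mem_of_superset this (fun Φc hh => (sb_iff C Φc _ _ _).mpr ⟨hh.1, hh.2⟩)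
    have m2 : {Φc : ↥C | sb C Φc q s r} ∈ U := by
      have := Filter.inter_mem h2.1 ((Ultrafilter.compl_mem_iff_notMem).mpr h2.2)
      exact Filter.mem_of_superset this (fun Φc hh => (sb_iff C Φc _ _ _).mpr ⟨hh.1, hh.2⟩)
    have m3 : {Φc : ↥C | sb C Φc p s r} ∈ U := by
      refine Filter.mem_of_superset (Filter.inter_mem m1 m2) (fun Φc hh => ?_)
      letI := Φc.val.circ
      exact SBtw.sbtw.trans_left hh.1 hh.2
    constructor
    · exact Filter.mem_of_superset m3 (fun Φc hh => ((sb_iff C Φc _ _ _).mp hh).1)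
    · intro hmem
      obtain ⟨Φc, h3, h4⟩ := Ultrafilter.nonempty_of_mem (Filter.inter_mem m3 hmem)
      exact ((sb_iff C Φc _ _ _).mp h3).2 h4
  btw_antisymm {p q r} h1 h2 := by
    have key : {Φc : ↥C | gm C Φc.val p = gm C Φc.val q} ∪
        ({Φc : ↥C | gm C Φc.val q = gm C Φc.val r} ∪
         {Φc : ↥C | gm C Φc.val r = gm C Φc.val p}) ∈ U := by
      refine Filter.mem_of_superset (Filter.inter_mem h1 h2) (fun Φc hh => ?_)
      letI := Φc.val.circ
      rcases btw_antisymm hh.1 hh.2 with h | h | h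
      · exact Or.inl h
      · exact Or.inr (Or.inl h)
      · exact Or.inr (Or.inr h)
    have final : ∀ p q : ↥(P C), {Φc : ↥C | gm C Φc.val p = gm C Φc.val q} ∈ U → p = q := by
      intro p q hmem
      by_contra hpq
      obtain ⟨Φc, hh1, hh2⟩ := Ultrafilter.nonempty_of_mem
        (Filter.inter_mem hmem (sep_upward C hpq hC U hU))
      exact hh2 hh1
    rcases (Ultrafilter.union_mem_iff.mp key) with h | h
    · exact Or.inl (final p q h)
    rcases (Ultrafilter.union_mem_iff.mp h) with h | h
    · exact Or.inr (Or.inl (final q r h))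
    · exact Or.inr (Or.inr (final r p h))
  btw_total p q r := by
    by_cases h : {Φc : ↥C | bt C Φc p q r} ∈ U
    · exact Or.inl h
    · refine Or.inr (Filter.mem_of_superset ((Ultrafilter.compl_mem_iff_notMem).mpr h)
        (fun Φc hh => ?_))
      letI := Φc.val.circ
      exact (btw_total _ _ _).resolve_left hh

variable (hU : ∀ a : ↥C, {b : ↥C | a.val.le b.val} ∈ U)

theorem sbtwPsi_iff {p q r : ↥(P C)} :
    (circPsi C U hC hU).sbtw p q r ↔ {Φc : ↥C | sb C Φc p q r} ∈ U := by
  constructor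
  · rintro ⟨h1, h2⟩
    have := Filter.inter_mem h1 ((Ultrafilter.compl_mem_iff_notMem).mpr h2)
    exact Filter.mem_of_superset this (fun Φc hh => (sb_iff C Φc _ _ _).mpr ⟨hh.1, hh.2⟩)
  · intro h
    refine ⟨Filter.mem_of_superset h (fun Φc hh => ((sb_iff C Φc _ _ _).mp hh).1), ?_⟩
    intro hmem
    obtain ⟨Φc, h3, h4⟩ := Ultrafilter.nonempty_of_mem (Filter.inter_mem h hmem)
    exact ((sb_iff C Φc _ _ _).mp h3).2 h4

/-- preimages of intervals of flowers of the chain are intervals of the refinement -/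
theorem pull (Φc : ↥C) {J : Set (Φc.val.petals)} (hJ : IsCyclicInterval Φc.val.circ J) :
    IsCyclicInterval (circPsi C U hC hU) ((fun p => gm C Φc.val p) ⁻¹' J) := by
  rintro ⟨a, b, x, d, ha, hx, hb, hd, h1, h2⟩
  rw [sbtwPsi_iff] at h1 h2
  obtain ⟨Ψc, hh⟩ := Ultrafilter.nonempty_of_mem
    (Filter.inter_mem (Filter.inter_mem h1 h2) (hU Φc))
  obtain ⟨⟨hs1, hs2⟩, hle⟩ := hh
  obtain ⟨f, hf1, hf2⟩ := (hle : Φc.val.le Ψc.val)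
  have cohe : ∀ p : ↥(P C), f (gm C Ψc.val p) = gm C Φc.val p :=
    fun p => map_petalOf hf1 (rep C p)
  refine hf2 J hJ ⟨gm C Ψc.val a, gm C Ψc.val b, gm C Ψc.val x, gm C Ψc.val d, ?_, ?_, ?_, ?_, hs1, hs2⟩
  · show f _ ∈ J; rw [cohe]; exact ha
  · show f _ ∈ J; rw [cohe]; exact hx
  · show f _ ∉ J; rw [cohe]; exact hb
  · show f _ ∉ J; rw [cohe]; exact hd

end Flow

namespace Flow

variable {E : Type*} {lam : Set E → ℕ∞} {k : ℕ}
variable (C : Set (PFlower E lam k)) (hC : IsChain PFlower.le C) (U : Ultrafilter ↥C)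
  (hU : ∀ a : ↥C, {b : ↥C | a.val.le b.val} ∈ U)

theorem keyQuad {J' : Set ↥(P C)} (hJ' : IsCyclicInterval (circPsi C U hC hU) J')
    (Φc : ↥C) {c1 c2 c3 c4 : ↥(P C)}
    (m1 : c1 ∈ J') (m3 : c3 ∈ J') (m2 : c2 ∉ J') (m4 : c4 ∉ J')
    (hs1 : sb C Φc c1 c2 c3) (hs2 : sb C Φc c3 c4 c1) : False := by
  letI co := circPsi C U hC hU
  letI := Φc.val.circ
  set u1 := gm C Φc.val c1 with hu1
  set u2 := gm C Φc.val c2 with hu2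
  set u3 := gm C Φc.val c3 with hu3
  set u4 := gm C Φc.val c4 with hu4
  have S1 : sbtw u1 u2 u3 := hs1
  have S2 : sbtw u3 u4 u1 := hs2
  obtain ⟨S3, S4⟩ := CTool.quad S1 S2
  -- S3 : sbtw u2 u3 u4, S4 : sbtw u4 u1 u2
  have nc : ∀ {ci cj : ↥(P C)}, gm C Φc.val ci ≠ gm C Φc.val cj → ci ≠ cj :=
    fun h hh => h (by rw [hh])
  have d12 : c1 ≠ c2 := nc (CTool.sne S1).1
  have d23 : c2 ≠ c3 := nc (CTool.sne S1).2.1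
  have d13 : c1 ≠ c3 := nc (CTool.sne S1).2.2
  have d34 : c3 ≠ c4 := nc (CTool.sne S2).1
  have d14 : c1 ≠ c4 := nc (Ne.symm (CTool.sne S2).2.1)
  have d24 : c2 ≠ c4 := nc (CTool.sne S3).2.2
  have np1 : ¬ (co.sbtw c1 c2 c3 ∧ co.sbtw c3 c4 c1) :=
    fun ⟨x, y⟩ => hJ' ⟨c1, c2, c3, c4, m1, m3, m2, m4, x, y⟩
  have np2 : ¬ (co.sbtw c1 c4 c3 ∧ co.sbtw c3 c2 c1) :=
    fun ⟨x, y⟩ => hJ' ⟨c1, c4, c3, c2, m1, m3, m4, m2, x, y⟩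
  have hpull : ∀ v w : ↥(Φc.val.petals),
      IsCyclicInterval co ((fun p => gm C Φc.val p) ⁻¹' {z | Φc.val.circ.btw v z w}) := by
    intro v w
    exact pull C hC U hU Φc (CTool.itv_cIcc Φc.val.circ v w)
  rcases CTool.tri d12 d23 d13 with hA | hB
  · have hA2 : co.sbtw c1 c4 c3 := by
      rcases CTool.tri d34 d14.symm d13.symm with h | h
      · exact absurd ⟨hA, h⟩ np1
      · exact h
    rcases CTool.tri d12 d24 d14 with h124 | h421
    · refine hpull u4 u1 ⟨c1, c2, c4, c3, ?_, ?_, ?_, ?_, h124, hA2.cyclic_left⟩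
      · exact btw_rfl_right
      · exact btw_rfl_left
      · exact S4.cyclic_left.not_btw
      · exact S2.cyclic_left.cyclic_left.not_btw
    · have h142 : co.sbtw c1 c4 c2 := h421.cyclic_left.cyclic_left
      refine hpull u1 u2 ⟨c1, c4, c2, c3, ?_, ?_, ?_, ?_, h142, hA.cyclic_left⟩
      · exact btw_rfl_left
      · exact btw_rfl_right
      · exact S4.cyclic_left.cyclic_left.not_btw
      · exact S1.cyclic_left.not_btw
  · have hB2 : co.sbtw c3 c4 c1 := by
      rcases CTool.tri d14 d34.symm d13 with h | h
      · exact absurd ⟨h, hB⟩ np2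
      · exact h
    rcases CTool.tri d23.symm d24 d34 with h324 | h423
    · refine hpull u3 u4 ⟨c3, c2, c4, c1, ?_, ?_, ?_, ?_, h324, hB2.cyclic_left⟩
      · exact btw_rfl_left
      · exact btw_rfl_right
      · exact S3.cyclic_left.cyclic_left.not_btw
      · exact S2.cyclic_left.not_btw
    · have h342 : co.sbtw c3 c4 c2 := h423.cyclic_left.cyclic_left
      refine hpull u2 u3 ⟨c3, c4, c2, c1, ?_, ?_, ?_, ?_, h342, hB.cyclic_left⟩
      · exact btw_rfl_right
      · exact btw_rfl_left
      · exact S3.cyclic_left.not_btw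
      · exact S1.cyclic_left.cyclic_left.not_btw

theorem lemS {J' : Set ↥(P C)} (hJ' : IsCyclicInterval (circPsi C U hC hU) J')
    (Φc : ↥C) {S : Set (Φc.val.petals)}
    (hin : ∀ u ∈ S, ∃ c : ↥(P C), gm C Φc.val c = u ∧ c ∈ J')
    (hout : ∀ u ∉ S, ∃ c : ↥(P C), gm C Φc.val c = u ∧ c ∉ J') :
    IsCyclicInterval Φc.val.circ S := by
  rintro ⟨a, b, x, d, ha, hx, hb, hd, h1, h2⟩
  obtain ⟨c1, e1, m1⟩ := hin a ha
  obtain ⟨c3, e3, m3⟩ := hin x hx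
  obtain ⟨c2, e2, m2⟩ := hout b hb
  obtain ⟨c4, e4, m4⟩ := hout d hd
  have hs1 : sb C Φc c1 c2 c3 := by unfold sb; rw [e1, e2, e3]; exact h1
  have hs2 : sb C Φc c3 c4 c1 := by unfold sb; rw [e1, e3, e4]; exact h2
  exact keyQuad C hC U hU hJ' Φc m1 m3 m2 m4 hs1 hs2

/-- boundary class of an interval of the refinement -/
def Bd (J' : Set ↥(P C)) (r : ↥(P C)) : Prop :=
  ∀ Φc : ↥C, (∃ c, gm C Φc.val c = gm C Φc.val r ∧ c ∈ J') ∧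
    (∃ c, gm C Φc.val c = gm C Φc.val r ∧ c ∉ J')

theorem bd_compl {J' : Set ↥(P C)} {r : ↥(P C)} (h : Bd C J' r) : Bd C J'ᶜ r := by
  intro Φc
  obtain ⟨⟨c, hc1, hc2⟩, ⟨c', hc'1, hc'2⟩⟩ := h Φc
  exact ⟨⟨c', hc'1, hc'2⟩, ⟨c, hc1, fun hh => hh hc2⟩⟩

theorem bd3 {J' : Set ↥(P C)} (hJ' : IsCyclicInterval (circPsi C U hC hU) J')
    {r1 r2 r3 : ↥(P C)} (h12 : r1 ≠ r2) (h13 : r1 ≠ r3) (h23 : r2 ≠ r3)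
    (b1 : Bd C J' r1) (b2 : Bd C J' r2) (b3 : Bd C J' r3) : False := by
  have sep : ∀ {p q : ↥(P C)}, p ≠ q → ∃ Φc : ↥C, gm C Φc.val p ≠ gm C Φc.val q := by
    intro p q h
    by_contra hcon
    push_neg at hcon
    exact h (eq_of_gm C (fun Φ hΦ => hcon ⟨Φ, hΦ⟩))
  obtain ⟨A12, e12⟩ := sep h12
  obtain ⟨A13, e13⟩ := sep h13
  obtain ⟨A23, e23⟩ := sep h23
  obtain ⟨D, hD1, hD2, hD3⟩ := chain_ub3 C hC A12 A13 A23
  have f12 : gm C D.val r1 ≠ gm C D.val r2 := fun h => e12 (gm_mono C hD1 h)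
  have f13 : gm C D.val r1 ≠ gm C D.val r3 := fun h => e13 (gm_mono C hD2 h)
  have f23 : gm C D.val r2 ≠ gm C D.val r3 := fun h => e23 (gm_mono C hD3 h)
  have hK : ∀ r : ↥(P C), IsCyclicInterval (circPsi C U hC hU)
      ((fun p => gm C D.val p) ⁻¹' {gm C D.val r}) :=
    fun r => pull C hC U hU D (CTool.itv_singleton D.val.circ (gm C D.val r))
  obtain ⟨⟨a1, ea1, ma1⟩, ⟨b1, eb1, mb1⟩⟩ := b1 D
  obtain ⟨⟨a2, ea2, ma2⟩, ⟨b2, eb2, mb2⟩⟩ := b2 D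
  obtain ⟨⟨a3, ea3, ma3⟩, ⟨b3, eb3, mb3⟩⟩ := b3 D
  have memK : ∀ (x r : ↥(P C)), gm C D.val x = gm C D.val r ↔
      x ∈ (fun p => gm C D.val p) ⁻¹' {gm C D.val r} := by
    intro x r
    simp [mem_preimage, mem_singleton_iff]
  refine CTool.threeChord (circPsi C U hC hU) hJ' (hK r1) (hK r2) (hK r3)
    ((memK a1 r1).mp ea1) ((memK b1 r1).mp eb1) ((memK a2 r2).mp ea2) ((memK b2 r2).mp eb2)
    ((memK a3 r3).mp ea3) ((memK b3 r3).mp eb3)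
    ?_ ?_ ?_ ma1 ma2 ma3 mb1 mb2 mb3
  · intro x hx1 hx2
    exact f12 (((memK x r1).mpr hx1).symm.trans ((memK x r2).mpr hx2))
  · intro x hx1 hx2
    exact f13 (((memK x r1).mpr hx1).symm.trans ((memK x r3).mpr hx2))
  · intro x hx1 hx2
    exact f23 (((memK x r2).mpr hx1).symm.trans ((memK x r3).mpr hx2))

end Flow

namespace Flow

variable {E : Type*} {lam : Set E → ℕ∞} {k : ℕ}
variable (C : Set (PFlower E lam k)) (hC : IsChain PFlower.le C) (U : Ultrafilter ↥C)
  (hU : ∀ a : ↥C, {b : ↥C | a.val.le b.val} ∈ U)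

def Itilde (J' : Set ↥(P C)) (Φc : ↥C) : Set (Φc.val.petals) :=
  {u | ∀ c : ↥(P C), gm C Φc.val c = u → c ∈ J'}

def LSet (J' : Set ↥(P C)) (Φc : ↥C) : Set E :=
  ⋃ u ∈ Itilde C J' Φc, (u : Set E)

theorem mem_LSet {J' : Set ↥(P C)} {Φc : ↥C} {x : E} :
    x ∈ LSet C J' Φc ↔ petalOf Φc.val x ∈ Itilde C J' Φc := by
  constructor
  · intro hx
    simp only [LSet, mem_iUnion] at hx
    obtain ⟨u, hu, hxu⟩ := hx
    rwa [petalOf_eq' u hxu]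
  · intro h
    simp only [LSet, mem_iUnion]
    exact ⟨petalOf Φc.val x, h, mem_petalOf _ x⟩

theorem LSet_subset {J' : Set ↥(P C)} {Φc : ↥C} :
    LSet C J' Φc ⊆ ⋃ p ∈ J', (p : Set E) := by
  intro x hx
  have h := (mem_LSet C).mp hx
  have : cpt C x ∈ J' := h (cpt C x) (gm_cpt C Φc.2 x)
  simp only [mem_iUnion]
  exact ⟨cpt C x, this, mem_cpt C x⟩

theorem mem_A_iff {J' : Set ↥(P C)} {x : E} :
    x ∈ ⋃ p ∈ J', (p : Set E) ↔ cpt C x ∈ J' := by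
  simp only [mem_iUnion]
  constructor
  · rintro ⟨p, hp, hxp⟩
    rwa [cpt_eq_of_mem C hxp]
  · intro h
    exact ⟨cpt C x, h, mem_cpt C x⟩

theorem A_compl {J' : Set ↥(P C)} :
    (⋃ p ∈ J'ᶜ, (p : Set E)) = (⋃ p ∈ J', (p : Set E))ᶜ := by
  ext x
  have h1 := mem_A_iff C (J' := J'ᶜ) (x := x)
  have h2 := mem_A_iff C (J' := J') (x := x)
  rw [mem_compl_iff, h1, h2]
  rfl

theorem LSet_mono {J' : Set ↥(P C)} {Φc Φc' : ↥C} (h : Φc.val.le Φc'.val) :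
    LSet C J' Φc ⊆ LSet C J' Φc' := by
  intro x hx
  have h1 := (mem_LSet C).mp hx
  rw [mem_LSet]
  intro c hc
  obtain ⟨f, hf1, -⟩ := h
  apply h1
  have e1 : f (gm C Φc'.val c) = gm C Φc.val c := map_petalOf hf1 (rep C c)
  have e2 : f (petalOf Φc'.val x) = petalOf Φc.val x := map_petalOf hf1 x
  rw [← e1, hc, e2]

theorem Itilde_itv {J' : Set ↥(P C)} (hJ' : IsCyclicInterval (circPsi C U hC hU) J')
    (Φc : ↥C) : IsCyclicInterval Φc.val.circ (Itilde C J' Φc) := by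
  refine lemS C hC U hU hJ' Φc ?_ ?_
  · intro u hu
    obtain ⟨x, hx⟩ := Φc.val.nonempty u.val u.2
    refine ⟨cpt C x, ?_, ?_⟩
    · rw [gm_cpt C Φc.2 x]
      exact petalOf_eq' u hx
    · exact hu _ (by rw [gm_cpt C Φc.2 x]; exact petalOf_eq' u hx)
  · intro u hu
    simp only [Itilde, mem_setOf_eq, not_forall] at hu
    obtain ⟨c, hc1, hc2⟩ := hu
    exact ⟨c, hc1, hc2⟩

theorem Itilde_ne_univ {J' : Set ↥(P C)} {p0 : ↥(P C)} (hp0 : p0 ∉ J') (Φc : ↥C) :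
    Itilde C J' Φc ≠ univ := by
  intro h
  have : gm C Φc.val p0 ∈ Itilde C J' Φc := h ▸ mem_univ _
  exact hp0 (this p0 rfl)

theorem eventually_interior {J' : Set ↥(P C)} {s : ↥(P C)} (hs : s ∈ J')
    (hnb : ¬ Bd C J' s) :
    ∃ Φ0 : ↥C, ∀ Φc : ↥C, Φ0.val.le Φc.val → gm C Φc.val s ∈ Itilde C J' Φc := by
  simp only [Bd, not_forall] at hnb
  obtain ⟨Φ0, hΦ0⟩ := hnb
  have h2 : ∀ c : ↥(P C), gm C Φ0.val c = gm C Φ0.val s → c ∈ J' := by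
    intro c hc
    by_contra hcn
    exact hΦ0 ⟨⟨s, rfl, hs⟩, ⟨c, hc, hcn⟩⟩
  refine ⟨Φ0, fun Φc hle c hc => h2 c (gm_mono C hle hc)⟩

theorem LSet_small {J' : Set ↥(P C)} (hJ' : IsCyclicInterval (circPsi C U hC hU) J')
    (Φc : ↥C) (hne : (Itilde C J' Φc).Nonempty) {p0 : ↥(P C)} (hp0 : p0 ∉ J') :
    lam (LSet C J' Φc) ≤ ((k - 1 : ℕ) : ℕ∞) :=
  Φc.val.small _ (Itilde_itv C hC U hU hJ' Φc) hne (Itilde_ne_univ C hp0 Φc)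

theorem small_noBd (hlim : LimitClosedFn lam) {J' : Set ↥(P C)}
    (hJ' : IsCyclicInterval (circPsi C U hC hU) J')
    (hJne : J'.Nonempty) (hJuniv : J' ≠ univ)
    (hnb : ∀ r ∈ J', ¬ Bd C J' r) :
    lam (⋃ p ∈ J', (p : Set E)) ≤ ((k - 1 : ℕ) : ℕ∞) := by
  obtain ⟨s, hs⟩ := hJne
  obtain ⟨Φ0, hΦ0⟩ := eventually_interior C (hs := hs) (hnb s hs)
  obtain ⟨p0, hp0⟩ := (ne_univ_iff_exists_notMem _).mp hJuniv
  have key := hlim (k - 1) {X | ∃ Φc : ↥C, Φ0.val.le Φc.val ∧ X = LSet C J' Φc}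
    ⟨LSet C J' Φ0, Φ0, le_refl _, rfl⟩
    (by
      rintro X ⟨Φ1, h1, rfl⟩ Y ⟨Φ2, h2, rfl⟩ -
      rcases chain_tot C hC Φ1 Φ2 with h | h
      · exact Or.inl (LSet_mono C h)
      · exact Or.inr (LSet_mono C h))
    (by
      rintro X ⟨Φ1, h1, rfl⟩
      exact LSet_small C hC U hU hJ' Φ1 ⟨gm C Φ1.val s, hΦ0 Φ1 h1⟩ hp0)
  have eqA : ⋃₀ {X | ∃ Φc : ↥C, Φ0.val.le Φc.val ∧ X = LSet C J' Φc} =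
      ⋃ p ∈ J', (p : Set E) := by
    apply Set.Subset.antisymm
    · rintro x ⟨X, ⟨Φ1, h1, rfl⟩, hx⟩
      exact LSet_subset C hx
    · intro x hx
      have hcpt : cpt C x ∈ J' := (mem_A_iff C).mp hx
      obtain ⟨Φ1, hΦ1⟩ := eventually_interior C (hs := hcpt) (hnb _ hcpt)
      obtain ⟨Φ2, h21, h22⟩ := chain_ub2 C hC Φ0 Φ1
      refine ⟨LSet C J' Φ2, ⟨Φ2, h21, rfl⟩, ?_⟩
      rw [mem_LSet, ← gm_cpt C Φ2.2 x]
      exact hΦ1 Φ2 h22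
  rwa [eqA] at key

end Flow

namespace Flow

variable {E : Type*} {lam : Set E → ℕ∞} {k : ℕ}
variable (C : Set (PFlower E lam k)) (hC : IsChain PFlower.le C) (U : Ultrafilter ↥C)
  (hU : ∀ a : ↥C, {b : ↥C | a.val.le b.val} ∈ U)

theorem exists_in_fiber (Φc : ↥C) (u : Φc.val.petals) :
    ∃ c : ↥(P C), gm C Φc.val c = u := by
  obtain ⟨x, hx⟩ := Φc.val.nonempty u.val u.2
  exact ⟨cpt C x, by rw [gm_cpt C Φc.2 x]; exact petalOf_eq' u hx⟩

theorem small_mixed (hsym : SymmFn lam) (hlim : LimitClosedFn lam) {J' : Set ↥(P C)}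
    (hJ' : IsCyclicInterval (circPsi C U hC hU) J')
    {p p' : ↥(P C)} (hpJ : p ∈ J') (hpB : Bd C J' p) (hp'J : p' ∉ J') (hp'B : Bd C J' p') :
    lam (⋃ q ∈ J', (q : Set E)) ≤ ((k - 1 : ℕ) : ℕ∞) := by
  have hpp' : p ≠ p' := fun h => hp'J (h ▸ hpJ)
  have huniq : ∀ r ∈ J', Bd C J' r → r = p := by
    intro r hrJ hrB
    by_contra hrp
    have hrp' : r ≠ p' := fun h => hp'J (h ▸ hrJ)
    exact bd3 C hC U hU hJ' hrp hrp' hpp' hrB hpB hp'B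
  have sep0 : ∃ Φc : ↥C, gm C Φc.val p ≠ gm C Φc.val p' := by
    by_contra h
    push_neg at h
    exact hpp' (eq_of_gm C fun Φ hΦ => h ⟨Φ, hΦ⟩)
  obtain ⟨Φ0, hΦ0⟩ := sep0
  have sepAt : ∀ Φc : ↥C, Φ0.val.le Φc.val → gm C Φc.val p ≠ gm C Φc.val p' :=
    fun Φc hle h => hΦ0 (gm_mono C hle h)
  set Lbig : Set E := ⋃₀ {X | ∃ Φc : ↥C, Φ0.val.le Φc.val ∧ X = LSet C J' Φc} with hLbig
  have LbigA : Lbig ⊆ ⋃ q ∈ J', (q : Set E) := by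
    rintro x ⟨X, ⟨Φ1, h1, rfl⟩, hx⟩
    exact LSet_subset C hx
  have LSet_Lbig : ∀ Φc : ↥C, Φ0.val.le Φc.val → LSet C J' Φc ⊆ Lbig :=
    fun Φc h1 x hx => ⟨LSet C J' Φc, ⟨Φc, h1, rfl⟩, hx⟩
  -- Step 1: for every Φb ≥ Φ0, `Lbig ∪ petal of p at Φb` is small.
  have step1 : ∀ Φb : ↥C, Φ0.val.le Φb.val →
      lam (Lbig ∪ (gm C Φb.val p : Set E)) ≤ ((k - 1 : ℕ) : ℕ∞) := by
    intro Φb hΦb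
    have mem_small : ∀ Φ' : ↥C, Φb.val.le Φ'.val →
        lam (LSet C J' Φ' ∪ (gm C Φb.val p : Set E)) ≤ ((k - 1 : ℕ) : ℕ∞) := by
      intro Φ' hle'
      obtain ⟨f, hf1, hf2⟩ := id hle'
      set M : Set (Φ'.val.petals) :=
        (Itilde C J' Φ' ∪ {gm C Φ'.val p}) ∪ f ⁻¹' {gm C Φb.val p} with hM
      have hcoh : ∀ c : ↥(P C), f (gm C Φ'.val c) = gm C Φb.val c :=
        fun c => map_petalOf hf1 (rep C c)
      have hNp : IsCyclicInterval Φ'.val.circ (Itilde C J' Φ' ∪ {gm C Φ'.val p}) := by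
        refine lemS C hC U hU hJ' Φ' ?_ ?_
        · rintro u (hu | hu)
          · obtain ⟨c, hcu⟩ := exists_in_fiber C Φ' u
            exact ⟨c, hcu, hu c hcu⟩
          · exact ⟨p, (mem_singleton_iff.mp hu).symm, hpJ⟩
        · intro u hu
          have hu1 : u ∉ Itilde C J' Φ' := fun h => hu (Or.inl h)
          simp only [Itilde, mem_setOf_eq, not_forall] at hu1
          obtain ⟨c, hc1, hc2⟩ := hu1
          exact ⟨c, hc1, hc2⟩
      have hfib : IsCyclicInterval Φ'.val.circ (f ⁻¹' {gm C Φb.val p}) :=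
        hf2 _ (CTool.itv_singleton Φb.val.circ _)
      have hMitv : IsCyclicInterval Φ'.val.circ M :=
        CTool.itv_union Φ'.val.circ hNp hfib (t := gm C Φ'.val p)
          (Or.inr rfl) (mem_singleton_iff.mpr (hcoh p))
      have hMne : M.Nonempty := ⟨gm C Φ'.val p, Or.inl (Or.inr rfl)⟩
      have hMuniv : M ≠ univ := by
        intro h
        have hmem : gm C Φ'.val p' ∈ M := h ▸ mem_univ _
        rcases hmem with (h1 | h1) | h1
        · exact hp'J (h1 p' rfl)
        · exact sepAt Φ' (le_trans hΦb hle') (mem_singleton_iff.mp h1).symm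
        · have h2 := mem_singleton_iff.mp h1
          rw [hcoh p'] at h2
          exact sepAt Φb hΦb h2.symm
      have hsmall := Φ'.val.small M hMitv hMne hMuniv
      have hEq : (⋃ u ∈ M, (u : Set E)) = LSet C J' Φ' ∪ (gm C Φb.val p : Set E) := by
        apply Subset.antisymm
        · intro x hx
          simp only [mem_iUnion] at hx
          obtain ⟨u, hu, hxu⟩ := hx
          rcases hu with (h1 | h1) | h1
          · left
            exact (mem_LSet C).mpr (by rw [petalOf_eq' u hxu]; exact h1)
          · right
            rw [mem_singleton_iff] at h1
            subst h1
            have := hf1 (gm C Φ'.val p) hxu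
            rwa [hcoh p] at this
          · right
            have h2 := mem_singleton_iff.mp h1
            have := hf1 u hxu
            rwa [h2] at this
        · rintro x (hx | hx)
          · simp only [mem_iUnion]
            exact ⟨petalOf Φ'.val x, Or.inl (Or.inl ((mem_LSet C).mp hx)), mem_petalOf _ x⟩
          · simp only [mem_iUnion]
            refine ⟨petalOf Φ'.val x, Or.inr ?_, mem_petalOf _ x⟩
            rw [mem_preimage, mem_singleton_iff, map_petalOf hf1 x]
            exact petalOf_eq' _ hx
      rwa [hEq] at hsmall
    have key := hlim (k - 1)
      {X | ∃ Φ' : ↥C, Φb.val.le Φ'.val ∧ X = LSet C J' Φ' ∪ (gm C Φb.val p : Set E)}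
      ⟨_, Φb, le_refl _, rfl⟩
      (by
        rintro X ⟨Φ1, h1, rfl⟩ Y ⟨Φ2, h2, rfl⟩ -
        rcases chain_tot C hC Φ1 Φ2 with h | h
        · exact Or.inl (union_subset_union_left _ (LSet_mono C h))
        · exact Or.inr (union_subset_union_left _ (LSet_mono C h)))
      (by rintro X ⟨Φ1, h1, rfl⟩; exact mem_small Φ1 h1)
    have eqU : ⋃₀ {X | ∃ Φ' : ↥C, Φb.val.le Φ'.val ∧
        X = LSet C J' Φ' ∪ (gm C Φb.val p : Set E)} = Lbig ∪ (gm C Φb.val p : Set E) := by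
      apply Subset.antisymm
      · rintro x ⟨X, ⟨Φ1, h1, rfl⟩, hx⟩
        rcases hx with hx | hx
        · exact Or.inl (LSet_Lbig Φ1 (le_trans hΦb h1) hx)
        · exact Or.inr hx
      · rintro x (hx | hx)
        · obtain ⟨X, ⟨Φ1, h1, rfl⟩, hx⟩ := hx
          obtain ⟨Φ2, h21, h22⟩ := chain_ub2 C hC Φ1 Φb
          exact ⟨_, ⟨Φ2, h22, rfl⟩, Or.inl (LSet_mono C h21 hx)⟩
        · exact ⟨_, ⟨Φb, le_refl _, rfl⟩, Or.inr hx⟩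
    rwa [eqU] at key
  -- Step 2: the complements
  have hIcap : (⋂ Φb ∈ {Φc : ↥C | Φ0.val.le Φc.val}, (Lbig ∪ (gm C Φb.val p : Set E))) =
      ⋃ q ∈ J', (q : Set E) := by
    apply Subset.antisymm
    · intro x hx
      simp only [mem_iInter] at hx
      by_cases hxL : x ∈ Lbig
      · exact LbigA hxL
      · have hxp : ∀ Φb : ↥C, Φ0.val.le Φb.val → x ∈ (gm C Φb.val p : Set E) := by
          intro Φb h1
          rcases hx Φb h1 with h | h
          · exact absurd h hxL
          · exact h
        have hxmem : x ∈ (p : Set E) := by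
          rw [mem_p_iff]
          intro Φ hΦ
          obtain ⟨Φ2, h21, h22⟩ := chain_ub2 C hC ⟨Φ, hΦ⟩ Φ0
          obtain ⟨f, hf1, -⟩ := id h21
          have e1 : petalOf Φ2.val x = gm C Φ2.val p := petalOf_eq' _ (hxp Φ2 h22)
          have e2 : f (petalOf Φ2.val x) = petalOf Φ x := map_petalOf hf1 x
          have e3 : f (gm C Φ2.val p) = gm C ((⟨Φ, hΦ⟩ : ↥C)).val p :=
            map_petalOf hf1 (rep C p)
          rw [← e2, e1, e3]
          rfl
        simp only [mem_iUnion]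
        exact ⟨p, hpJ, hxmem⟩
    · intro x hx
      simp only [mem_iInter]
      intro Φb h1
      have hcpt : cpt C x ∈ J' := (mem_A_iff C).mp hx
      by_cases hB : Bd C J' (cpt C x)
      · have : cpt C x = p := huniq _ hcpt hB
        refine Or.inr ?_
        have hxp : x ∈ (p : Set E) := this ▸ mem_cpt C x
        exact subset_gm C Φb.2 p hxp
      · obtain ⟨Φ1, hΦ1⟩ := eventually_interior C (hs := hcpt) hB
        obtain ⟨Φ2, h21, h22⟩ := chain_ub2 C hC Φ0 Φ1
        refine Or.inl (LSet_Lbig Φ2 h21 ?_)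
        rw [mem_LSet, ← gm_cpt C Φ2.2 x]
        exact hΦ1 Φ2 h22
  have key2 := hlim (k - 1)
    {X | ∃ Φb : ↥C, Φ0.val.le Φb.val ∧ X = (Lbig ∪ (gm C Φb.val p : Set E))ᶜ}
    ⟨_, Φ0, le_refl _, rfl⟩
    (by
      rintro X ⟨Φ1, h1, rfl⟩ Y ⟨Φ2, h2, rfl⟩ -
      have mono : ∀ Φa Φz : ↥C, Φa.val.le Φz.val →
          (Lbig ∪ (gm C Φa.val p : Set E))ᶜ ⊆ (Lbig ∪ (gm C Φz.val p : Set E))ᶜ := by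
        intro Φa Φz hH
        apply compl_subset_compl.mpr
        apply union_subset_union_right
        intro y hy
        obtain ⟨f, hf1, -⟩ := id hH
        have e : f (gm C Φz.val p) = gm C Φa.val p := map_petalOf hf1 (rep C p)
        have := hf1 (gm C Φz.val p) hy
        rwa [e] at this
      rcases chain_tot C hC Φ1 Φ2 with h | h
      · exact Or.inl (mono Φ1 Φ2 h)
      · exact Or.inr (mono Φ2 Φ1 h))
    (by
      rintro X ⟨Φ1, h1, rfl⟩
      rw [hsym]
      exact step1 Φ1 h1)
  have eqU2 : ⋃₀ {X | ∃ Φb : ↥C, Φ0.val.le Φb.val ∧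
      X = (Lbig ∪ (gm C Φb.val p : Set E))ᶜ} = (⋃ q ∈ J', (q : Set E))ᶜ := by
    rw [← hIcap]
    apply Subset.antisymm
    · rintro x ⟨X, ⟨Φ1, h1, rfl⟩, hx⟩
      rw [mem_compl_iff]
      intro hmem
      simp only [mem_iInter] at hmem
      exact hx (hmem Φ1 h1)
    · intro x hx
      rw [mem_compl_iff] at hx
      simp only [mem_iInter] at hx
      push_neg at hx
      obtain ⟨Φ1, h1, h2⟩ := hx
      exact ⟨_, ⟨Φ1, h1, rfl⟩, h2⟩
  rw [eqU2] at key2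
  calc lam (⋃ q ∈ J', (q : Set E)) = lam ((⋃ q ∈ J', (q : Set E))ᶜ) := (hsym _).symm
    _ ≤ _ := key2

theorem small_master (hsym : SymmFn lam) (hlim : LimitClosedFn lam) {J' : Set ↥(P C)}
    (hJ' : IsCyclicInterval (circPsi C U hC hU) J')
    (hJne : J'.Nonempty) (hJuniv : J' ≠ univ) :
    lam (⋃ q ∈ J', (q : Set E)) ≤ ((k - 1 : ℕ) : ℕ∞) := by
  by_cases hbd : ∃ r ∈ J', Bd C J' r
  · by_cases hbd' : ∃ r, r ∉ J' ∧ Bd C J' r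
    · obtain ⟨p, hpJ, hpB⟩ := hbd
      obtain ⟨p', hp'J, hp'B⟩ := hbd'
      exact small_mixed C hC U hU hsym hlim hJ' hpJ hpB hp'J hp'B
    · -- no boundary outside J' : use the complement
      push_neg at hbd'
      have hcompl : lam (⋃ q ∈ J'ᶜ, (q : Set E)) ≤ ((k - 1 : ℕ) : ℕ∞) := by
        refine small_noBd C hC U hU hlim (CTool.itv_compl _ hJ') ?_ ?_ ?_
        · obtain ⟨p0, hp0⟩ := (ne_univ_iff_exists_notMem _).mp hJuniv
          exact ⟨p0, hp0⟩
        · obtain ⟨s, hs⟩ := hJne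
          intro h
          have : s ∈ J'ᶜ := h ▸ mem_univ _
          exact this hs
        · intro r hr hB
          have hB' : Bd C J' r := by
            have := bd_compl C (J' := J'ᶜ) hB
            rwa [compl_compl] at this
          exact hbd' r hr hB'
      rw [A_compl C] at hcompl
      calc lam (⋃ q ∈ J', (q : Set E)) = lam ((⋃ q ∈ J', (q : Set E))ᶜ) := (hsym _).symm
        _ ≤ _ := hcompl
  · push_neg at hbd
    exact small_noBd C hC U hU hlim hJ' hJne hJuniv hbd

end Flow

namespace Flow

variable {E : Type*} {lam : Set E → ℕ∞} {k : ℕ}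

theorem upperBound (hsym : SymmFn lam) (hlim : LimitClosedFn lam)
    (C : Set (PFlower E lam k)) (hC : IsChain PFlower.le C) (hne : C.Nonempty) :
    ∃ Ψ : PFlower E lam k, ∀ Φ ∈ C, PFlower.le Φ Ψ := by
  obtain ⟨U, hU⟩ := exists_ultra C hC hne
  refine ⟨⟨P C, ?_, ?_, ?_, circPsi C U hC hU, ?_⟩, ?_⟩
  · rintro Q ⟨x, rfl⟩
    exact ⟨x, mem_cls_self C x⟩
  · rintro u ⟨x, rfl⟩ v ⟨y, rfl⟩ huv
    refine Set.disjoint_left.mpr (fun z hzx hzy => ?_)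
    exact huv ((cls_eq C hzx).symm.trans (cls_eq C hzy))
  · refine eq_univ_iff_forall.mpr (fun x => ?_)
    exact ⟨cls C x, mem_range_self x, mem_cls_self C x⟩
  · intro J hJ hne' huniv
    exact small_master C hC U hU hsym hlim hJ hne' huniv
  · intro Φ hΦ
    refine ⟨fun p => gm C Φ p, fun p => subset_gm C hΦ p, fun J hJ => ?_⟩
    exact pull C hC U hU ⟨Φ, hΦ⟩ hJ

theorem maximal (hsym : SymmFn lam) (hlim : LimitClosedFn lam) (Φ : PFlower E lam k) :
    ∃ Ψ : PFlower E lam k, PFlower.le Φ Ψ ∧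
      ∀ Ψ' : PFlower E lam k, PFlower.le Ψ Ψ' → PFlower.le Ψ' Ψ := by
  have zorn := exists_maximal_of_chains_bounded
    (r := fun a b : {Ψ' : PFlower E lam k // Φ.le Ψ'} => a.val.le b.val)
    (fun c hc => ?_) (fun {a b d} h1 h2 => le_trans h1 h2)
  · obtain ⟨m, hm⟩ := zorn
    refine ⟨m.val, m.2, fun Ψ' hΨΨ' => ?_⟩
    exact hm ⟨Ψ', le_trans m.2 hΨΨ'⟩ hΨΨ'
  · rcases c.eq_empty_or_nonempty with rfl | ⟨a, ha⟩
    · exact ⟨⟨Φ, le_refl Φ⟩, fun x hx => absurd hx (notMem_empty x)⟩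
    · have hD : IsChain PFlower.le (Subtype.val '' c) := by
        rintro x ⟨x', hx', rfl⟩ y ⟨y', hy', rfl⟩ hxy
        exact hc hx' hy' (fun h => hxy (congrArg Subtype.val h))
      obtain ⟨Ψub, hΨub⟩ := upperBound hsym hlim _ hD (⟨a.val, a, ha, rfl⟩)
      have hΦub : Φ.le Ψub := le_trans a.2 (hΨub a.val ⟨a, ha, rfl⟩)
      exact ⟨⟨Ψub, hΦub⟩, fun x hx => hΨub x.val ⟨x, hx, rfl⟩⟩

end Flow

/-- Every nonempty `≤`-chain of `k`-pseudoflowers has an upper bound; consequently, every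
`k`-pseudoflower extends to a `≤`-maximal `k`-pseudoflower. -/
theorem stmt11 {E : Type*} (lam : Set E → ℕ∞)
    (hsym : SymmFn lam) (hsub : SubmodularFn lam) (hlim : LimitClosedFn lam) (k : ℕ)
    (hk : 1 ≤ k) :
    (∀ C : Set (PFlower E lam k), IsChain PFlower.le C → C.Nonempty →
      ∃ Ψ : PFlower E lam k, ∀ Φ ∈ C, PFlower.le Φ Ψ) ∧
    (∀ Φ : PFlower E lam k, ∃ Ψ : PFlower E lam k, PFlower.le Φ Ψ ∧
      ∀ Ψ' : PFlower E lam k, PFlower.le Ψ Ψ' → PFlower.le Ψ' Ψ) :=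
  ⟨fun C hC hne => Flow.upperBound hsym hlim C hC hne,
   fun Φ => Flow.maximal hsym hlim Φ⟩
end

section
/- Let P be a k-profile of a limit-closed universe of bipartitions with order function λ, and let (Q_α)_{α<κ} be an increasing chain of sets in P whose union Q is not in P. Then for every set S of finite order there is a cofinal set F ⊆ κ such that λ((S ∩ Q) ∪ Q_α) ≤ k−1 and λ(((E\S) ∩ Q) ∪ Q_α) ≤ k−1 for all α ∈ F. -/
open Set

/-- A profile for the connectivity system `(E, lam)` of the sets satisfying the eligibility
predicate `ord`: a consistent (downward-closed) orientation of the eligible sets satisfying the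
profile property. -/
def IsProfileOn {E : Type*} (ord : Set E → Prop) (P : Set (Set E)) : Prop :=
  (∀ A ∈ P, ord A) ∧
  (∀ A : Set E, ord A → (A ∈ P ↔ Aᶜ ∉ P)) ∧
  (∀ A B : Set E, ord A → A ⊆ B → B ∈ P → A ∈ P) ∧
  (∀ A ∈ P, ∀ B ∈ P, (A ∪ B)ᶜ ∉ P)

/-! Every `Q α` lies in `P`, so has order at most `k - 1`. For `S` of finite order, submodularity
bounds `λ(S ∩ Q α)` by `λ(S) + k - 1`, so by pigeonhole it takes a constant value `m` on a cofinal
set of indices. Limit-closure along that set gives `λ(S ∩ Q) ≤ m`, and submodularity applied to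
`S ∩ Q` and `Q α` (whose intersection is `S ∩ Q α`, of order `m`) cancels `m`:
`λ((S ∩ Q) ∪ Q α) ≤ λ(Q α) ≤ k - 1`. Running this for `S` and then, inside the cofinal set found
for `S`, for `Sᶜ` (of finite order by symmetry) gives both bounds. -/

theorem IsCofinal.exists_isCofinal_fiber {ι β : Type*} [Preorder ι] [IsDirectedOrder ι]
    [Nonempty ι] {C : Set ι} (hC : IsCofinal C) {f : ι → β} {s : Set β} (hs : s.Finite)
    (hf : MapsTo f C s) : ∃ b, IsCofinal {a ∈ C | f a = b} := by
  classical
  by_contra! h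
  unfold IsCofinal at h
  push Not at h
  choose g hg using h
  obtain ⟨x, hx⟩ := (hs.toFinset.image g).exists_le
  obtain ⟨c, hcC, hxc⟩ := hC x
  have hgc : g (f c) ≤ x := hx _ (Finset.mem_image_of_mem g (hs.mem_toFinset.mpr (hf hcC)))
  exact hg (f c) c ⟨hcC, rfl⟩ (hgc.trans hxc)

theorem Monotone.biUnion_of_isCofinal {ι E : Type*} [Preorder ι] {R : ι → Set E}
    (hR : Monotone R) {F : Set ι} (hF : IsCofinal F) : ⋃ a ∈ F, R a = ⋃ a, R a := by
  refine (iUnion₂_subset_iUnion (· ∈ F) R).antisymm (iUnion_subset fun a => ?_)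
  obtain ⟨b, hbF, hab⟩ := hF a
  exact (hR hab).trans (subset_biUnion_of_mem (u := R) hbF)

section SetFunction

variable {E : Type*} {lam : Set E → ℕ∞}

theorem LimitClosedFn.iUnion_le_of_isCofinal {ι : Type*} [LinearOrder ι] [Nonempty ι]
    (hlim : LimitClosedFn lam) {R : ι → Set E} (hR : Monotone R) {F : Set ι} (hF : IsCofinal F)
    {m : ℕ} (h : ∀ a ∈ F, lam (R a) ≤ m) : lam (⋃ a, R a) ≤ m := by
  have hchain : IsChain (· ⊆ ·) (R '' F) := hR.isChain_range.mono (image_subset_range R F)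
  have := hlim m (R '' F) (hF.nonempty.image R) hchain (forall_mem_image.mpr h)
  rwa [sUnion_image, hR.biUnion_of_isCofinal hF] at this

theorem SubmodularFn.inter_le_add (hsub : SubmodularFn lam) (A B : Set E) :
    lam (A ∩ B) ≤ lam A + lam B :=
  le_add_self.trans (hsub A B)

theorem SubmodularFn.union_le_of_le_inter (hsub : SubmodularFn lam) {A B : Set E}
    (hA : lam A ≤ lam (A ∩ B)) (hfin : lam (A ∩ B) ≠ ⊤) : lam (A ∪ B) ≤ lam B := by
  have : lam (A ∪ B) + lam (A ∩ B) ≤ lam B + lam (A ∩ B) :=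
    (hsub A B).trans (by rw [add_comm]; gcongr)
  exact (WithTop.add_le_add_iff_right hfin).mp this

theorem exists_isCofinal_union_inter_iUnion_le {ι : Type*} [LinearOrder ι] [Nonempty ι]
    (hsub : SubmodularFn lam) (hlim : LimitClosedFn lam) {Q : ι → Set E} (hmono : Monotone Q)
    {n : ℕ} (hQ : ∀ α, lam (Q α) ≤ n) {C : Set ι} (hC : IsCofinal C) {S : Set E}
    (hS : lam S ≠ ⊤) :
    ∃ F ⊆ C, IsCofinal F ∧ ∀ α ∈ F, lam ((S ∩ ⋃ γ, Q γ) ∪ Q α) ≤ n := by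
  have hbound : ∀ α, lam (S ∩ Q α) ≤ ((lam S).toNat + n : ℕ) := fun α => by
    rw [Nat.cast_add, ENat.natCast_toNat hS]
    exact (hsub.inter_le_add S (Q α)).trans (add_le_add_right (hQ α) _)
  have hfin : ∀ α, lam (S ∩ Q α) ≠ ⊤ := fun α =>
    ne_top_of_le_ne_top (ENat.natCast_ne_top _) (hbound α)
  obtain ⟨m, hm⟩ := hC.exists_isCofinal_fiber (f := fun α => (lam (S ∩ Q α)).toNat)
    (finite_Iic ((lam S).toNat + n)) fun α _ => ENat.toNat_le_of_le_natCast (hbound α)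
  set F := {α ∈ C | (lam (S ∩ Q α)).toNat = m}
  have hval : ∀ α ∈ F, lam (S ∩ Q α) = m := fun α hα => by
    rw [← hα.2, ENat.natCast_toNat (hfin α)]
  have hlimit : lam (S ∩ ⋃ γ, Q γ) ≤ m := by
    rw [inter_iUnion]
    exact hlim.iUnion_le_of_isCofinal (fun _ _ h => inter_subset_inter_right S (hmono h)) hm
      fun α hα => (hval α hα).le
  refine ⟨F, sep_subset C _, hm, fun α hα => ?_⟩
  have hinter : (S ∩ ⋃ γ, Q γ) ∩ Q α = S ∩ Q α := by
    rw [inter_assoc, inter_eq_right.mpr (subset_iUnion Q α)]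
  refine (hsub.union_le_of_le_inter ?_ ?_).trans (hQ α) <;> rw [hinter]
  · exact hlimit.trans (hval α hα).ge
  · exact hfin α

end SetFunction

theorem stmt12_general {E : Type*} {ι : Type*} [LinearOrder ι] [Nonempty ι]
    (lam : Set E → ℕ∞)
    (hsym : SymmFn lam) (hsub : SubmodularFn lam) (hlim : LimitClosedFn lam)
    (k : ℕ)
    (P : Set (Set E)) (hP : IsProfileOn (fun A => lam A < (k : ℕ∞)) P)
    (Q : ι → Set E) (hmono : Monotone Q) (hmem : ∀ α, Q α ∈ P)
    (S : Set E) (hS : lam S < ⊤) :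
    ∃ F : Set ι, (∀ α, ∃ β ∈ F, α ≤ β) ∧
      ∀ α ∈ F, lam ((S ∩ ⋃ γ, Q γ) ∪ Q α) ≤ ((k - 1 : ℕ) : ℕ∞) ∧
        lam ((Sᶜ ∩ ⋃ γ, Q γ) ∪ Q α) ≤ ((k - 1 : ℕ) : ℕ∞) := by
  have hQ : ∀ α, lam (Q α) ≤ ((k - 1 : ℕ) : ℕ∞) := fun α => by
    rw [ENat.natCast_sub, Nat.cast_one]
    exact ENat.le_sub_one_of_lt (hP.1 _ (hmem α))
  obtain ⟨F, -, hF, hSF⟩ :=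
    exists_isCofinal_union_inter_iUnion_le hsub hlim hmono hQ IsCofinal.univ hS.ne
  obtain ⟨G, hGF, hG, hSG⟩ :=
    exists_isCofinal_union_inter_iUnion_le hsub hlim hmono hQ hF ((hsym S).trans_ne hS.ne)
  exact ⟨G, hG, fun α hα => ⟨hSF α (hGF hα), hSG α hα⟩⟩

/-- Given a `k`-profile `P` and an increasing chain `(Q α)` of members of `P` whose union is not
in `P`, for every set `S` of finite order there is a cofinal set of indices `α` with
`λ((S ∩ Q) ∪ Q α) ≤ k - 1` and `λ((Sᶜ ∩ Q) ∪ Q α) ≤ k - 1`, where `Q = ⋃ α, Q α`. -/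
theorem stmt12 {E : Type*} {ι : Type*} [LinearOrder ι] [WellFoundedLT ι] [Nonempty ι]
    (lam : Set E → ℕ∞)
    (hsym : SymmFn lam) (hsub : SubmodularFn lam) (hlim : LimitClosedFn lam)
    (k : ℕ) (hk : 1 ≤ k)
    (P : Set (Set E)) (hP : IsProfileOn (fun A => lam A < (k : ℕ∞)) P)
    (Q : ι → Set E) (hmono : Monotone Q) (hmem : ∀ α, Q α ∈ P)
    (hsup : (⋃ α, Q α) ∉ P)
    (S : Set E) (hS : lam S < ⊤) :
    ∃ F : Set ι, (∀ α, ∃ β ∈ F, α ≤ β) ∧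
      ∀ α ∈ F, lam ((S ∩ ⋃ γ, Q γ) ∪ Q α) ≤ ((k - 1 : ℕ) : ℕ∞) ∧
        lam ((Sᶜ ∩ ⋃ γ, Q γ) ∪ Q α) ≤ ((k - 1 : ℕ) : ℕ∞) :=
  stmt12_general lam hsym hsub hlim k P hP Q hmono hmem S hS
end
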